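/- arXiv:1912.05466 — 11 statements merged into one kernel-verified Lean document; each statement's English description precedes it below -/
import Mathlib

section
/- Let D, L1, L2 be metric spaces, M a normed linear space, and φ1 : D × L1 → M, φ2 : D × L2 → M maps such that (a) there exist C0 > 0 and α > 0 with ‖φi(ξ,x) − φi(ξ,y)‖ ≤ C0·(σi(x,y))^α for all ξ ∈ D, x,y ∈ Li, i = 1,2; and (b) there exist M0 > 0 and β > 0 such that the function Φ(ξ,x1,x2) := φ1(ξ,x1) − φ2(ξ,x2) satisfies ‖Φ(ξ',x1,x2) − Φ(ξ,x1,x2)‖ ≥ M0·(ρ(ξ',ξ))^β for all ξ,ξ' ∈ D, (x1,x2) ∈ L1 × L2. Then the set Δ := {ξ ∈ D : φ1(ξ,L1) ∩ φ2(ξ,L2) ≠ ∅} satisfies dimH Δ ≤ min{(β/α)·dimH(L1 × L2), dimH D}. -/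
open Set MeasureTheory

/-- General Position Theorem: dimension bound for the set of exceptional parameters. -/
theorem general_position_dimension
    {D L1 L2 M : Type*} [MetricSpace D] [MetricSpace L1] [MetricSpace L2]
    [NormedAddCommGroup M] [NormedSpace ℝ M]
    (φ1 : D → L1 → M) (φ2 : D → L2 → M)
    (C0 α M0 β : ℝ) (hC0 : 0 < C0) (hα : 0 < α) (hM0 : 0 < M0) (hβ : 0 < β)
    (ha1 : ∀ (ξ : D) (x y : L1), ‖φ1 ξ x - φ1 ξ y‖ ≤ C0 * (dist x y) ^ α)
    (ha2 : ∀ (ξ : D) (x y : L2), ‖φ2 ξ x - φ2 ξ y‖ ≤ C0 * (dist x y) ^ α)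
    (hb : ∀ (ξ ξ' : D) (x1 : L1) (x2 : L2),
      ‖(φ1 ξ' x1 - φ2 ξ' x2) - (φ1 ξ x1 - φ2 ξ x2)‖ ≥ M0 * (dist ξ' ξ) ^ β) :
    dimH {ξ : D | ∃ x1 x2, φ1 ξ x1 = φ2 ξ x2} ≤
      min (ENNReal.ofReal (β / α) * dimH (univ : Set (L1 × L2)))
        (dimH (univ : Set D)) := by
  classical
  set Δ : Set D := {ξ : D | ∃ x1 x2, φ1 ξ x1 = φ2 ξ x2} with hΔ
  rcases Δ.eq_empty_or_nonempty with h | ⟨ξ0, hξ0⟩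
  · rw [h, dimH_empty]; exact zero_le
  -- uniqueness of the parameter for a given pair of points
  have huniq : ∀ (ξ ξ' : D) (x1 : L1) (x2 : L2),
      φ1 ξ x1 = φ2 ξ x2 → φ1 ξ' x1 = φ2 ξ' x2 → ξ' = ξ := by
    intro ξ ξ' x1 x2 h1 h2
    have := hb ξ ξ' x1 x2
    rw [sub_eq_zero.2 h2, sub_eq_zero.2 h1, sub_zero, norm_zero] at this
    have hd : dist ξ' ξ = 0 := by
      by_contra hne
      have hpos : 0 < dist ξ' ξ := lt_of_le_of_ne dist_nonneg (Ne.symm hne)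
      have : 0 < M0 * dist ξ' ξ ^ β := mul_pos hM0 (Real.rpow_pos_of_pos hpos β)
      linarith
    exact eq_of_dist_eq_zero hd
  -- the set of pairs hit by some parameter
  set S : Set (L1 × L2) := {p : L1 × L2 | ∃ ξ : D, φ1 ξ p.1 = φ2 ξ p.2} with hS
  set g : L1 × L2 → D := fun p =>
    if h : ∃ ξ : D, φ1 ξ p.1 = φ2 ξ p.2 then h.choose else ξ0 with hg
  have hgspec : ∀ p ∈ S, φ1 (g p) p.1 = φ2 (g p) p.2 := by
    intro p hp
    have hp' : ∃ ξ : D, φ1 ξ p.1 = φ2 ξ p.2 := hp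
    simp only [hg, dif_pos hp']
    exact hp'.choose_spec
  -- the inverse-Hölder estimate yields a Hölder bound for g on S
  set K : ℝ := (2 * C0 / M0) ^ (1 / β) with hK
  have hKnn : 0 ≤ K := Real.rpow_nonneg (by positivity) _
  have hdist : ∀ p ∈ S, ∀ q ∈ S, dist (g p) (g q) ≤ K * dist p q ^ (α / β) := by
    intro p hp q hq
    have h1 := hgspec p hp
    have h2 := hgspec q hq
    -- ‖(φ1 (g p) p.1 - φ2 (g p) p.2) - (φ1 (g q) p.1 - φ2 (g q) p.2)‖
    have hzero : φ1 (g p) p.1 - φ2 (g p) p.2 = 0 := sub_eq_zero.2 h1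
    have key : M0 * dist (g p) (g q) ^ β ≤ ‖φ1 (g q) p.1 - φ2 (g q) p.2‖ := by
      calc M0 * dist (g p) (g q) ^ β
          ≤ ‖(φ1 (g p) p.1 - φ2 (g p) p.2) - (φ1 (g q) p.1 - φ2 (g q) p.2)‖ :=
            hb (g q) (g p) p.1 p.2
        _ = ‖φ1 (g q) p.1 - φ2 (g q) p.2‖ := by rw [hzero, zero_sub, norm_neg]
    have hrw : φ1 (g q) p.1 - φ2 (g q) p.2
        = (φ1 (g q) p.1 - φ1 (g q) q.1) - (φ2 (g q) p.2 - φ2 (g q) q.2) := by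
      rw [h2]; abel
    have hnorm : ‖φ1 (g q) p.1 - φ2 (g q) p.2‖ ≤ 2 * C0 * dist p q ^ α := by
      rw [hrw]
      have hle1 : dist p.1 q.1 ≤ dist p q := by
        rw [Prod.dist_eq]; exact le_max_left _ _
      have hle2 : dist p.2 q.2 ≤ dist p q := by
        rw [Prod.dist_eq]; exact le_max_right _ _
      have e1 : ‖φ1 (g q) p.1 - φ1 (g q) q.1‖ ≤ C0 * dist p q ^ α :=
        (ha1 (g q) p.1 q.1).trans (mul_le_mul_of_nonneg_left
          (Real.rpow_le_rpow dist_nonneg hle1 hα.le) hC0.le)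
      have e2 : ‖φ2 (g q) p.2 - φ2 (g q) q.2‖ ≤ C0 * dist p q ^ α :=
        (ha2 (g q) p.2 q.2).trans (mul_le_mul_of_nonneg_left
          (Real.rpow_le_rpow dist_nonneg hle2 hα.le) hC0.le)
      calc ‖(φ1 (g q) p.1 - φ1 (g q) q.1) - (φ2 (g q) p.2 - φ2 (g q) q.2)‖
          ≤ ‖φ1 (g q) p.1 - φ1 (g q) q.1‖ + ‖φ2 (g q) p.2 - φ2 (g q) q.2‖ := norm_sub_le _ _
        _ ≤ C0 * dist p q ^ α + C0 * dist p q ^ α := add_le_add e1 e2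
        _ = 2 * C0 * dist p q ^ α := by ring
    have hstep : dist (g p) (g q) ^ β ≤ (2 * C0 / M0) * dist p q ^ α := by
      rw [div_mul_eq_mul_div, le_div_iff₀ hM0, mul_comm _ M0]
      exact key.trans hnorm
    have hdpq : (0:ℝ) ≤ dist p q := dist_nonneg
    calc dist (g p) (g q)
        = (dist (g p) (g q) ^ β) ^ (1 / β) := by
          rw [← Real.rpow_mul dist_nonneg, mul_one_div_cancel hβ.ne', Real.rpow_one]
      _ ≤ ((2 * C0 / M0) * dist p q ^ α) ^ (1 / β) := by
          apply Real.rpow_le_rpow (Real.rpow_nonneg dist_nonneg β) hstep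
          positivity
      _ = K * dist p q ^ (α / β) := by
          rw [Real.mul_rpow (by positivity) (Real.rpow_nonneg hdpq α),
            ← Real.rpow_mul hdpq, hK]
          ring_nf
  -- Hölder continuity of g on S
  set r : NNReal := (α / β).toNNReal with hr
  have hrcoe : (r : ℝ) = α / β := Real.coe_toNNReal _ (by positivity)
  have hrpos : 0 < r := by
    rw [← NNReal.coe_pos, hrcoe]; positivity
  have hHolder : HolderOnWith K.toNNReal r g S := by
    intro p hp q hq
    rw [edist_dist, edist_dist, ← ENNReal.ofReal_coe_nnreal, hrcoe,
      ENNReal.ofReal_rpow_of_nonneg dist_nonneg (by positivity),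
      ← ENNReal.ofReal_mul (by simp [hKnn]), Real.coe_toNNReal _ hKnn]
    exact ENNReal.ofReal_le_ofReal (hdist p hp q hq)
  -- Δ is contained in the image of S under g
  have hsub : Δ ⊆ g '' S := by
    rintro ξ ⟨x1, x2, hx⟩
    have hpS : (x1, x2) ∈ S := ⟨ξ, hx⟩
    refine ⟨(x1, x2), hpS, ?_⟩
    exact huniq ξ (g (x1, x2)) x1 x2 hx (hgspec _ hpS)
  have h1 : dimH Δ ≤ dimH S / r := (dimH_mono hsub).trans (hHolder.dimH_image_le hrpos)
  have h2 : dimH S / r ≤ dimH (univ : Set (L1 × L2)) / r := by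
    gcongr
    exact subset_univ _
  have h3 : dimH (univ : Set (L1 × L2)) / r
      = ENNReal.ofReal (β / α) * dimH (univ : Set (L1 × L2)) := by
    rw [div_eq_mul_inv, mul_comm]
    congr 1
    rw [← ENNReal.ofReal_coe_nnreal, hrcoe, ← ENNReal.ofReal_inv_of_pos (by positivity)]
    congr 1
    field_simp
  refine le_min ?_ (dimH_mono (subset_univ _))
  calc dimH Δ ≤ dimH (univ : Set (L1 × L2)) / r := h1.trans h2
    _ = _ := h3
end

section
/- Let A, B, D ⊆ ℝⁿ and let φ : D × B → ℝⁿ satisfy: (a) there is C0 > 0 such that ‖φ(t,x) − φ(t,y)‖ ≤ C0‖x − y‖ for all x,y ∈ B, t ∈ D; (b) there is M0 > 0 such that ‖φ(t',x) − φ(t,x)‖ ≥ M0‖t' − t‖ for all x ∈ B, t,t' ∈ D. Then the set Δ := {t ∈ D : φ(t,B) ∩ A ≠ ∅} satisfies dimH Δ ≤ min{dimH(A × B), dimH D}. -/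
open Set MeasureTheory

/-- Simplified General Position Theorem in `ℝⁿ`. -/
theorem general_position_simplified {n : ℕ}
    (A B D : Set (EuclideanSpace ℝ (Fin n)))
    (φ : EuclideanSpace ℝ (Fin n) → EuclideanSpace ℝ (Fin n) → EuclideanSpace ℝ (Fin n))
    (C0 M0 : ℝ) (hC0 : 0 < C0) (hM0 : 0 < M0)
    (ha : ∀ t ∈ D, ∀ x ∈ B, ∀ y ∈ B, ‖φ t x - φ t y‖ ≤ C0 * ‖x - y‖)
    (hb : ∀ x ∈ B, ∀ t ∈ D, ∀ t' ∈ D, ‖φ t' x - φ t x‖ ≥ M0 * ‖t' - t‖) :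
    dimH {t ∈ D | (φ t '' B ∩ A).Nonempty} ≤ min (dimH (A ×ˢ B)) (dimH D) := by
  classical
  refine le_min ?_ (dimH_mono (sep_subset _ _))
  let E := EuclideanSpace ℝ (Fin n)
  set S : Set (E × E) := {p | p.1 ∈ A ∧ p.2 ∈ B ∧ ∃ t ∈ D, φ t p.2 = p.1} with hS
  set g : E × E → E := fun p => if h : ∃ t ∈ D, φ t p.2 = p.1 then h.choose else 0 with hg
  have hKpos : (0:ℝ) ≤ (C0 + 1) / M0 := by positivity
  have key : ∀ p ∈ S, ∀ t ∈ D, φ t p.2 = p.1 → g p = t := by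
    intro p hp t ht hφ
    have hex : ∃ t ∈ D, φ t p.2 = p.1 := ⟨t, ht, hφ⟩
    have hsp := hex.choose_spec
    have h0 : M0 * ‖hex.choose - t‖ ≤ ‖φ hex.choose p.2 - φ t p.2‖ :=
      hb p.2 hp.2.1 t ht hex.choose hsp.1
    rw [hsp.2, hφ, sub_self, norm_zero] at h0
    have hle : ‖hex.choose - t‖ ≤ 0 := by nlinarith [norm_nonneg (hex.choose - t)]
    have hnz : ‖hex.choose - t‖ = 0 := le_antisymm hle (norm_nonneg _)
    have heq : hex.choose = t := sub_eq_zero.mp (norm_eq_zero.mp hnz)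
    simp only [hg]
    rw [dif_pos hex, heq]
  have hlip : LipschitzOnWith ⟨(C0 + 1) / M0, hKpos⟩ g S := by
    apply LipschitzOnWith.of_dist_le_mul
    intro p hp q hq
    obtain ⟨hpA, hpB, tp, htp, hφp⟩ := hp
    obtain ⟨hqA, hqB, tq, htq, hφq⟩ := hq
    rw [key p ⟨hpA, hpB, tp, htp, hφp⟩ tp htp hφp,
        key q ⟨hqA, hqB, tq, htq, hφq⟩ tq htq hφq]
    rw [dist_eq_norm, Prod.dist_eq]
    have h1 : M0 * ‖tp - tq‖ ≤ ‖φ tp p.2 - φ tq p.2‖ := hb p.2 hpB tq htq tp htp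
    have h2 : ‖φ tp p.2 - φ tq p.2‖ ≤ ‖φ tq p.2 - φ tq q.2‖ + ‖φ tq q.2 - φ tp p.2‖ := by
      calc ‖φ tp p.2 - φ tq p.2‖ = ‖-((φ tq p.2 - φ tq q.2) + (φ tq q.2 - φ tp p.2))‖ := by
            congr 1; abel
        _ = ‖(φ tq p.2 - φ tq q.2) + (φ tq q.2 - φ tp p.2)‖ := norm_neg _
        _ ≤ _ := norm_add_le _ _
    have h3 : ‖φ tq p.2 - φ tq q.2‖ ≤ C0 * ‖p.2 - q.2‖ := ha tq htq p.2 hpB q.2 hqB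
    have h4 : ‖φ tq q.2 - φ tp p.2‖ = ‖q.1 - p.1‖ := by rw [hφq, hφp]
    have hd1 : ‖p.2 - q.2‖ ≤ max (dist p.1 q.1) (dist p.2 q.2) := by
      rw [← dist_eq_norm]; exact le_max_right _ _
    have hd2 : ‖q.1 - p.1‖ ≤ max (dist p.1 q.1) (dist p.2 q.2) := by
      rw [← dist_eq_norm, dist_comm]; exact le_max_left _ _
    have hkey : M0 * ‖tp - tq‖ ≤ (C0 + 1) * max (dist p.1 q.1) (dist p.2 q.2) := by
      have := mul_le_mul_of_nonneg_left hd1 hC0.le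
      nlinarith
    show ‖tp - tq‖ ≤ (C0 + 1) / M0 * (dist p.1 q.1 ⊔ dist p.2 q.2)
    rw [div_mul_eq_mul_div, le_div_iff₀ hM0]
    nlinarith
  have hsub : {t ∈ D | (φ t '' B ∩ A).Nonempty} ⊆ g '' S := by
    rintro t ⟨htD, y, ⟨x, hxB, hxy⟩, hyA⟩
    exact ⟨(y, x), ⟨hyA, hxB, t, htD, hxy⟩, key (y, x) ⟨hyA, hxB, t, htD, hxy⟩ t htD hxy⟩
  calc dimH {t ∈ D | (φ t '' B ∩ A).Nonempty} ≤ dimH (g '' S) := dimH_mono hsub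
    _ ≤ dimH S := hlip.dimH_image_le
    _ ≤ dimH (A ×ˢ B) := dimH_mono fun p hp => ⟨hp.1, hp.2.1⟩
end

section
/- Let A, B ⊆ ℂ be sets with 0 ∉ closure(A) and dimH(A × B) < 2. Then for Lebesgue-almost every z ∈ ℂ, the sets B and zA = {za : a ∈ A} are disjoint. -/
open Set MeasureTheory

/-- If `0 ∉ closure A` and `dimH (A × B) < 2`, then for Lebesgue-almost every
`z ∈ ℂ` the sets `B` and `zA` are disjoint. -/
theorem disjoint_rotation_ae (A B : Set ℂ) (hA : (0 : ℂ) ∉ closure A)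
    (hdim : dimH (A ×ˢ B) < 2) :
    ∀ᵐ z : ℂ, Disjoint B ((fun a => z * a) '' A) := by
  have hA0 : ∀ a ∈ A, a ≠ 0 := fun a ha h => hA (h ▸ subset_closure ha)
  set f : ℂ × ℂ → ℂ := fun p => p.2 / p.1 with hf
  have hsub : {z : ℂ | ¬ Disjoint B ((fun a => z * a) '' A)} ⊆ f '' (A ×ˢ B) := by
    intro z hz
    rw [Set.mem_setOf_eq, Set.not_disjoint_iff] at hz
    obtain ⟨b, hbB, a, haA, hab⟩ := hz
    refine ⟨(a, b), ⟨haA, hbB⟩, ?_⟩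
    have ha : a ≠ 0 := hA0 a haA
    simp only [hf, ← hab]
    field_simp
  have hdim' : dimH (f '' (A ×ˢ B)) < 2 := by
    refine lt_of_le_of_lt ?_ hdim
    apply dimH_image_le_of_locally_lipschitzOn
    rintro ⟨a, b⟩ hx
    have ha : a ≠ 0 := hA0 a hx.1
    have hcd : ContDiffAt ℝ 1 f (a, b) := by
      have h1 : ContDiffAt ℂ 1 (Prod.snd : ℂ × ℂ → ℂ) (a, b) := contDiffAt_snd (𝕜 := ℂ)
      have h2 : ContDiffAt ℂ 1 (Prod.fst : ℂ × ℂ → ℂ) (a, b) := contDiffAt_fst (𝕜 := ℂ)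
      exact (ContDiffAt.div h1 h2 ha).restrict_scalars ℝ
    obtain ⟨K, t, ht, hlip⟩ := hcd.exists_lipschitzOnWith
    exact ⟨K, t, nhdsWithin_le_nhds ht, hlip⟩
  have hHaar : Measure.IsAddHaarMeasure (μH[((2 : NNReal) : ℝ)] : Measure ℂ) := by
    have h2 : ((2 : NNReal) : ℝ) = (Module.finrank ℝ ℂ : ℝ) := by
      simp [Complex.finrank_real_complex]
    rw [h2]
    infer_instance
  have hac : (volume : Measure ℂ) ≪ μH[((2 : NNReal) : ℝ)] :=
    Measure.absolutelyContinuous_isAddHaarMeasure _ _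
  have hzero : volume (f '' (A ×ˢ B)) = 0 :=
    measure_zero_of_dimH_lt hac (by exact_mod_cast hdim')
  have : volume {z : ℂ | ¬ Disjoint B ((fun a => z * a) '' A)} = 0 :=
    measure_mono_null hsub hzero
  exact this
end

section
/- Let A, B ⊆ ℝⁿ, let M2 > M1 > 0, and let f : B × ℝⁿ → ℝⁿ be M1-Lipschitz (jointly in both variables). If dimH(A × B) < n, then the set Δ = {t ∈ ℝⁿ : (M2·t + f(B,t)) ∩ A ≠ ∅} has Lebesgue measure zero in ℝⁿ, where M2·t + f(B,t) = {M2·t + f(x,t) : x ∈ B}. -/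
open Set MeasureTheory

/-- If `A` moves faster (speed `M2`) than the set `B` is deformed (by an
`M1`-Lipschitz `f`, `M1 < M2`), and `dimH (A × B) < n`, then for almost every
translation `t` the set `M2·t + f(B,t)` misses `A`. -/
theorem escape_intersection_ae {n : ℕ}
    (A B : Set (EuclideanSpace ℝ (Fin n))) (M1 M2 : ℝ) (hM1 : 0 < M1) (hM : M1 < M2)
    (f : EuclideanSpace ℝ (Fin n) → EuclideanSpace ℝ (Fin n) → EuclideanSpace ℝ (Fin n))
    (hf : ∀ x ∈ B, ∀ y ∈ B, ∀ s t : EuclideanSpace ℝ (Fin n),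
      ‖f x s - f y t‖ ≤ M1 * max ‖x - y‖ ‖s - t‖)
    (hdim : dimH (A ×ˢ B) < n) :
    volume {t : EuclideanSpace ℝ (Fin n) | ∃ x ∈ B, M2 • t + f x t ∈ A} = 0 := by
  classical
  have hM2 : (0:ℝ) < M2 := hM1.trans hM
  have hMM : (0:ℝ) < M2 - M1 := by linarith
  set c : ℝ := (1 + M1) / (M2 - M1) with hc
  have hc0 : 0 ≤ c := div_nonneg (by linarith) hMM.le
  -- key estimate
  have key : ∀ x ∈ B, ∀ y ∈ B, ∀ s t : EuclideanSpace ℝ (Fin n),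
      ‖t - s‖ ≤ c * max ‖(M2 • t + f x t) - (M2 • s + f y s)‖ ‖x - y‖ := by
    intro x hx y hy s t
    set a := M2 • t + f x t with ha
    set b := M2 • s + f y s with hb
    have hmx0 : (0:ℝ) ≤ max ‖a - b‖ ‖x - y‖ :=
      le_trans (norm_nonneg _) (le_max_left _ _)
    have hts : M2 * ‖t - s‖ ≤ ‖a - b‖ + M1 * max ‖x - y‖ ‖t - s‖ := by
      have h1 : M2 • (t - s) = (a - b) + (f y s - f x t) := by
        simp only [ha, hb, smul_sub]; abel
      have h2 : ‖f y s - f x t‖ ≤ M1 * max ‖y - x‖ ‖s - t‖ := hf y hy x hx s t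
      calc M2 * ‖t - s‖ = ‖M2 • (t - s)‖ := by
            rw [norm_smul, Real.norm_eq_abs, abs_of_pos hM2]
        _ = ‖(a - b) + (f y s - f x t)‖ := by rw [h1]
        _ ≤ ‖a - b‖ + ‖f y s - f x t‖ := norm_add_le _ _
        _ ≤ ‖a - b‖ + M1 * max ‖y - x‖ ‖s - t‖ := by linarith
        _ = ‖a - b‖ + M1 * max ‖x - y‖ ‖t - s‖ := by rw [norm_sub_rev y x, norm_sub_rev s t]
    rcases le_total ‖x - y‖ ‖t - s‖ with h | h
    · rw [max_eq_right h] at hts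
      have h2 : (M2 - M1) * ‖t - s‖ ≤ ‖a - b‖ := by linarith
      have h3 : ‖a - b‖ ≤ max ‖a - b‖ ‖x - y‖ := le_max_left _ _
      rw [hc, div_mul_eq_mul_div, le_div_iff₀ hMM]
      nlinarith
    · rw [max_eq_left h] at hts
      have h3 : ‖a - b‖ ≤ max ‖a - b‖ ‖x - y‖ := le_max_left _ _
      have h4 : ‖x - y‖ ≤ max ‖a - b‖ ‖x - y‖ := le_max_right _ _
      rw [hc, div_mul_eq_mul_div, le_div_iff₀ hMM]
      nlinarith [mul_nonneg hM1.le (norm_nonneg (t - s)),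
        mul_le_mul_of_nonneg_left h4 hM1.le]
  -- uniqueness
  have uniq : ∀ x ∈ B, ∀ s t : EuclideanSpace ℝ (Fin n),
      M2 • t + f x t = M2 • s + f x s → t = s := by
    intro x hx s t h
    have h1 := key x hx x hx s t
    rw [h] at h1
    simp only [sub_self, norm_zero, max_self, mul_zero] at h1
    rw [← sub_eq_zero]
    exact norm_eq_zero.mp (le_antisymm h1 (norm_nonneg _))
  -- partial inverse
  set g : EuclideanSpace ℝ (Fin n) × EuclideanSpace ℝ (Fin n) → EuclideanSpace ℝ (Fin n) :=
    fun p => if h : ∃ t, M2 • t + f p.2 t = p.1 then h.choose else 0 with hg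
  set S : Set (EuclideanSpace ℝ (Fin n) × EuclideanSpace ℝ (Fin n)) :=
    {p | p.1 ∈ A ∧ p.2 ∈ B ∧ ∃ t, M2 • t + f p.2 t = p.1} with hS
  have hgspec : ∀ (p : EuclideanSpace ℝ (Fin n) × EuclideanSpace ℝ (Fin n)),
      (∃ t, M2 • t + f p.2 t = p.1) → M2 • g p + f p.2 (g p) = p.1 := by
    intro p h
    simp only [hg, dif_pos h]
    exact h.choose_spec
  have hΔsub : {t : EuclideanSpace ℝ (Fin n) | ∃ x ∈ B, M2 • t + f x t ∈ A} ⊆ g '' S := by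
    rintro t ⟨x, hx, haA⟩
    refine ⟨(M2 • t + f x t, x), ⟨haA, hx, ⟨t, rfl⟩⟩, ?_⟩
    exact uniq x hx t _ ((hgspec (M2 • t + f x t, x) ⟨t, rfl⟩).trans rfl)
  have hlip : LipschitzOnWith c.toNNReal g S := by
    apply LipschitzOnWith.of_dist_le' (K := c)
    rintro p ⟨hpA, hpB, hpE⟩ q ⟨hqA, hqB, hqE⟩
    have h1 := hgspec p hpE
    have h2 := hgspec q hqE
    have h3 := key p.2 hpB q.2 hqB (g q) (g p)
    rw [h1, h2] at h3
    calc dist (g p) (g q) = ‖g p - g q‖ := by rw [dist_eq_norm]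
      _ ≤ c * max ‖p.1 - q.1‖ ‖p.2 - q.2‖ := h3
      _ = c * dist p q := by
          rw [Prod.dist_eq, dist_eq_norm, dist_eq_norm]
  have hd : dimH {t : EuclideanSpace ℝ (Fin n) | ∃ x ∈ B, M2 • t + f x t ∈ A}
      ≤ dimH (A ×ˢ B) :=
    le_trans (dimH_mono hΔsub)
      (le_trans hlip.dimH_image_le (dimH_mono (fun p hp => ⟨hp.1, hp.2.1⟩)))
  have hdn : dimH {t : EuclideanSpace ℝ (Fin n) | ∃ x ∈ B, M2 • t + f x t ∈ A} < (n : NNReal) :=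
    lt_of_le_of_lt hd (by simpa using hdim)
  have habs : (volume : Measure (EuclideanSpace ℝ (Fin n))) ≪ μH[((n : NNReal) : ℝ)] := by
    have hn : ((n : NNReal) : ℝ) = (Module.finrank ℝ (EuclideanSpace ℝ (Fin n)) : ℝ) := by
      simp [finrank_euclideanSpace]
    rw [hn]
    exact MeasureTheory.Measure.absolutelyContinuous_isAddHaarMeasure _ _
  exact measure_zero_of_dimH_lt habs hdn
end

section
/- Let A, B ⊆ ℝⁿ, let F : ℝⁿ → ℝⁿ be bi-Lipschitz, and define f(x,t) = F(x + t). If dimH(A × B) < n, then the set Δ = {t ∈ ℝⁿ : f(B,t) ∩ A ≠ ∅} has Lebesgue measure zero in ℝⁿ, where f(B,t) = {F(x+t) : x ∈ B}. -/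
open Set MeasureTheory NNReal

/-- Bi-Lipschitz distortion of translations: if `F` is bi-Lipschitz and
`dimH (A × B) < n`, then for almost all `t` the set `F(B + t)` misses `A`. -/
theorem biLipschitz_translation_ae {n : ℕ}
    (A B : Set (EuclideanSpace ℝ (Fin n)))
    (F : EuclideanSpace ℝ (Fin n) → EuclideanSpace ℝ (Fin n))
    (c C : ℝ) (hc : 0 < c) (hcC : c ≤ C)
    (hF : ∀ x y, c * ‖x - y‖ ≤ ‖F x - F y‖ ∧ ‖F x - F y‖ ≤ C * ‖x - y‖)
    (hdim : dimH (A ×ˢ B) < n) :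
    volume {t : EuclideanSpace ℝ (Fin n) | ∃ x ∈ B, F (x + t) ∈ A} = 0 := by
  set c' : ℝ≥0 := ⟨c, hc.le⟩ with hc'
  -- F is antilipschitz
  have hFanti : AntilipschitzWith c'⁻¹ F := by
    apply AntilipschitzWith.of_le_mul_dist
    intro x y
    have h := (hF x y).1
    rw [dist_eq_norm, dist_eq_norm, NNReal.coe_inv]
    show ‖x - y‖ ≤ c⁻¹ * ‖F x - F y‖
    calc ‖x - y‖ = c⁻¹ * (c * ‖x - y‖) := by field_simp
    _ ≤ c⁻¹ * ‖F x - F y‖ := by gcongr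
  -- the map G = (F, id) on the product is antilipschitz
  set K : ℝ≥0 := max c'⁻¹ 1 with hK
  have hGanti : AntilipschitzWith K
      (fun p : EuclideanSpace ℝ (Fin n) × EuclideanSpace ℝ (Fin n) => (F p.1, p.2)) := by
    intro p q
    simp only [Prod.edist_eq]
    apply max_le
    · calc edist p.1 q.1 ≤ c'⁻¹ * edist (F p.1) (F q.1) := hFanti p.1 q.1
      _ ≤ K * max (edist (F p.1) (F q.1)) (edist p.2 q.2) := by
          gcongr
          · exact_mod_cast le_max_left _ _
          · exact le_max_left _ _
    · calc edist p.2 q.2 ≤ 1 * edist p.2 q.2 := by rw [one_mul]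
      _ ≤ K * max (edist (F p.1) (F q.1)) (edist p.2 q.2) := by
          gcongr
          · exact_mod_cast le_max_right _ _
          · exact le_max_right _ _
  -- dimH ((F ⁻¹' A) ×ˢ B) ≤ dimH (A ×ˢ B)
  have hdim' : dimH ((F ⁻¹' A) ×ˢ B) < n := by
    refine lt_of_le_of_lt ?_ hdim
    calc dimH ((F ⁻¹' A) ×ˢ B)
        ≤ dimH ((fun p : EuclideanSpace ℝ (Fin n) × EuclideanSpace ℝ (Fin n) =>
            (F p.1, p.2)) '' ((F ⁻¹' A) ×ˢ B)) := hGanti.le_dimH_image _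
      _ ≤ dimH (A ×ˢ B) := by
          apply dimH_mono
          rintro ⟨a, b⟩ ⟨⟨a', b'⟩, ⟨ha, hb⟩, h⟩
          cases h
          exact ⟨ha, hb⟩
  -- the target set is contained in the Lipschitz image of (F⁻¹A) ×ˢ B under subtraction
  have hsub : {t : EuclideanSpace ℝ (Fin n) | ∃ x ∈ B, F (x + t) ∈ A} ⊆
      (fun p : EuclideanSpace ℝ (Fin n) × EuclideanSpace ℝ (Fin n) => p.1 - p.2) ''
        ((F ⁻¹' A) ×ˢ B) := by
    rintro t ⟨x, hxB, hxt⟩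
    exact ⟨(x + t, x), ⟨hxt, hxB⟩, by simp⟩
  have hLip : LipschitzWith 2
      (fun p : EuclideanSpace ℝ (Fin n) × EuclideanSpace ℝ (Fin n) => p.1 - p.2) := by
    have := LipschitzWith.sub
      (LipschitzWith.prod_fst (α := EuclideanSpace ℝ (Fin n)) (β := EuclideanSpace ℝ (Fin n)))
      (LipschitzWith.prod_snd (α := EuclideanSpace ℝ (Fin n)) (β := EuclideanSpace ℝ (Fin n)))
    norm_num at this
    exact this
  have hdimΔ : dimH {t : EuclideanSpace ℝ (Fin n) | ∃ x ∈ B, F (x + t) ∈ A} < n :=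
    lt_of_le_of_lt (dimH_mono hsub) (lt_of_le_of_lt (hLip.dimH_image_le _) hdim')
  -- conclude: sets of Hausdorff dimension < n have zero volume
  have hfr : ((Module.finrank ℝ (EuclideanSpace ℝ (Fin n)) : ℝ)) = (((n : ℝ≥0)) : ℝ) := by
    simp [finrank_euclideanSpace]
  have hac : (volume : Measure (EuclideanSpace ℝ (Fin n))) ≪ μH[(((n : ℝ≥0)) : ℝ)] := by
    rw [← hfr]
    exact Measure.absolutelyContinuous_isAddHaarMeasure _ _
  refine measure_zero_of_dimH_lt (d := (n : ℝ≥0)) hac ?_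
  exact_mod_cast hdimΔ
end

section
/- Let {S_t : t ∈ D ⊆ ℝⁿ} be a parametrized family of contraction systems satisfying settings (S1)–(S4) with contraction bounds r1,…,rm, r̄ = max rk, and displacement constant C. Let j, k be incomparable multiindices in I*, and suppose there exist c_j > 0 and C_k > 0 such that for all x ∈ V and t,t' ∈ D: ‖S_{k,t'}(x) − S_{k,t}(x)‖ ≤ C_k‖t'−t‖ and ‖S_{j,t'}(x) − S_{j,t}(x)‖ ≥ c_j‖t'−t‖. If c_j − C_k − (r_j + r_k)C/(1 − r̄) > 0 and the similarity dimension s_r (the solution of r1^s + … + rm^s = 1) satisfies s_r < dimH(D)/2, then for almost all t ∈ D (i.e., outside a set of Hausdorff dimension ≤ 2 s_r < dimH D) the pieces K_{j,t} = S_{j,t}(K_t) and K_{k,t} = S_{k,t}(K_t) are disjoint. -/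
open Set MeasureTheory

/-- `applyWord S t j` is the composition `S_{j,t} = S_{j₁,t} ∘ … ∘ S_{jₙ,t}`. -/
def applyWord {n m : ℕ}
    (S : Fin m → EuclideanSpace ℝ (Fin n) →
      EuclideanSpace ℝ (Fin n) → EuclideanSpace ℝ (Fin n))
    (t : EuclideanSpace ℝ (Fin n)) :
    List (Fin m) → EuclideanSpace ℝ (Fin n) → EuclideanSpace ℝ (Fin n)
  | [] => id
  | i :: w => S i t ∘ applyWord S t w

namespace PDG

variable {n m : ℕ}
  {S : Fin m → EuclideanSpace ℝ (Fin n) →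
      EuclideanSpace ℝ (Fin n) → EuclideanSpace ℝ (Fin n)}
  {D V : Set (EuclideanSpace ℝ (Fin n))}
  {r : Fin m → ℝ} {rbar C : ℝ}

lemma applyWord_nil (t x) : applyWord S t [] x = x := rfl

lemma applyWord_cons (t i w x) : applyWord S t (i :: w) x = S i t (applyWord S t w x) := rfl

lemma applyWord_append (t : EuclideanSpace ℝ (Fin n)) (a b : List (Fin m)) (x) :
    applyWord S t (a ++ b) x = applyWord S t a (applyWord S t b x) := by
  induction a with
  | nil => rfl
  | cons i a ih => simp [applyWord_cons, ih]

lemma wordProd_pos (hr0 : ∀ i, 0 < r i) (w : List (Fin m)) : 0 < (w.map r).prod := by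
  apply List.prod_pos
  intro x hx
  obtain ⟨i, -, rfl⟩ := List.mem_map.1 hx
  exact hr0 i

lemma wordProd_le_one (hr0 : ∀ i, 0 < r i) (hrbar : ∀ i, r i ≤ rbar) (hrbar1 : rbar < 1)
    (w : List (Fin m)) : (w.map r).prod ≤ 1 := by
  induction w with
  | nil => simp
  | cons i w ih =>
    simp only [List.map_cons, List.prod_cons]
    calc r i * (w.map r).prod ≤ 1 * 1 := by
          apply mul_le_mul _ ih (wordProd_pos hr0 w).le zero_le_one
          exact (hrbar i).trans hrbar1.le
      _ = 1 := by ring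

lemma applyWord_mem_V (hInv : ∀ k, ∀ t ∈ D, S k t '' V ⊆ V)
    {t} (ht : t ∈ D) (w : List (Fin m)) {x} (hx : x ∈ V) : applyWord S t w x ∈ V := by
  induction w with
  | nil => exact hx
  | cons i w ih => exact hInv i t ht ⟨_, ih, rfl⟩

lemma applyWord_lip_x (hr0 : ∀ i, 0 < r i) (hInv : ∀ k, ∀ t ∈ D, S k t '' V ⊆ V)
    (hLip : ∀ k, ∀ t ∈ D, ∀ x ∈ V, ∀ y ∈ V, ‖S k t x - S k t y‖ ≤ r k * ‖x - y‖)
    {t} (ht : t ∈ D) (w : List (Fin m)) {x y} (hx : x ∈ V) (hy : y ∈ V) :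
    ‖applyWord S t w x - applyWord S t w y‖ ≤ (w.map r).prod * ‖x - y‖ := by
  induction w with
  | nil => simp [applyWord_nil]
  | cons i w ih =>
    simp only [applyWord_cons, List.map_cons, List.prod_cons]
    calc ‖S i t (applyWord S t w x) - S i t (applyWord S t w y)‖
        ≤ r i * ‖applyWord S t w x - applyWord S t w y‖ :=
          hLip i t ht _ (applyWord_mem_V hInv ht w hx) _ (applyWord_mem_V hInv ht w hy)
      _ ≤ r i * ((w.map r).prod * ‖x - y‖) := by
          exact mul_le_mul_of_nonneg_left ih (hr0 i).le
      _ = r i * (w.map r).prod * ‖x - y‖ := by ring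


lemma applyWord_lip_t (hrbar0 : 0 ≤ rbar) (hrbar1 : rbar < 1) (hC : 0 < C)
    (hInv : ∀ k, ∀ t ∈ D, S k t '' V ⊆ V)
    (hrbar : ∀ i, r i ≤ rbar)
    (hLip : ∀ k, ∀ t ∈ D, ∀ x ∈ V, ∀ y ∈ V, ‖S k t x - S k t y‖ ≤ r k * ‖x - y‖)
    (hS4 : ∀ k, ∀ x ∈ V, ∀ t ∈ D, ∀ t' ∈ D, ‖S k t' x - S k t x‖ ≤ C * ‖t' - t‖)
    {t t'} (ht : t ∈ D) (ht' : t' ∈ D) (w : List (Fin m)) {x} (hx : x ∈ V) :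
    ‖applyWord S t' w x - applyWord S t w x‖ ≤ (C / (1 - rbar)) * ‖t' - t‖ := by
  induction w with
  | nil =>
    have h1r : (0:ℝ) < 1 - rbar := by linarith
    simp [applyWord_nil]
    positivity
  | cons i w ih =>
    have hmemt : applyWord S t w x ∈ V := applyWord_mem_V hInv ht w hx
    have hmemt' : applyWord S t' w x ∈ V := applyWord_mem_V hInv ht' w hx
    have h1 : ‖S i t' (applyWord S t' w x) - S i t' (applyWord S t w x)‖
        ≤ r i * ‖applyWord S t' w x - applyWord S t w x‖ :=
      hLip i t' ht' _ hmemt' _ hmemt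
    have h2 : ‖S i t' (applyWord S t w x) - S i t (applyWord S t w x)‖ ≤ C * ‖t' - t‖ :=
      hS4 i _ hmemt t ht t' ht'
    have h3 : r i * ‖applyWord S t' w x - applyWord S t w x‖
        ≤ rbar * ((C / (1 - rbar)) * ‖t' - t‖) := by
      apply mul_le_mul (hrbar i) ih (norm_nonneg _) hrbar0
    have hkey : rbar * (C / (1 - rbar)) + C = C / (1 - rbar) := by
      have : (1 : ℝ) - rbar ≠ 0 := by linarith
      field_simp
      ring
    calc ‖applyWord S t' (i :: w) x - applyWord S t (i :: w) x‖
        ≤ ‖S i t' (applyWord S t' w x) - S i t' (applyWord S t w x)‖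
          + ‖S i t' (applyWord S t w x) - S i t (applyWord S t w x)‖ := by
          simp only [applyWord_cons]
          exact norm_sub_le_norm_sub_add_norm_sub _ _ _
      _ ≤ rbar * ((C / (1 - rbar)) * ‖t' - t‖) + C * ‖t' - t‖ := by
          exact add_le_add (h1.trans h3) h2
      _ = (rbar * (C / (1 - rbar)) + C) * ‖t' - t‖ := by ring
      _ = (C / (1 - rbar)) * ‖t' - t‖ := by rw [hkey]

lemma applyWord_mem_K {K : EuclideanSpace ℝ (Fin n) → Set (EuclideanSpace ℝ (Fin n))}
    {t} (hKt : K t = ⋃ i, S i t '' K t)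
    (w : List (Fin m)) {x} (hx : x ∈ K t) : applyWord S t w x ∈ K t := by
  induction w with
  | nil => exact hx
  | cons i w ih =>
    have : S i t (applyWord S t w x) ∈ ⋃ i, S i t '' K t :=
      mem_iUnion.2 ⟨i, _, ih, rfl⟩
    rwa [← hKt] at this

lemma cover_lemma (hr0 : ∀ i, 0 < r i) (hrbar : ∀ i, r i ≤ rbar) (hrbar0 : 0 < rbar)
    (hrbar1 : rbar < 1)
    {K : EuclideanSpace ℝ (Fin n) → Set (EuclideanSpace ℝ (Fin n))}
    {t} (hKt : K t = ⋃ i, S i t '' K t)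
    {ρ : ℝ} (hρ0 : 0 < ρ) (hρ1 : ρ < 1) {x} (hx : x ∈ K t) :
    ∃ u : List (Fin m), ((u.map r).prod ≤ ρ ∧ ρ < ((u.dropLast).map r).prod) ∧
      ∃ y ∈ K t, x = applyWord S t u y := by
  have H : ∀ (p : ℕ) (w : List (Fin m)) (y : EuclideanSpace ℝ (Fin n)), y ∈ K t →
      ρ < (w.map r).prod → (w.map r).prod * rbar ^ p ≤ ρ →
      ∃ u : List (Fin m), ((u.map r).prod ≤ ρ ∧ ρ < ((u.dropLast).map r).prod) ∧
        ∃ z ∈ K t, applyWord S t w y = applyWord S t u z := by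
    intro p
    induction p with
    | zero => intro w y _ hlt hle; simp at hle; linarith
    | succ p ih =>
      intro w y hy hlt hle
      have hy' : y ∈ ⋃ i, S i t '' K t := by rwa [← hKt]
      obtain ⟨i, y₂, hy₂, hyeq⟩ : ∃ i y₂, y₂ ∈ K t ∧ S i t y₂ = y := by
        simpa [mem_iUnion] using hy'
      have hprod : ((w ++ [i]).map r).prod = (w.map r).prod * r i := by simp
      have heq : applyWord S t w y = applyWord S t (w ++ [i]) y₂ := by
        rw [applyWord_append]
        simp [applyWord_cons, applyWord_nil, hyeq]
      by_cases hcase : ((w ++ [i]).map r).prod ≤ ρ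
      · refine ⟨w ++ [i], ⟨hcase, by rwa [List.dropLast_concat]⟩, y₂, hy₂, heq⟩
      · push_neg at hcase
        have hle' : ((w ++ [i]).map r).prod * rbar ^ p ≤ ρ := by
          rw [hprod]
          calc (w.map r).prod * r i * rbar ^ p ≤ (w.map r).prod * rbar * rbar ^ p := by
                apply mul_le_mul_of_nonneg_right _ (by positivity)
                exact mul_le_mul_of_nonneg_left (hrbar i) (wordProd_pos hr0 w).le
            _ = (w.map r).prod * rbar ^ (p + 1) := by ring
            _ ≤ ρ := hle
        obtain ⟨u, hu, z, hz, heq2⟩ := ih (w ++ [i]) y₂ hy₂ hcase hle'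
        exact ⟨u, hu, z, hz, heq.trans heq2⟩
  obtain ⟨p, hp⟩ := exists_pow_lt_of_lt_one hρ0 hrbar1
  obtain ⟨u, hu, z, hz, heq⟩ := H p [] x hx (by simpa using hρ1) (by simpa using hp.le)
  exact ⟨u, hu, z, hz, heq⟩


lemma prod_map_rpow (hr0 : ∀ i, 0 < r i) (s : ℝ) (u : List (Fin m)) :
    (u.map fun i => r i ^ s).prod = (u.map r).prod ^ s := by
  induction u with
  | nil => simp
  | cons i u ih =>
    simp only [List.map_cons, List.prod_cons, ih]
    rw [← Real.mul_rpow (hr0 i).le (wordProd_pos hr0 u).le]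

lemma lists_comparable_of_subsingleton {α : Type*} [Subsingleton α] :
    ∀ (a b : List α), a <+: b ∨ b <+: a := by
  intro a
  induction a with
  | nil => intro b; exact Or.inl (List.nil_prefix)
  | cons x a ih =>
    intro b
    cases b with
    | nil => exact Or.inr (List.nil_prefix)
    | cons y b =>
      have hxy : x = y := Subsingleton.elim _ _
      subst hxy
      rcases ih b with h | h
      · exact Or.inl (List.cons_prefix_cons.2 ⟨rfl, h⟩)
      · exact Or.inr (List.cons_prefix_cons.2 ⟨rfl, h⟩)

lemma antichain_sum_le (w : Fin m → ℝ) (hw : ∀ i, 0 ≤ w i) (hw1 : ∑ i, w i = 1) :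
    ∀ N : ℕ, ∀ F : Finset (List (Fin m)),
      (∀ u ∈ F, ∀ v ∈ F, u ≠ v → ¬ u <+: v) →
      (∑ u ∈ F, u.length ≤ N) →
      ∑ u ∈ F, (u.map w).prod ≤ 1 := by
  have hprodnn : ∀ u : List (Fin m), 0 ≤ (u.map w).prod := by
    intro u
    apply List.prod_nonneg
    intro x hx
    obtain ⟨i, -, rfl⟩ := List.mem_map.1 hx
    exact hw i
  have hsub : ∀ F : Finset (List (Fin m)), F ⊆ {([] : List (Fin m))} →
      ∑ u ∈ F, (u.map w).prod ≤ 1 := by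
    intro F hF
    calc ∑ u ∈ F, (u.map w).prod ≤ ∑ u ∈ {([] : List (Fin m))}, (u.map w).prod :=
          Finset.sum_le_sum_of_subset_of_nonneg hF (fun u _ _ => hprodnn u)
      _ = 1 := by simp
  intro N
  induction N with
  | zero =>
    intro F hAC hlen
    apply hsub
    intro u hu
    have : u.length = 0 := by
      have h1 : u.length ≤ 0 := le_trans (Finset.single_le_sum (f := fun u : List (Fin m) => u.length) (fun _ _ => Nat.zero_le _) hu) hlen
      omega
    simpa [Finset.mem_singleton] using List.length_eq_zero_iff.1 this
  | succ N ih =>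
    intro F hAC hlen
    by_cases hnil : ([] : List (Fin m)) ∈ F
    · apply hsub
      intro u hu
      rw [Finset.mem_singleton]
      by_contra hne
      exact hAC [] hnil u hu (Ne.symm hne) (List.nil_prefix)
    · rcases Nat.eq_zero_or_pos m with hm | hm
      · -- m = 0 : F must be empty or {[]}, but [] ∉ F, so all elements nonempty: impossible
        have : F = ∅ := by
          apply Finset.eq_empty_of_forall_notMem
          intro u hu
          cases u with
          | nil => exact hnil hu
          | cons a _ => exact absurd a.pos (by omega)
        simp [this]
      · haveI : Inhabited (Fin m) := ⟨⟨0, hm⟩⟩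
        classical
        -- decompose by head
        have hne : ∀ u ∈ F, u ≠ [] := fun u hu h => hnil (h ▸ hu)
        have hsplit : ∑ u ∈ F, (u.map w).prod
            = ∑ i : Fin m, ∑ u ∈ F.filter (fun u => u.headI = i), (u.map w).prod :=
          (Finset.sum_fiberwise F (fun u => u.headI) (fun u => (u.map w).prod)).symm
        rw [hsplit]
        have hbound : ∀ i : Fin m,
            ∑ u ∈ F.filter (fun u => u.headI = i), (u.map w).prod ≤ w i := by
          intro i
          set Fi : Finset (List (Fin m)) :=
            (F.filter (fun u => u.headI = i)).image List.tail with hFi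
          have hmemFi : ∀ v ∈ Fi, (i :: v) ∈ F := by
            intro v hv
            obtain ⟨u, hu, rfl⟩ := Finset.mem_image.1 hv
            have hu1 := Finset.mem_filter.1 hu
            obtain ⟨a, u', rfl⟩ := List.exists_cons_of_ne_nil (hne u hu1.1)
            have : a = i := by simpa using hu1.2
            subst this
            simpa using hu1.1
          have hinj : ∀ u₁ ∈ F.filter (fun u => u.headI = i),
              ∀ u₂ ∈ F.filter (fun u => u.headI = i), u₁.tail = u₂.tail → u₁ = u₂ := by
            intro u₁ h₁ u₂ h₂ htail
            have h₁' := Finset.mem_filter.1 h₁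
            have h₂' := Finset.mem_filter.1 h₂
            obtain ⟨a, u₁', rfl⟩ := List.exists_cons_of_ne_nil (hne _ h₁'.1)
            obtain ⟨b, u₂', rfl⟩ := List.exists_cons_of_ne_nil (hne _ h₂'.1)
            have ha : a = i := by simpa using h₁'.2
            have hb : b = i := by simpa using h₂'.2
            simp_all
          have hsum_im : ∑ v ∈ Fi, (v.map w).prod
              = ∑ u ∈ F.filter (fun u => u.headI = i), ((u.tail).map w).prod :=
            Finset.sum_image hinj
          have hw_eq : ∑ u ∈ F.filter (fun u => u.headI = i), (u.map w).prod
              = w i * ∑ v ∈ Fi, (v.map w).prod := by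
            rw [hsum_im, Finset.mul_sum]
            apply Finset.sum_congr rfl
            intro u hu
            have hu' := Finset.mem_filter.1 hu
            obtain ⟨a, u', rfl⟩ := List.exists_cons_of_ne_nil (hne _ hu'.1)
            have : a = i := by simpa using hu'.2
            subst this
            simp
          rw [hw_eq]
          have hFiAC : ∀ u ∈ Fi, ∀ v ∈ Fi, u ≠ v → ¬ u <+: v := by
            intro u hu v hv huv hpre
            exact hAC _ (hmemFi u hu) _ (hmemFi v hv) (by simpa using huv)
              (List.cons_prefix_cons.2 ⟨rfl, hpre⟩)
          have hFilen : ∑ v ∈ Fi, v.length ≤ N := by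
            rcases Finset.eq_empty_or_nonempty (F.filter (fun u => u.headI = i)) with he | hne'
            · simp [hFi, he]
            · have h1 : ∑ v ∈ Fi, v.length
                  ≤ ∑ u ∈ F.filter (fun u => u.headI = i), u.tail.length := by
                rw [Finset.sum_image hinj]
              have h2 : ∑ u ∈ F.filter (fun u => u.headI = i), u.tail.length + 1
                  ≤ ∑ u ∈ F.filter (fun u => u.headI = i), u.length := by
                obtain ⟨u₀, hu₀⟩ := hne'
                calc ∑ u ∈ F.filter (fun u => u.headI = i), u.tail.length + 1
                    ≤ ∑ u ∈ F.filter (fun u => u.headI = i), (u.tail.length + if u = u₀ then 1 else 0) := by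
                      rw [Finset.sum_add_distrib]
                      simp [Finset.sum_ite_eq, hu₀]
                  _ ≤ ∑ u ∈ F.filter (fun u => u.headI = i), u.length := by
                      apply Finset.sum_le_sum
                      intro u hu
                      have : u ≠ [] := hne u (Finset.mem_filter.1 hu).1
                      have : 1 ≤ u.length := by
                        cases u with
                        | nil => simp at this
                        | cons _ _ => simp
                      have htl : u.tail.length = u.length - 1 := List.length_tail
                      split <;> omega
              have h3 : ∑ u ∈ F.filter (fun u => u.headI = i), u.length ≤ N + 1 :=
                le_trans (Finset.sum_le_sum_of_subset (Finset.filter_subset _ _)) hlen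
              omega
          exact (mul_le_mul_of_nonneg_left (ih Fi hFiAC hFilen) (hw i)).trans (by simp)
        calc ∑ i : Fin m, ∑ u ∈ F.filter (fun u => u.headI = i), (u.map w).prod
            ≤ ∑ i : Fin m, w i := Finset.sum_le_sum (fun i _ => hbound i)
          _ = 1 := hw1

end PDG

namespace PDG

lemma arith_key {cj Ck CF Pj Pk dV δ c₁ ρ T X Y N0 N1 N2 N3 : ℝ}
    (hρ : 0 ≤ ρ) (hδ : 0 < δ) (hPj : 0 ≤ Pj) (hPk : 0 ≤ Pk)
    (hδeq : δ = cj - Ck - (Pj + Pk) * CF)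
    (hc₁eq : c₁ = (Pj + Pk) * dV / δ + 1)
    (h1 : cj * T ≤ N0) (hnorm : N0 ≤ N1 + (N2 + N3))
    (hA : N1 ≤ Pj * X) (hB : N2 ≤ Pk * Y) (hC : N3 ≤ Ck * T)
    (hX : X ≤ CF * T + ρ * dV) (hY : Y ≤ CF * T + ρ * dV) :
    T ≤ c₁ * ρ := by
  have hXb : Pj * X ≤ Pj * (CF * T + ρ * dV) := mul_le_mul_of_nonneg_left hX hPj
  have hYb : Pk * Y ≤ Pk * (CF * T + ρ * dV) := mul_le_mul_of_nonneg_left hY hPk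
  have hδT : δ * T ≤ (Pj + Pk) * dV * ρ := by
    have hexp : (cj - Ck - (Pj + Pk) * CF) * T ≤ (Pj + Pk) * dV * ρ := by
      nlinarith [h1, hnorm, hA, hB, hC, hXb, hYb]
    rw [hδeq]
    exact hexp
  have hc : δ * (c₁ * ρ) = (Pj + Pk) * dV * ρ + δ * ρ := by
    rw [hc₁eq]
    field_simp
  have h2 : δ * T ≤ δ * (c₁ * ρ) := by
    rw [hc]
    nlinarith [mul_nonneg hδ.le hρ]
  exact le_of_mul_le_mul_left h2 hδ

lemma key_estimate {n m : ℕ}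
    {D : Set (EuclideanSpace ℝ (Fin n))}
    {S : Fin m → EuclideanSpace ℝ (Fin n) →
      EuclideanSpace ℝ (Fin n) → EuclideanSpace ℝ (Fin n)}
    {V : Set (EuclideanSpace ℝ (Fin n))} (hVc : IsCompact V)
    (hInv : ∀ k, ∀ t ∈ D, S k t '' V ⊆ V)
    {r : Fin m → ℝ} {rbar C : ℝ} (hrbar0 : 0 < rbar)
    (hr0 : ∀ k, 0 < r k) (hrbar : ∀ k, r k ≤ rbar) (hrbar1 : rbar < 1)
    (hLip : ∀ k, ∀ t ∈ D, ∀ x ∈ V, ∀ y ∈ V, ‖S k t x - S k t y‖ ≤ r k * ‖x - y‖)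
    (hC : 0 < C)
    (hS4 : ∀ k, ∀ x ∈ V, ∀ t ∈ D, ∀ t' ∈ D, ‖S k t' x - S k t x‖ ≤ C * ‖t' - t‖)
    {K : EuclideanSpace ℝ (Fin n) → Set (EuclideanSpace ℝ (Fin n))}
    (hK : ∀ t ∈ D, (K t).Nonempty ∧ IsCompact (K t) ∧ K t ⊆ V ∧
      K t = ⋃ i, S i t '' K t)
    {j k : List (Fin m)} {cj Ck : ℝ}
    (hkLip : ∀ x ∈ V, ∀ t ∈ D, ∀ t' ∈ D,
      ‖applyWord S t' k x - applyWord S t k x‖ ≤ Ck * ‖t' - t‖)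
    (hjLow : ∀ x ∈ V, ∀ t ∈ D, ∀ t' ∈ D,
      ‖applyWord S t' j x - applyWord S t j x‖ ≥ cj * ‖t' - t‖)
    (hgap : 0 < cj - Ck - ((j.map r).prod + (k.map r).prod) * C / (1 - rbar))
    {ρ : ℝ} (hρ : 0 ≤ ρ) {u v : List (Fin m)}
    (hu : (u.map r).prod ≤ ρ) (hv : (v.map r).prod ≤ ρ)
    {t₁ t₂ : EuclideanSpace ℝ (Fin n)}
    (ht₁ : t₁ ∈ D ∧ (applyWord S t₁ (j ++ u) '' K t₁ ∩ applyWord S t₁ (k ++ v) '' K t₁).Nonempty)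
    (ht₂ : t₂ ∈ D ∧ (applyWord S t₂ (j ++ u) '' K t₂ ∩ applyWord S t₂ (k ++ v) '' K t₂).Nonempty) :
    dist t₁ t₂ ≤ (((j.map r).prod + (k.map r).prod) * Metric.diam V /
      (cj - Ck - ((j.map r).prod + (k.map r).prod) * C / (1 - rbar)) + 1) * ρ := by
  obtain ⟨ht₁D, z₁, ⟨x₁, hx₁, hzx₁⟩, ⟨y₁, hy₁, hzy₁⟩⟩ := ht₁
  obtain ⟨ht₂D, z₂, ⟨x₂, hx₂, hzx₂⟩, ⟨y₂, hy₂, hzy₂⟩⟩ := ht₂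
  have hKV₁ : K t₁ ⊆ V := (hK t₁ ht₁D).2.2.1
  have hKV₂ : K t₂ ⊆ V := (hK t₂ ht₂D).2.2.1
  have hKeq₁ := (hK t₁ ht₁D).2.2.2
  have hKeq₂ := (hK t₂ ht₂D).2.2.2
  have h1r : (0:ℝ) < 1 - rbar := by linarith
  have ha₁V : applyWord S t₁ u x₁ ∈ V := hKV₁ (applyWord_mem_K hKeq₁ u hx₁)
  have ha₂V : applyWord S t₂ u x₂ ∈ V := hKV₂ (applyWord_mem_K hKeq₂ u hx₂)
  have hb₁V : applyWord S t₁ v y₁ ∈ V := hKV₁ (applyWord_mem_K hKeq₁ v hy₁)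
  have hb₂V : applyWord S t₂ v y₂ ∈ V := hKV₂ (applyWord_mem_K hKeq₂ v hy₂)
  have hx₁V : x₁ ∈ V := hKV₁ hx₁
  have hx₂V : x₂ ∈ V := hKV₂ hx₂
  have hy₁V : y₁ ∈ V := hKV₁ hy₁
  have hy₂V : y₂ ∈ V := hKV₂ hy₂
  have hz₁ : applyWord S t₁ j (applyWord S t₁ u x₁) = applyWord S t₁ k (applyWord S t₁ v y₁) := by
    rw [← applyWord_append, ← applyWord_append, hzx₁, hzy₁]
  have hz₂ : applyWord S t₂ j (applyWord S t₂ u x₂) = applyWord S t₂ k (applyWord S t₂ v y₂) := by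
    rw [← applyWord_append, ← applyWord_append, hzx₂, hzy₂]
  have h1 : cj * ‖t₂ - t₁‖
      ≤ ‖applyWord S t₂ j (applyWord S t₁ u x₁) - applyWord S t₁ j (applyWord S t₁ u x₁)‖ :=
    hjLow _ ha₁V t₁ ht₁D t₂ ht₂D
  have e1 : applyWord S t₂ j (applyWord S t₁ u x₁) - applyWord S t₁ j (applyWord S t₁ u x₁)
      = (applyWord S t₂ j (applyWord S t₁ u x₁) - applyWord S t₂ j (applyWord S t₂ u x₂))
        + ((applyWord S t₂ k (applyWord S t₂ v y₂) - applyWord S t₂ k (applyWord S t₁ v y₁))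
        + (applyWord S t₂ k (applyWord S t₁ v y₁) - applyWord S t₁ k (applyWord S t₁ v y₁))) := by
    rw [hz₁, ← hz₂]; abel
  have hnorm : ‖applyWord S t₂ j (applyWord S t₁ u x₁) - applyWord S t₁ j (applyWord S t₁ u x₁)‖
      ≤ ‖applyWord S t₂ j (applyWord S t₁ u x₁) - applyWord S t₂ j (applyWord S t₂ u x₂)‖
        + (‖applyWord S t₂ k (applyWord S t₂ v y₂) - applyWord S t₂ k (applyWord S t₁ v y₁)‖
        + ‖applyWord S t₂ k (applyWord S t₁ v y₁) - applyWord S t₁ k (applyWord S t₁ v y₁)‖) := by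
    rw [e1]
    exact (norm_add_le _ _).trans (by gcongr; exact norm_add_le _ _)
  have hA : ‖applyWord S t₂ j (applyWord S t₁ u x₁) - applyWord S t₂ j (applyWord S t₂ u x₂)‖
      ≤ (j.map r).prod * ‖applyWord S t₁ u x₁ - applyWord S t₂ u x₂‖ :=
    applyWord_lip_x hr0 hInv hLip ht₂D j ha₁V ha₂V
  have hBb : ‖applyWord S t₂ k (applyWord S t₂ v y₂) - applyWord S t₂ k (applyWord S t₁ v y₁)‖
      ≤ (k.map r).prod * ‖applyWord S t₂ v y₂ - applyWord S t₁ v y₁‖ :=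
    applyWord_lip_x hr0 hInv hLip ht₂D k hb₂V hb₁V
  have hCc : ‖applyWord S t₂ k (applyWord S t₁ v y₁) - applyWord S t₁ k (applyWord S t₁ v y₁)‖
      ≤ Ck * ‖t₂ - t₁‖ := hkLip _ hb₁V t₁ ht₁D t₂ ht₂D
  have hdxx : ‖x₁ - x₂‖ ≤ Metric.diam V := by
    rw [← dist_eq_norm]
    exact Metric.dist_le_diam_of_mem hVc.isBounded hx₁V hx₂V
  have hdyy : ‖y₂ - y₁‖ ≤ Metric.diam V := by
    rw [← dist_eq_norm]
    exact Metric.dist_le_diam_of_mem hVc.isBounded hy₂V hy₁V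
  have haa : ‖applyWord S t₁ u x₁ - applyWord S t₂ u x₂‖
      ≤ (C / (1 - rbar)) * ‖t₂ - t₁‖ + ρ * Metric.diam V := by
    have e2 : applyWord S t₁ u x₁ - applyWord S t₂ u x₂
        = (applyWord S t₁ u x₁ - applyWord S t₂ u x₁)
          + (applyWord S t₂ u x₁ - applyWord S t₂ u x₂) := by abel
    calc ‖applyWord S t₁ u x₁ - applyWord S t₂ u x₂‖
        ≤ ‖applyWord S t₁ u x₁ - applyWord S t₂ u x₁‖
          + ‖applyWord S t₂ u x₁ - applyWord S t₂ u x₂‖ := by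
          rw [e2]; exact norm_add_le _ _
      _ ≤ (C / (1 - rbar)) * ‖t₂ - t₁‖ + ρ * Metric.diam V := by
          apply add_le_add
          · rw [norm_sub_rev]
            exact applyWord_lip_t hrbar0.le hrbar1 hC hInv hrbar hLip hS4 ht₁D ht₂D u hx₁V
          · calc ‖applyWord S t₂ u x₁ - applyWord S t₂ u x₂‖
                ≤ (u.map r).prod * ‖x₁ - x₂‖ :=
                  applyWord_lip_x hr0 hInv hLip ht₂D u hx₁V hx₂V
              _ ≤ ρ * Metric.diam V := mul_le_mul hu hdxx (norm_nonneg _) hρ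
  have hbb : ‖applyWord S t₂ v y₂ - applyWord S t₁ v y₁‖
      ≤ (C / (1 - rbar)) * ‖t₂ - t₁‖ + ρ * Metric.diam V := by
    have e2 : applyWord S t₂ v y₂ - applyWord S t₁ v y₁
        = (applyWord S t₂ v y₁ - applyWord S t₁ v y₁)
          + (applyWord S t₂ v y₂ - applyWord S t₂ v y₁) := by abel
    calc ‖applyWord S t₂ v y₂ - applyWord S t₁ v y₁‖
        ≤ ‖applyWord S t₂ v y₁ - applyWord S t₁ v y₁‖
          + ‖applyWord S t₂ v y₂ - applyWord S t₂ v y₁‖ := by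
          rw [e2]; exact norm_add_le _ _
      _ ≤ (C / (1 - rbar)) * ‖t₂ - t₁‖ + ρ * Metric.diam V := by
          apply add_le_add
          · exact applyWord_lip_t hrbar0.le hrbar1 hC hInv hrbar hLip hS4 ht₁D ht₂D v hy₁V
          · calc ‖applyWord S t₂ v y₂ - applyWord S t₂ v y₁‖
                ≤ (v.map r).prod * ‖y₂ - y₁‖ :=
                  applyWord_lip_x hr0 hInv hLip ht₂D v hy₂V hy₁V
              _ ≤ ρ * Metric.diam V := mul_le_mul hv hdyy (norm_nonneg _) hρ
  have hfinal : ‖t₂ - t₁‖ ≤ (((j.map r).prod + (k.map r).prod) * Metric.diam V /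
      (cj - Ck - ((j.map r).prod + (k.map r).prod) * C / (1 - rbar)) + 1) * ρ := by
    apply arith_key hρ hgap (wordProd_pos hr0 j).le (wordProd_pos hr0 k).le
      _ rfl h1 hnorm hA hBb hCc haa hbb
    field_simp
  rw [dist_comm, dist_eq_norm]
  exact hfinal

end PDG
/-- Main theorem: under settings (S1)–(S4) and the speed conditions on the
incomparable words `j`, `k`, if `c_j − C_k − (r_j+r_k)C/(1−r̄) > 0` and
`2 s_r < dimH D` then the set of parameters `t` for which the pieces
`K_{j,t}` and `K_{k,t}` intersect has Hausdorff dimension at most `2 s_r`. -/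
theorem pieces_disjoint_generic {n m : ℕ}
    (D : Set (EuclideanSpace ℝ (Fin n)))
    (S : Fin m → EuclideanSpace ℝ (Fin n) →
      EuclideanSpace ℝ (Fin n) → EuclideanSpace ℝ (Fin n))
    (V : Set (EuclideanSpace ℝ (Fin n))) (hVc : IsCompact V) (hVne : V.Nonempty)
    (hInv : ∀ k, ∀ t ∈ D, S k t '' V ⊆ V)
    (r : Fin m → ℝ) (rbar C : ℝ)
    (hr0 : ∀ k, 0 < r k) (hrbar : ∀ k, r k ≤ rbar) (hrbar1 : rbar < 1)
    (hLip : ∀ k, ∀ t ∈ D, ∀ x ∈ V, ∀ y ∈ V, ‖S k t x - S k t y‖ ≤ r k * ‖x - y‖)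
    (hC : 0 < C)
    (hS4 : ∀ k, ∀ x ∈ V, ∀ t ∈ D, ∀ t' ∈ D, ‖S k t' x - S k t x‖ ≤ C * ‖t' - t‖)
    (K : EuclideanSpace ℝ (Fin n) → Set (EuclideanSpace ℝ (Fin n)))
    (hK : ∀ t ∈ D, (K t).Nonempty ∧ IsCompact (K t) ∧ K t ⊆ V ∧
      K t = ⋃ i, S i t '' K t)
    (j k : List (Fin m)) (hjk : ¬ j <+: k ∧ ¬ k <+: j)
    (cj Ck : ℝ) (hcj : 0 < cj) (hCk : 0 < Ck)
    (hkLip : ∀ x ∈ V, ∀ t ∈ D, ∀ t' ∈ D,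
      ‖applyWord S t' k x - applyWord S t k x‖ ≤ Ck * ‖t' - t‖)
    (hjLow : ∀ x ∈ V, ∀ t ∈ D, ∀ t' ∈ D,
      ‖applyWord S t' j x - applyWord S t j x‖ ≥ cj * ‖t' - t‖)
    (hgap : 0 < cj - Ck - ((j.map r).prod + (k.map r).prod) * C / (1 - rbar))
    (s : ℝ) (hs : ∑ i, r i ^ s = 1)
    (hsdim : ENNReal.ofReal (2 * s) < dimH D) :
    dimH {t ∈ D | (applyWord S t j '' K t ∩ applyWord S t k '' K t).Nonempty} ≤
      ENNReal.ofReal (2 * s) := by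
  classical
  obtain ⟨hjp, hkp⟩ := hjk
  have hjne : j ≠ [] := fun h => hjp (h ▸ List.nil_prefix)
  have hkne : k ≠ [] := fun h => hkp (h ▸ List.nil_prefix)
  have hm : 0 < m := (j.head hjne).pos
  have hm2 : 2 ≤ m := by
    by_contra hcon
    have hm1 : m = 1 := by omega
    subst hm1
    rcases PDG.lists_comparable_of_subsingleton j k with h | h
    exacts [hjp h, hkp h]
  have hrbar0 : 0 < rbar := lt_of_lt_of_le (hr0 ⟨0, hm⟩) (hrbar _)
  obtain ⟨i₀, -, hi₀⟩ := Finset.exists_min_image Finset.univ r ⟨⟨0, hm⟩, Finset.mem_univ _⟩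
  set rm := r i₀ with hrm_def
  have hrm0 : 0 < rm := hr0 i₀
  have hrmle : ∀ i, rm ≤ r i := fun i => hi₀ i (Finset.mem_univ i)
  -- positivity of s
  have hs0 : 0 < s := by
    by_contra hcon
    push_neg at hcon
    have h1 : ∀ i : Fin m, (1 : ℝ) ≤ r i ^ s := fun i =>
      Real.one_le_rpow_of_pos_of_le_one_of_nonpos (hr0 i) ((hrbar i).trans hrbar1.le) hcon
    have h2 : (Finset.univ : Finset (Fin m)).card • (1:ℝ) ≤ ∑ i : Fin m, r i ^ s :=
      Finset.card_nsmul_le_sum _ _ _ (fun i _ => h1 i)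
    rw [hs] at h2
    simp [Finset.card_univ] at h2
    have : (2 : ℝ) ≤ (m : ℝ) := by exact_mod_cast hm2
    linarith
  set Pj := (j.map r).prod with hPj_def
  set Pk := (k.map r).prod with hPk_def
  have hPj0 : 0 < Pj := PDG.wordProd_pos hr0 j
  have hPk0 : 0 < Pk := PDG.wordProd_pos hr0 k
  set dV := Metric.diam V with hdV_def
  have hdV0 : 0 ≤ dV := Metric.diam_nonneg
  set δ := cj - Ck - (Pj + Pk) * C / (1 - rbar) with hδ_def
  have hδ : 0 < δ := hgap
  set c₁ := (Pj + Pk) * dV / δ + 1 with hc₁_def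
  have hc₁0 : 0 < c₁ := by positivity
  set B := {t ∈ D | (applyWord S t j '' K t ∩ applyWord S t k '' K t).Nonempty} with hB_def
  set Λ : ℝ → Set (List (Fin m)) :=
    fun ρ => {u | (u.map r).prod ≤ ρ ∧ ρ < ((u.dropLast).map r).prod} with hΛ_def
  set Bs : List (Fin m) → List (Fin m) → Set (EuclideanSpace ℝ (Fin n)) := fun u v =>
    {t ∈ D | (applyWord S t (j ++ u) '' K t ∩ applyWord S t (k ++ v) '' K t).Nonempty}
    with hBs_def
  -- lower bound on products over the cut
  have hΛlow : ∀ ρ : ℝ, 0 < ρ → ρ < 1 → ∀ u ∈ Λ ρ, ρ * rm < (u.map r).prod := by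
    intro ρ hρ0 hρ1 u hu
    obtain ⟨hu1, hu2⟩ := hu
    have hune : u ≠ [] := by
      rintro rfl
      simp at hu1
      linarith
    have hsplit : u.dropLast ++ [u.getLast hune] = u := List.dropLast_append_getLast hune
    have : (u.map r).prod = ((u.dropLast).map r).prod * r (u.getLast hune) := by
      conv_lhs => rw [← hsplit]
      simp
    rw [this]
    calc ρ * rm < ((u.dropLast).map r).prod * rm := by
          exact mul_lt_mul_of_pos_right hu2 hrm0
      _ ≤ ((u.dropLast).map r).prod * r (u.getLast hune) := by
          exact mul_le_mul_of_nonneg_left (hrmle _) (PDG.wordProd_pos hr0 _).le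
  -- the cut is an antichain
  have hΛAC : ∀ ρ : ℝ, ∀ u ∈ Λ ρ, ∀ v ∈ Λ ρ, u ≠ v → ¬ u <+: v := by
    intro ρ u hu v hv huv hpre
    obtain ⟨w', rfl⟩ := hpre
    have hw'ne : w' ≠ [] := by rintro rfl; simp at huv
    have : ((u ++ w').dropLast.map r).prod ≤ (u.map r).prod := by
      rw [List.dropLast_append_of_ne_nil hw'ne]
      simp only [List.map_append, List.prod_append]
      calc (u.map r).prod * ((w'.dropLast).map r).prod ≤ (u.map r).prod * 1 :=
            mul_le_mul_of_nonneg_left (PDG.wordProd_le_one hr0 hrbar hrbar1 _)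
              (PDG.wordProd_pos hr0 _).le
        _ = (u.map r).prod := mul_one _
    have h1 : ρ < (u.map r).prod := lt_of_lt_of_le hv.2 this
    exact absurd hu.1 (not_le.2 h1)
  -- key diameter estimate
  have key : ∀ ρ : ℝ, 0 ≤ ρ → ∀ u v : List (Fin m),
      (u.map r).prod ≤ ρ → (v.map r).prod ≤ ρ →
      ∀ t₁ ∈ Bs u v, ∀ t₂ ∈ Bs u v, dist t₁ t₂ ≤ c₁ * ρ := by
    intro ρ hρ u v hu hv t₁ ht₁ t₂ ht₂
    exact PDG.key_estimate hVc hInv hrbar0 hr0 hrbar hrbar1 hLip hC hS4 hK hkLip hjLow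
      hgap hρ hu hv ht₁ ht₂
  -- coverage of B at scale ρ
  have hcov : ∀ ρ : ℝ, 0 < ρ → ρ < 1 → ∀ t ∈ B, ∃ u v : List (Fin m),
      u ∈ Λ ρ ∧ v ∈ Λ ρ ∧ t ∈ Bs u v := by
    intro ρ hρ0 hρ1 t ht
    obtain ⟨htD, z, ⟨x, hx, hzx⟩, ⟨y, hy, hzy⟩⟩ := ht
    obtain ⟨u, hu, x₂, hx₂, hxeq⟩ :=
      PDG.cover_lemma hr0 hrbar hrbar0 hrbar1 (hK t htD).2.2.2 hρ0 hρ1 hx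
    obtain ⟨v, hv, y₂, hy₂, hyeq⟩ :=
      PDG.cover_lemma hr0 hrbar hrbar0 hrbar1 (hK t htD).2.2.2 hρ0 hρ1 hy
    refine ⟨u, v, hu, hv, htD, z, ⟨x₂, hx₂, ?_⟩, ⟨y₂, hy₂, ?_⟩⟩
    · rw [PDG.applyWord_append, ← hxeq]; exact hzx
    · rw [PDG.applyWord_append, ← hyeq]; exact hzy
  -- tsum bound over the cut
  have hf : ∀ ρ : ℝ, 0 < ρ → ρ < 1 →
      (∑' u : List (Fin m),
        (if u ∈ Λ ρ then ENNReal.ofReal ((u.map r).prod ^ s) else 0)) ≤ 1 := by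
    intro ρ hρ0 hρ1
    rw [ENNReal.tsum_eq_iSup_sum]
    apply iSup_le
    intro F
    have hnn : ∀ u ∈ F.filter (fun u => u ∈ Λ ρ), 0 ≤ (u.map r).prod ^ s :=
      fun u _ => Real.rpow_nonneg (PDG.wordProd_pos hr0 u).le _
    calc ∑ u ∈ F, (if u ∈ Λ ρ then ENNReal.ofReal ((u.map r).prod ^ s) else 0)
        = ∑ u ∈ F.filter (fun u => u ∈ Λ ρ), ENNReal.ofReal ((u.map r).prod ^ s) :=
          (Finset.sum_filter _ _).symm
      _ = ENNReal.ofReal (∑ u ∈ F.filter (fun u => u ∈ Λ ρ), (u.map r).prod ^ s) :=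
          (ENNReal.ofReal_sum_of_nonneg hnn).symm
      _ ≤ 1 := by
          rw [← ENNReal.ofReal_one]
          apply ENNReal.ofReal_le_ofReal
          have hsum := PDG.antichain_sum_le (fun i => r i ^ s)
            (fun i => Real.rpow_nonneg (hr0 i).le _) hs
            (∑ u ∈ F.filter (fun u => u ∈ Λ ρ), u.length) (F.filter (fun u => u ∈ Λ ρ))
            (fun u hu v hv huv =>
              hΛAC ρ u (Finset.mem_filter.1 hu).2 v (Finset.mem_filter.1 hv).2 huv)
            le_rfl
          calc ∑ u ∈ F.filter (fun u => u ∈ Λ ρ), (u.map r).prod ^ s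
              = ∑ u ∈ F.filter (fun u => u ∈ Λ ρ), (u.map (fun i => r i ^ s)).prod :=
                Finset.sum_congr rfl (fun u _ => (PDG.prod_map_rpow hr0 s u).symm)
            _ ≤ 1 := hsum
  -- the measure-zero statement
  have hmz : ∀ dd : ℝ, 2 * s < dd → μH[dd] B = 0 := by
    intro dd hdd
    have hdd0 : 0 < dd := by linarith
    refine le_antisymm ?_ zero_le
    set q := rbar ^ (dd - 2 * s) with hq_def
    have hq1 : q < 1 := Real.rpow_lt_one hrbar0.le hrbar1 (by linarith)
    have hq0 : 0 ≤ q := Real.rpow_nonneg hrbar0.le _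
    set M := c₁ ^ dd / (rm ^ s * rm ^ s) with hM_def
    have hM0 : 0 ≤ M :=
      div_nonneg (Real.rpow_nonneg hc₁0.le _)
        (mul_nonneg (Real.rpow_nonneg hrm0.le _) (Real.rpow_nonneg hrm0.le _))
    set tset : ℕ → List (Fin m) × List (Fin m) → Set (EuclideanSpace ℝ (Fin n)) :=
      fun p uv =>
        if uv.1 ∈ Λ (rbar ^ (p + 1)) ∧ uv.2 ∈ Λ (rbar ^ (p + 1)) then Bs uv.1 uv.2 else ∅
      with htset_def
    have hρp0 : ∀ p : ℕ, (0:ℝ) < rbar ^ (p + 1) := fun p => pow_pos hrbar0 _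
    have hρp1 : ∀ p : ℕ, (rbar:ℝ) ^ (p + 1) < 1 :=
      fun p => pow_lt_one₀ hrbar0.le hrbar1 p.succ_ne_zero
    have hdiam : ∀ (p : ℕ) uv, EMetric.diam (tset p uv) ≤
        ENNReal.ofReal (c₁ * rbar ^ (p + 1)) := by
      intro p uv
      simp only [htset_def]
      by_cases hcond : uv.1 ∈ Λ (rbar ^ (p + 1)) ∧ uv.2 ∈ Λ (rbar ^ (p + 1))
      · rw [if_pos hcond]
        apply EMetric.diam_le
        intro a ha b hb
        rw [edist_dist]
        apply ENNReal.ofReal_le_ofReal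
        exact key _ (hρp0 p).le uv.1 uv.2 hcond.1.1 hcond.2.1 a ha b hb
      · rw [if_neg hcond]
        exact Metric.ediam_empty.le.trans zero_le
    have hcover : ∀ p : ℕ, B ⊆ ⋃ uv, tset p uv := by
      intro p t ht
      obtain ⟨u, v, hu, hv, htB⟩ := hcov _ (hρp0 p) (hρp1 p) t ht
      refine Set.mem_iUnion.2 ⟨(u, v), ?_⟩
      simp only [htset_def]
      rw [if_pos ⟨hu, hv⟩]
      exact htB
    have hrtend : Filter.Tendsto (fun p : ℕ => ENNReal.ofReal (c₁ * rbar ^ (p + 1)))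
        Filter.atTop (nhds 0) := by
      have h0 : Filter.Tendsto (fun p : ℕ => c₁ * rbar ^ (p + 1)) Filter.atTop (nhds 0) := by
        have h2 := (tendsto_pow_atTop_nhds_zero_of_lt_one hrbar0.le hrbar1).const_mul (c₁ * rbar)
        rw [mul_zero] at h2
        refine h2.congr (fun p => ?_)
        rw [pow_succ]
        ring
      have h3 := ENNReal.tendsto_ofReal (a := 0) h0
      rwa [ENNReal.ofReal_zero] at h3
    have hle := Measure.hausdorffMeasure_le_liminf_tsum
      (ι := fun _ : ℕ => (List (Fin m) × List (Fin m))) dd B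
      (fun p => ENNReal.ofReal (c₁ * rbar ^ (p + 1))) hrtend tset
      (Filter.Eventually.of_forall hdiam) (Filter.Eventually.of_forall hcover)
    refine le_trans hle ?_
    have hexp : ∀ p : ℕ, ((rbar ^ (p + 1) : ℝ)) ^ (dd - 2 * s) = q ^ (p + 1) := by
      intro p
      rw [hq_def, ← Real.rpow_natCast rbar (p + 1), ← Real.rpow_mul hrbar0.le,
        mul_comm ((p + 1 : ℕ) : ℝ) (dd - 2 * s), Real.rpow_mul hrbar0.le,
        Real.rpow_natCast]
    have hsump : ∀ p : ℕ,
        (∑' uv : List (Fin m) × List (Fin m), EMetric.diam (tset p uv) ^ dd)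
          ≤ ENNReal.ofReal (M * q ^ (p + 1)) := by
      intro p
      set ρ := (rbar : ℝ) ^ (p + 1) with hρ_def
      set f : List (Fin m) → ENNReal :=
        fun u => if u ∈ Λ ρ then ENNReal.ofReal ((u.map r).prod ^ s) else 0 with hf_def
      have hterm : ∀ uv : List (Fin m) × List (Fin m),
          EMetric.diam (tset p uv) ^ dd
            ≤ ENNReal.ofReal (M * q ^ (p + 1)) * (f uv.1 * f uv.2) := by
        intro uv
        by_cases hcond : uv.1 ∈ Λ ρ ∧ uv.2 ∈ Λ ρ
        · have hP1 : 0 < ((uv.1).map r).prod := PDG.wordProd_pos hr0 _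
          have hP2 : 0 < ((uv.2).map r).prod := PDG.wordProd_pos hr0 _
          have hlow1 : ρ * rm < ((uv.1).map r).prod := hΛlow ρ (hρp0 p) (hρp1 p) _ hcond.1
          have hlow2 : ρ * rm < ((uv.2).map r).prod := hΛlow ρ (hρp0 p) (hρp1 p) _ hcond.2
          have hru1 : ρ ≤ ((uv.1).map r).prod / rm := by
            rw [le_div_iff₀ hrm0]; exact hlow1.le
          have hru2 : ρ ≤ ((uv.2).map r).prod / rm := by
            rw [le_div_iff₀ hrm0]; exact hlow2.le
          have h41 : ρ ^ s ≤ ((uv.1).map r).prod ^ s / rm ^ s := by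
            rw [← Real.div_rpow hP1.le hrm0.le]
            exact Real.rpow_le_rpow (hρp0 p).le hru1 hs0.le
          have h42 : ρ ^ s ≤ ((uv.2).map r).prod ^ s / rm ^ s := by
            rw [← Real.div_rpow hP2.le hrm0.le]
            exact Real.rpow_le_rpow (hρp0 p).le hru2 hs0.le
          have hρdd : ρ ^ dd = ρ ^ (dd - 2 * s) * ρ ^ s * ρ ^ s := by
            rw [← Real.rpow_add (hρp0 p), ← Real.rpow_add (hρp0 p)]
            congr 1
            ring
          have hreal : (c₁ * ρ) ^ dd ≤ M * q ^ (p + 1) *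
              (((uv.1).map r).prod ^ s * ((uv.2).map r).prod ^ s) := by
            rw [Real.mul_rpow hc₁0.le (hρp0 p).le, hρdd]
            calc c₁ ^ dd * (ρ ^ (dd - 2 * s) * ρ ^ s * ρ ^ s)
                = c₁ ^ dd * ρ ^ (dd - 2 * s) * ρ ^ s * ρ ^ s := by ring
              _ ≤ c₁ ^ dd * ρ ^ (dd - 2 * s) * (((uv.1).map r).prod ^ s / rm ^ s)
                  * (((uv.2).map r).prod ^ s / rm ^ s) := by
                  have hbase : 0 ≤ c₁ ^ dd * ρ ^ (dd - 2 * s) :=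
                    mul_nonneg (Real.rpow_nonneg hc₁0.le _) (Real.rpow_nonneg (hρp0 p).le _)
                  have hρs : 0 ≤ ρ ^ s := Real.rpow_nonneg (hρp0 p).le _
                  have hd2 : 0 ≤ ((uv.2).map r).prod ^ s / rm ^ s :=
                    div_nonneg (Real.rpow_nonneg hP2.le _) (Real.rpow_nonneg hrm0.le _)
                  calc c₁ ^ dd * ρ ^ (dd - 2 * s) * ρ ^ s * ρ ^ s
                      ≤ c₁ ^ dd * ρ ^ (dd - 2 * s) * ρ ^ s
                        * (((uv.2).map r).prod ^ s / rm ^ s) := by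
                        apply mul_le_mul_of_nonneg_left h42
                        exact mul_nonneg hbase hρs
                    _ ≤ c₁ ^ dd * ρ ^ (dd - 2 * s) * (((uv.1).map r).prod ^ s / rm ^ s)
                        * (((uv.2).map r).prod ^ s / rm ^ s) := by
                        apply mul_le_mul_of_nonneg_right _ hd2
                        exact mul_le_mul_of_nonneg_left h41 hbase
              _ = M * ρ ^ (dd - 2 * s) *
                  (((uv.1).map r).prod ^ s * ((uv.2).map r).prod ^ s) := by
                  rw [hM_def]
                  have hrms : (rm:ℝ) ^ s ≠ 0 := ne_of_gt (Real.rpow_pos_of_pos hrm0 _)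
                  field_simp
              _ = M * q ^ (p + 1) *
                  (((uv.1).map r).prod ^ s * ((uv.2).map r).prod ^ s) := by
                  rw [hρ_def, hexp p]
          calc EMetric.diam (tset p uv) ^ dd
              ≤ ENNReal.ofReal (c₁ * ρ) ^ dd := by
                apply ENNReal.rpow_le_rpow _ hdd0.le
                exact hdiam p uv
            _ = ENNReal.ofReal ((c₁ * ρ) ^ dd) := by
                rw [ENNReal.ofReal_rpow_of_pos (by positivity)]
            _ ≤ ENNReal.ofReal (M * q ^ (p + 1) *
                  (((uv.1).map r).prod ^ s * ((uv.2).map r).prod ^ s)) :=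
                ENNReal.ofReal_le_ofReal hreal
            _ = ENNReal.ofReal (M * q ^ (p + 1)) * (f uv.1 * f uv.2) := by
                rw [hf_def]
                simp only [if_pos hcond.1, if_pos hcond.2]
                rw [ENNReal.ofReal_mul (by positivity), ENNReal.ofReal_mul
                  (Real.rpow_nonneg (PDG.wordProd_pos hr0 _).le _)]
        · have hz : tset p uv = ∅ := by
            simp only [htset_def]
            rw [if_neg ?hc]
            case hc =>
              rw [hρ_def] at hcond
              exact hcond
          rw [hz]
          rw [show EMetric.diam (∅ : Set (EuclideanSpace ℝ (Fin n))) = 0 from Metric.ediam_empty]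
          rw [ENNReal.zero_rpow_of_pos hdd0]
          exact zero_le
      calc (∑' uv : List (Fin m) × List (Fin m), EMetric.diam (tset p uv) ^ dd)
          ≤ ∑' uv : List (Fin m) × List (Fin m),
              ENNReal.ofReal (M * q ^ (p + 1)) * (f uv.1 * f uv.2) :=
            ENNReal.tsum_le_tsum hterm
        _ = ENNReal.ofReal (M * q ^ (p + 1)) *
              ∑' uv : List (Fin m) × List (Fin m), f uv.1 * f uv.2 :=
            ENNReal.tsum_mul_left
        _ = ENNReal.ofReal (M * q ^ (p + 1)) *
              ((∑' u : List (Fin m), f u) * (∑' u : List (Fin m), f u)) := by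
            congr 1
            rw [ENNReal.tsum_prod']
            calc (∑' (a : List (Fin m)) (b : List (Fin m)), f a * f b)
                = ∑' a : List (Fin m), f a * (∑' u : List (Fin m), f u) := by
                  apply tsum_congr
                  intro a
                  exact ENNReal.tsum_mul_left
              _ = (∑' u : List (Fin m), f u) * (∑' u : List (Fin m), f u) :=
                  ENNReal.tsum_mul_right
        _ ≤ ENNReal.ofReal (M * q ^ (p + 1)) * (1 * 1) := by
            gcongr <;> exact hf ρ (hρp0 p) (hρp1 p)
        _ = ENNReal.ofReal (M * q ^ (p + 1)) := by rw [mul_one, mul_one]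
    calc Filter.liminf
          (fun p : ℕ => ∑' uv : List (Fin m) × List (Fin m),
            EMetric.diam (tset p uv) ^ dd) Filter.atTop
        ≤ Filter.liminf (fun p : ℕ => ENNReal.ofReal (M * q ^ (p + 1))) Filter.atTop :=
          Filter.liminf_le_liminf (Filter.Eventually.of_forall hsump)
      _ = 0 := by
          have h0 : Filter.Tendsto (fun p : ℕ => M * q ^ (p + 1)) Filter.atTop (nhds 0) := by
            have h2 := (tendsto_pow_atTop_nhds_zero_of_lt_one hq0 hq1).const_mul (M * q)
            rw [mul_zero] at h2
            refine h2.congr (fun p => ?_)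
            rw [pow_succ]
            ring
          have h3 := ENNReal.tendsto_ofReal (a := 0) h0
          rw [ENNReal.ofReal_zero] at h3
          exact h3.liminf_eq
  refine dimH_le fun d' hd' => ?_
  by_contra hcon
  push_neg at hcon
  have hreal : 2 * s < (d' : ℝ) := by
    rw [← ENNReal.ofReal_coe_nnreal] at hcon
    exact (ENNReal.ofReal_lt_ofReal_iff_of_nonneg (by positivity)).1 hcon
  rw [hmz (d' : ℝ) hreal] at hd'
  exact ENNReal.zero_ne_top hd'
end

section
/- Let S_t = {S1, …, S_{m−1}, S_{m,t}} be a system of contractions of ℝⁿ where only the last map depends on the parameter: S_{m,t}(x) = S_m(x) + t, t ∈ ℝⁿ. Let rk = Lip Sk, r̄ = max rk, and let K_t be the attractor of S_t. Fix 1 ≤ k < m. If rk + rm + r̄ < 1 and the similarity dimension s_r < n/2, then for Lebesgue-almost all t ∈ ℝⁿ, S_k(K_t) ∩ S_{m,t}(K_t) = ∅. -/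
open Set MeasureTheory

open Metric ENNReal NNReal

set_option maxHeartbeats 1000000

namespace TLM

variable {n m : ℕ}

/-- The parametrized maps: the last one is translated by `t`. -/
noncomputable def Sfun (S : Fin (m + 1) → EuclideanSpace ℝ (Fin n) → EuclideanSpace ℝ (Fin n))
    (t : EuclideanSpace ℝ (Fin n)) (i : Fin (m + 1)) (x : EuclideanSpace ℝ (Fin n)) :
    EuclideanSpace ℝ (Fin n) :=
  if i = Fin.last m then S i x + t else S i x

/-- Iterated composition along a word. -/
noncomputable def comp (S : Fin (m + 1) → EuclideanSpace ℝ (Fin n) → EuclideanSpace ℝ (Fin n))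
    (t : EuclideanSpace ℝ (Fin n)) : List (Fin (m + 1)) → EuclideanSpace ℝ (Fin n) →
    EuclideanSpace ℝ (Fin n)
  | [], x => x
  | i :: w, x => Sfun S t i (comp S t w x)

/-- Product of the contraction ratios along a word. -/
def rprod (r : Fin (m + 1) → ℝ) (w : List (Fin (m + 1))) : ℝ := (w.map r).prod

@[simp] lemma rprod_nil (r : Fin (m + 1) → ℝ) : rprod r [] = 1 := rfl

@[simp] lemma rprod_cons (r : Fin (m + 1) → ℝ) (i) (w) :
    rprod r (i :: w) = r i * rprod r w := by simp [rprod]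

lemma rprod_pos {r : Fin (m + 1) → ℝ} (hr0 : ∀ i, 0 < r i) (w) : 0 < rprod r w := by
  induction w with
  | nil => norm_num
  | cons i w ih => simpa using mul_pos (hr0 i) ih

/-- The stopping-time section of the tree of words at scale `δ`, with fuel. -/
noncomputable def sec (r : Fin (m + 1) → ℝ) : ℕ → ℝ → Finset (List (Fin (m + 1)))
  | 0, _ => {[]}
  | p + 1, δ =>
    if 1 ≤ δ then {[]}
    else Finset.univ.biUnion fun i => (sec r p (δ / r i)).image (i :: ·)

lemma sec_sum {r : Fin (m + 1) → ℝ} (hr0 : ∀ i, 0 < r i) {s : ℝ}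
    (hs : ∑ i, r i ^ s = 1) : ∀ (p : ℕ) (δ : ℝ), ∑ w ∈ sec r p δ, rprod r w ^ s = 1 := by
  intro p
  induction p with
  | zero => intro δ; simp [sec]
  | succ p ih =>
    intro δ
    by_cases hδ : 1 ≤ δ
    · simp [sec, hδ]
    · rw [sec, if_neg hδ]
      rw [Finset.sum_biUnion]
      · have : ∀ i : Fin (m+1), ∑ w ∈ (sec r p (δ / r i)).image (i :: ·), rprod r w ^ s
            = r i ^ s := by
          intro i
          rw [Finset.sum_image (by intro a _ b _ h; simpa using h)]
          have : ∀ w ∈ sec r p (δ / r i), rprod r (i :: w) ^ s = r i ^ s * rprod r w ^ s := by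
            intro w _
            rw [rprod_cons, Real.mul_rpow (hr0 i).le (rprod_pos hr0 w).le]
          rw [Finset.sum_congr rfl this, ← Finset.mul_sum, ih (δ / r i), mul_one]
        rw [Finset.sum_congr rfl (fun i _ => this i)]
        simpa using hs
      · intro a _ b _ hab
        simp only [Function.onFun]
        refine Finset.disjoint_left.2 ?_
        intro w hwa hwb
        simp only [Finset.mem_image] at hwa hwb
        obtain ⟨wa, -, rfl⟩ := hwa
        obtain ⟨wb, -, h⟩ := hwb
        exact hab (by simpa using (List.cons.injEq _ _ _ _ ▸ h).1.symm ▸ rfl)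

lemma sec_le {r : Fin (m + 1) → ℝ} {rbar : ℝ} (hr0 : ∀ i, 0 < r i)
    (hrbar : ∀ i, r i ≤ rbar) (hb0 : 0 < rbar) :
    ∀ (p : ℕ) (δ : ℝ), rbar ^ p ≤ δ → ∀ w ∈ sec r p δ, rprod r w ≤ δ := by
  intro p
  induction p with
  | zero => intro δ h w hw; simp only [sec, Finset.mem_singleton] at hw; subst hw; simpa using h
  | succ p ih =>
    intro δ h w hw
    by_cases hδ : 1 ≤ δ
    · simp only [sec, if_pos hδ, Finset.mem_singleton] at hw; subst hw; simpa using hδ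
    · rw [sec, if_neg hδ] at hw
      simp only [Finset.mem_biUnion, Finset.mem_image] at hw
      obtain ⟨i, -, v, hv, rfl⟩ := hw
      have hpi : rbar ^ p ≤ δ / r i := by
        rw [le_div_iff₀ (hr0 i)]
        calc rbar ^ p * r i ≤ rbar ^ p * rbar := by
              exact mul_le_mul_of_nonneg_left (hrbar i) (pow_nonneg hb0.le p)
          _ = rbar ^ (p + 1) := by ring
          _ ≤ δ := h
      have := ih (δ / r i) hpi v hv
      rw [rprod_cons]
      calc r i * rprod r v ≤ r i * (δ / r i) := by
            exact mul_le_mul_of_nonneg_left this (hr0 i).le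
        _ = δ := mul_div_cancel₀ δ (hr0 i).ne'

lemma sec_ge {r : Fin (m + 1) → ℝ} {rmin : ℝ} (hr0 : ∀ i, 0 < r i)
    (hrmin : ∀ i, rmin ≤ r i) (hm0 : 0 < rmin) :
    ∀ (p : ℕ) (δ : ℝ), 0 < δ → δ * rmin < 1 → ∀ w ∈ sec r p δ, δ * rmin ≤ rprod r w := by
  intro p
  induction p with
  | zero => intro δ hδ0 h w hw; simp only [sec, Finset.mem_singleton] at hw; subst hw
            simpa using h.le
  | succ p ih =>
    intro δ hδ0 h w hw
    by_cases hδ : 1 ≤ δ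
    · simp only [sec, if_pos hδ, Finset.mem_singleton] at hw; subst hw; simpa using h.le
    · rw [sec, if_neg hδ] at hw
      simp only [Finset.mem_biUnion, Finset.mem_image] at hw
      obtain ⟨i, -, v, hv, rfl⟩ := hw
      have hd0 : (0:ℝ) < δ / r i := div_pos hδ0 (hr0 i)
      have hinv : (δ / r i) * rmin < 1 := by
        calc (δ / r i) * rmin ≤ (δ / r i) * r i := by
              exact mul_le_mul_of_nonneg_left (hrmin i) hd0.le
          _ = δ := div_mul_cancel₀ δ (hr0 i).ne'
          _ < 1 := lt_of_not_ge hδ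
      have := ih (δ / r i) hd0 hinv v hv
      rw [rprod_cons]
      calc δ * rmin = r i * ((δ / r i) * rmin) := by
            rw [← mul_assoc, mul_div_cancel₀ δ (hr0 i).ne']
        _ ≤ r i * rprod r v := mul_le_mul_of_nonneg_left this (hr0 i).le

lemma sec_card {r : Fin (m + 1) → ℝ} {rmin s : ℝ} (hr0 : ∀ i, 0 < r i)
    (hrmin : ∀ i, rmin ≤ r i) (hm0 : 0 < rmin) (hs0 : 0 < s)
    (hsum1 : ∀ (p : ℕ) (δ : ℝ), ∑ w ∈ sec r p δ, rprod r w ^ s = 1)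
    (p : ℕ) (δ : ℝ) (hδ0 : 0 < δ) (h : δ * rmin < 1) :
    ((sec r p δ).card : ℝ) * (δ * rmin) ^ s ≤ 1 := by
  have key : ∀ w ∈ sec r p δ, (δ * rmin) ^ s ≤ rprod r w ^ s := by
    intro w hw
    exact Real.rpow_le_rpow (by positivity) (sec_ge hr0 hrmin hm0 p δ hδ0 h w hw) hs0.le
  calc ((sec r p δ).card : ℝ) * (δ * rmin) ^ s
      = ∑ _w ∈ sec r p δ, (δ * rmin) ^ s := by rw [Finset.sum_const, nsmul_eq_mul]
    _ ≤ ∑ w ∈ sec r p δ, rprod r w ^ s := Finset.sum_le_sum key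
    _ = 1 := hsum1 p δ

variable {S : Fin (m + 1) → EuclideanSpace ℝ (Fin n) → EuclideanSpace ℝ (Fin n)}
  {r : Fin (m + 1) → ℝ} {rbar : ℝ}

lemma sfun_lip_x (hLip : ∀ i x y, ‖S i x - S i y‖ ≤ r i * ‖x - y‖) (t i x y) :
    ‖Sfun S t i x - Sfun S t i y‖ ≤ r i * ‖x - y‖ := by
  unfold Sfun
  split
  · simpa [add_sub_add_right_eq_sub] using hLip i x y
  · exact hLip i x y

lemma sfun_lip_t (t t' : EuclideanSpace ℝ (Fin n)) (i x) :
    ‖Sfun S t i x - Sfun S t' i x‖ ≤ ‖t - t'‖ := by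
  unfold Sfun
  split
  · simp [add_sub_add_left_eq_sub]
  · simp

lemma comp_lip_x (hr0 : ∀ i, 0 < r i) (hLip : ∀ i x y, ‖S i x - S i y‖ ≤ r i * ‖x - y‖)
    (t : EuclideanSpace ℝ (Fin n)) (w : List (Fin (m + 1))) (x y) :
    ‖comp S t w x - comp S t w y‖ ≤ rprod r w * ‖x - y‖ := by
  induction w with
  | nil => simp [comp]
  | cons i w ih =>
    calc ‖comp S t (i :: w) x - comp S t (i :: w) y‖
        ≤ r i * ‖comp S t w x - comp S t w y‖ := sfun_lip_x hLip t i _ _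
      _ ≤ r i * (rprod r w * ‖x - y‖) := mul_le_mul_of_nonneg_left ih (hr0 i).le
      _ = rprod r (i :: w) * ‖x - y‖ := by rw [rprod_cons]; ring

lemma comp_lip_t (hr0 : ∀ i, 0 < r i) (hrbar : ∀ i, r i ≤ rbar) (hb1 : rbar < 1)
    (hLip : ∀ i x y, ‖S i x - S i y‖ ≤ r i * ‖x - y‖)
    (t t' : EuclideanSpace ℝ (Fin n)) (w : List (Fin (m + 1))) (x) :
    ‖comp S t w x - comp S t' w x‖ ≤ (1 - rbar)⁻¹ * ‖t - t'‖ := by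
  have hb0 : 0 < 1 - rbar := by linarith
  induction w with
  | nil => simp [comp]; positivity
  | cons i w ih =>
    have h1 : ‖comp S t (i :: w) x - comp S t' (i :: w) x‖
        ≤ ‖Sfun S t i (comp S t w x) - Sfun S t i (comp S t' w x)‖
          + ‖Sfun S t i (comp S t' w x) - Sfun S t' i (comp S t' w x)‖ := by
      have := norm_sub_le_norm_sub_add_norm_sub (Sfun S t i (comp S t w x))
        (Sfun S t i (comp S t' w x)) (Sfun S t' i (comp S t' w x))
      simpa [comp] using this
    have h2 : ‖Sfun S t i (comp S t w x) - Sfun S t i (comp S t' w x)‖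
        ≤ r i * ((1 - rbar)⁻¹ * ‖t - t'‖) :=
      le_trans (sfun_lip_x hLip t i _ _) (mul_le_mul_of_nonneg_left ih (hr0 i).le)
    have h3 := sfun_lip_t (S := S) t t' i (comp S t' w x)
    have h4 : r i * ((1 - rbar)⁻¹ * ‖t - t'‖) + ‖t - t'‖ ≤ (1 - rbar)⁻¹ * ‖t - t'‖ := by
      have hr : r i ≤ rbar := hrbar i
      have hn : (0:ℝ) ≤ ‖t - t'‖ := norm_nonneg _
      have key : r i * (1 - rbar)⁻¹ + 1 ≤ (1 - rbar)⁻¹ := by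
        rw [← sub_nonneg]
        have : (1 - rbar)⁻¹ - (r i * (1 - rbar)⁻¹ + 1) = (rbar - r i) * (1 - rbar)⁻¹ := by
          field_simp
          ring
        rw [this]
        exact mul_nonneg (by linarith) (by positivity)
      nlinarith [mul_le_mul_of_nonneg_right key hn]
    linarith

lemma comp_mem {K : Set (EuclideanSpace ℝ (Fin n))} {t : EuclideanSpace ℝ (Fin n)}
    (hcl : ∀ i x, x ∈ K → Sfun S t i x ∈ K) (w : List (Fin (m + 1))) {x} (hx : x ∈ K) :
    comp S t w x ∈ K := by
  induction w with
  | nil => exact hx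
  | cons i w ih => exact hcl i _ ih

lemma sec_cover {K : Set (EuclideanSpace ℝ (Fin n))} {t : EuclideanSpace ℝ (Fin n)}
    (hdec : ∀ x ∈ K, ∃ i, ∃ y ∈ K, x = Sfun S t i y) :
    ∀ (p : ℕ) (δ : ℝ), ∀ x ∈ K, ∃ w ∈ sec r p δ, ∃ y ∈ K, x = comp S t w y := by
  intro p
  induction p with
  | zero => intro δ x hx; exact ⟨[], by simp [sec], x, hx, rfl⟩
  | succ p ih =>
    intro δ x hx
    by_cases hδ : 1 ≤ δ
    · exact ⟨[], by simp [sec, hδ], x, hx, rfl⟩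
    · obtain ⟨i, y, hy, rfl⟩ := hdec x hx
      obtain ⟨w, hw, z, hz, rfl⟩ := ih (δ / r i) y hy
      refine ⟨i :: w, ?_, z, hz, rfl⟩
      rw [sec, if_neg hδ]
      exact Finset.mem_biUnion.2 ⟨i, Finset.mem_univ i, Finset.mem_image_of_mem _ hw⟩

/-- A uniform bound on the attractor. -/
lemma K_bound {K : Set (EuclideanSpace ℝ (Fin n))} {t : EuclideanSpace ℝ (Fin n)} {A : ℝ}
    (hr0 : ∀ i, 0 < r i) (hrbar : ∀ i, r i ≤ rbar) (hb1 : rbar < 1)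
    (hLip : ∀ i x y, ‖S i x - S i y‖ ≤ r i * ‖x - y‖)
    (hA : ∀ i, ‖S i (0 : EuclideanSpace ℝ (Fin n))‖ ≤ A)
    (hne : K.Nonempty) (hcomp : IsCompact K)
    (hdec : ∀ x ∈ K, ∃ i, ∃ y ∈ K, x = Sfun S t i y) :
    ∀ x ∈ K, ‖x‖ ≤ (A + ‖t‖) / (1 - rbar) := by
  have hb : 0 < 1 - rbar := by linarith
  obtain ⟨x₀, hx₀K, hx₀⟩ := hcomp.exists_isMaxOn hne (continuous_norm.continuousOn)
  have hmax : ∀ x ∈ K, ‖x‖ ≤ ‖x₀‖ := fun x hx => hx₀ hx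
  have hx0b : ‖x₀‖ ≤ (A + ‖t‖) / (1 - rbar) := by
    obtain ⟨i, y, hyK, hxy⟩ := hdec x₀ hx₀K
    have h1 : ‖Sfun S t i y‖ ≤ ‖S i y‖ + ‖t‖ := by
      unfold Sfun
      split
      · exact norm_add_le _ _
      · simp [le_add_iff_nonneg_right, norm_nonneg]
    have h2 : ‖S i y‖ ≤ r i * ‖y‖ + A := by
      have := hLip i y 0
      have h3 := norm_sub_norm_le (S i y) (S i 0)
      have := hA i
      simp only [sub_zero] at *
      linarith
    have h4 : r i * ‖y‖ ≤ rbar * ‖x₀‖ := by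
      have := hmax y hyK
      have h5 : r i * ‖y‖ ≤ rbar * ‖y‖ :=
        mul_le_mul_of_nonneg_right (hrbar i) (norm_nonneg _)
      have h6 : rbar * ‖y‖ ≤ rbar * ‖x₀‖ := by
        refine mul_le_mul_of_nonneg_left this ?_
        exact le_trans (hr0 0).le (hrbar 0)
      linarith
    have hx0 : ‖x₀‖ = ‖Sfun S t i y‖ := by rw [hxy]
    have : ‖x₀‖ ≤ rbar * ‖x₀‖ + A + ‖t‖ := by linarith
    rw [le_div_iff₀ hb]
    linarith
  intro x hx
  exact le_trans (hmax x hx) hx0b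

end TLM

open TLM in
/-- Translating the last map of the system: if `r_k + r_m + r̄ < 1` and the
similarity dimension is `< n/2`, then for almost all translation vectors `t`
the pieces `S_k(K_t)` and `S_{m,t}(K_t)` are disjoint. -/
theorem translate_last_map_ae {n m : ℕ}
    (S : Fin (m + 1) → EuclideanSpace ℝ (Fin n) → EuclideanSpace ℝ (Fin n))
    (r : Fin (m + 1) → ℝ) (rbar : ℝ)
    (hr0 : ∀ i, 0 < r i) (hr1 : ∀ i, r i < 1)
    (hrbar : ∀ i, r i ≤ rbar)
    (hLip : ∀ i x y, ‖S i x - S i y‖ ≤ r i * ‖x - y‖)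
    (K : EuclideanSpace ℝ (Fin n) → Set (EuclideanSpace ℝ (Fin n)))
    (hK : ∀ t, (K t).Nonempty ∧ IsCompact (K t) ∧
      K t = (⋃ i : Fin m, S i.castSucc '' K t) ∪
        (fun x => S (Fin.last m) x + t) '' K t)
    (k : Fin (m + 1)) (hk : k ≠ Fin.last m)
    (hsum : r k + r (Fin.last m) + rbar < 1)
    (s : ℝ) (hs : ∑ i, r i ^ s = 1) (hsn : s < n / 2) :
    volume {t : EuclideanSpace ℝ (Fin n) |
      (S k '' K t ∩ (fun x => S (Fin.last m) x + t) '' K t).Nonempty} = 0 := by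
  classical
  rcases Nat.eq_zero_or_pos m with hm | hm
  · subst hm
    refine absurd ?_ hk
    have hlt := k.isLt
    ext
    simp only [Fin.val_last]
    omega
  set B : Set (EuclideanSpace ℝ (Fin n)) := {t : EuclideanSpace ℝ (Fin n) |
      (S k '' K t ∩ (fun x => S (Fin.last m) x + t) '' K t).Nonempty} with hBdef
  clear_value B
  -- basic constants
  have hb1 : rbar < 1 := by have := hr0 k; have := hr0 (Fin.last m); linarith
  have hb0 : 0 < rbar := lt_of_lt_of_le (hr0 0) (hrbar 0)
  have h1b : 0 < 1 - rbar := by linarith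
  set rmin := Finset.univ.inf' Finset.univ_nonempty r with hrmin_def
  have hrmin : ∀ i, rmin ≤ r i := fun i => Finset.inf'_le r (Finset.mem_univ i)
  have hm0 : 0 < rmin := (Finset.lt_inf'_iff _).2 fun i _ => hr0 i
  have hm1 : rmin < 1 := lt_of_le_of_lt (hrmin 0) (hr1 0)
  clear_value rmin
  have hs0 : 0 < s := by
    by_contra hneg
    push_neg at hneg
    have hge : ∀ i : Fin (m+1), (1:ℝ) ≤ r i ^ s := fun i =>
      Real.one_le_rpow_of_pos_of_le_one_of_nonpos (hr0 i) (hr1 i).le hneg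
    have hsum2 : ((m:ℝ)+1) ≤ ∑ i, r i ^ s := by
      calc ((m:ℝ)+1) = ∑ _i : Fin (m+1), (1:ℝ) := by simp
        _ ≤ _ := Finset.sum_le_sum (fun i _ => hge i)
    rw [hs] at hsum2
    have hm' : (1:ℝ) ≤ (m:ℝ) := by exact_mod_cast hm
    linarith
  -- decomposition and closure properties of the attractor
  have hcl : ∀ t i x, x ∈ K t → Sfun S t i x ∈ K t := by
    intro t i x hx
    rw [(hK t).2.2]
    by_cases hi : i = Fin.last m
    · subst hi
      exact Set.mem_union_right _ ⟨x, hx, by simp [Sfun]⟩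
    · obtain ⟨j, hj⟩ := Fin.exists_castSucc_eq.2 hi
      refine Set.mem_union_left _ (Set.mem_iUnion.2 ⟨j, ⟨x, hx, ?_⟩⟩)
      rw [hj]; simp [Sfun, hi]
  have hdec : ∀ t, ∀ x ∈ K t, ∃ i, ∃ y ∈ K t, x = Sfun S t i y := by
    intro t x hx
    rw [(hK t).2.2] at hx
    rcases hx with hx | hx
    · obtain ⟨j, hj⟩ := Set.mem_iUnion.1 hx
      obtain ⟨y, hy, hxy⟩ := hj
      exact ⟨j.castSucc, y, hy, by
        rw [← hxy]; simp [Sfun, (Fin.castSucc_lt_last j).ne]⟩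
    · obtain ⟨y, hy, hxy⟩ := hx
      exact ⟨Fin.last m, y, hy, by rw [← hxy]; simp [Sfun]⟩
  -- bound on the maps at the origin
  set A := Finset.univ.sup' Finset.univ_nonempty
    (fun i => ‖S i (0 : EuclideanSpace ℝ (Fin n))‖) with hAdef
  have hA : ∀ i, ‖S i (0 : EuclideanSpace ℝ (Fin n))‖ ≤ A :=
    fun i => Finset.le_sup' (fun j => ‖S j (0 : EuclideanSpace ℝ (Fin n))‖) (Finset.mem_univ i)
  have hA0 : 0 ≤ A := le_trans (norm_nonneg _) (hA 0)
  clear_value A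
  -- the main per-radius claim
  have HR : ∀ R : ℕ, volume (B ∩ closedBall (0 : EuclideanSpace ℝ (Fin n)) (R:ℝ)) = 0 := by
    intro R
    set M := (A + (R:ℝ)) / (1 - rbar) with hMdef
    have hM0 : 0 ≤ M := by positivity
    have boundK : ∀ t : EuclideanSpace ℝ (Fin n), ‖t‖ ≤ (R:ℝ) →
        ∀ x ∈ K t, ‖x‖ ≤ M := by
      intro t ht x hx
      have h1 := K_bound hr0 hrbar hb1 hLip hA (hK t).1 (hK t).2.1 (hdec t) x hx
      refine le_trans h1 ?_
      rw [hMdef]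
      exact (div_le_div_iff_of_pos_right h1b).2 (by linarith)
    clear_value M
    set c := (r k + r (Fin.last m)) / (1 - rbar) with hcdef
    have hc0 : 0 ≤ c := by
      have := hr0 k; have := hr0 (Fin.last m); positivity
    have hc1 : c < 1 := (div_lt_one h1b).2 (by linarith)
    have h1c : 0 < 1 - c := by linarith
    clear_value c
    set C := 2 * M * (r k + r (Fin.last m)) / (1 - c) with hCdef
    have hC0 : 0 ≤ C := by
      have := hr0 k; have := hr0 (Fin.last m); positivity
    clear_value C
    -- the diameter estimate
    have diam : ∀ δ : ℝ, 0 ≤ δ → ∀ (w v : List (Fin (m+1)))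
        (t t' x y x' y' : EuclideanSpace ℝ (Fin n)),
        ‖t‖ ≤ (R:ℝ) → ‖t'‖ ≤ (R:ℝ) → x ∈ K t → y ∈ K t → x' ∈ K t' → y' ∈ K t' →
        rprod r w ≤ δ → rprod r v ≤ δ →
        t = S k (comp S t w x) - S (Fin.last m) (comp S t v y) →
        t' = S k (comp S t' w x') - S (Fin.last m) (comp S t' v y') →
        ‖t - t'‖ ≤ C * δ := by
      intro δ hδ w v t t' x y x' y' htR htR' hxK hyK hxK' hyK' hw hv ht ht'
      set d := ‖t - t'‖ with hd
      have hstep : ∀ (u : List (Fin (m+1))) (a a' : EuclideanSpace ℝ (Fin n)),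
          a ∈ K t → a' ∈ K t' → rprod r u ≤ δ →
          ‖comp S t u a - comp S t' u a'‖ ≤ δ * (2*M) + (1-rbar)⁻¹ * d := by
        intro u a a' haK haK' hu
        have t1 : ‖comp S t u a - comp S t u a'‖ ≤ rprod r u * ‖a - a'‖ :=
          comp_lip_x hr0 hLip t u a a'
        have t2 : ‖comp S t u a' - comp S t' u a'‖ ≤ (1-rbar)⁻¹ * d :=
          comp_lip_t hr0 hrbar hb1 hLip t t' u a'
        have t3 : ‖a - a'‖ ≤ 2 * M := by
          have := boundK t htR a haK
          have := boundK t' htR' a' haK'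
          have := norm_sub_le a a'
          linarith
        have t4 : rprod r u * ‖a - a'‖ ≤ δ * (2*M) := by
          have h0 : 0 ≤ rprod r u := (rprod_pos hr0 u).le
          exact mul_le_mul hu t3 (norm_nonneg _) hδ
        have := norm_sub_le_norm_sub_add_norm_sub (comp S t u a) (comp S t u a')
          (comp S t' u a')
        linarith
      have hw1 : ‖S k (comp S t w x) - S k (comp S t' w x')‖
          ≤ r k * (δ * (2*M) + (1-rbar)⁻¹ * d) :=
        le_trans (hLip k _ _) (mul_le_mul_of_nonneg_left (hstep w x x' hxK hxK' hw) (hr0 k).le)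
      have hv1 : ‖S (Fin.last m) (comp S t v y) - S (Fin.last m) (comp S t' v y')‖
          ≤ r (Fin.last m) * (δ * (2*M) + (1-rbar)⁻¹ * d) :=
        le_trans (hLip (Fin.last m) _ _)
          (mul_le_mul_of_nonneg_left (hstep v y y' hyK hyK' hv) (hr0 (Fin.last m)).le)
      have htt : d ≤ ‖S k (comp S t w x) - S k (comp S t' w x')‖
          + ‖S (Fin.last m) (comp S t v y) - S (Fin.last m) (comp S t' v y')‖ := by
        rw [hd]
        nth_rewrite 1 [ht, ht']
        rw [sub_sub_sub_comm]
        exact norm_sub_le _ _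
      have hcc : c = (r k + r (Fin.last m)) * (1-rbar)⁻¹ := by
        rw [hcdef, div_eq_mul_inv]
      have hd1 : d ≤ (r k + r (Fin.last m)) * (δ * (2*M) + (1-rbar)⁻¹ * d) := by
        calc d ≤ _ + _ := htt
          _ ≤ r k * (δ * (2*M) + (1-rbar)⁻¹ * d)
              + r (Fin.last m) * (δ * (2*M) + (1-rbar)⁻¹ * d) := add_le_add hw1 hv1
          _ = (r k + r (Fin.last m)) * (δ * (2*M) + (1-rbar)⁻¹ * d) := (add_mul _ _ _).symm
      have e1 : d ≤ 2*M*(r k + r (Fin.last m))*δ + c*d := by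
        calc d ≤ (r k + r (Fin.last m)) * (δ * (2*M) + (1-rbar)⁻¹ * d) := hd1
          _ = 2*M*(r k + r (Fin.last m))*δ
              + ((r k + r (Fin.last m)) * (1-rbar)⁻¹)*d := by ring
          _ = 2*M*(r k + r (Fin.last m))*δ + c*d := by rw [← hcc]
      have hCc : C * (1 - c) = 2 * M * (r k + r (Fin.last m)) := by
        rw [hCdef]; field_simp
      have h6 : d * (1-c) ≤ (2*M*(r k + r (Fin.last m))) * δ := by nlinarith [e1]
      have h7 : d * (1-c) ≤ (C*δ)*(1-c) := by
        calc d * (1-c) ≤ (2*M*(r k + r (Fin.last m))) * δ := h6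
          _ = (C * (1-c)) * δ := by rw [hCc]
          _ = (C*δ)*(1-c) := by ring
      exact le_of_mul_le_mul_right h7 h1c
    -- the per-scale measure estimate
    have est : ∀ δ : ℝ, 0 < δ → δ < 1 →
        volume (B ∩ closedBall (0 : EuclideanSpace ℝ (Fin n)) (R:ℝ)) ≤
          ENNReal.ofReal (((δ * rmin) ^ s)⁻¹) ^ 2 *
            (ENNReal.ofReal ((C * δ) ^ n) *
              volume (ball (0 : EuclideanSpace ℝ (Fin n)) 1)) := by
      intro δ hδ0 hδ1
      obtain ⟨p, hp⟩ := exists_pow_lt_of_lt_one hδ0 hb1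
      have hδrmin : δ * rmin < 1 := by nlinarith
      set W := sec r p δ with hW
      have hWle : ∀ w ∈ W, rprod r w ≤ δ := sec_le hr0 hrbar hb0 p δ hp.le
      set T : List (Fin (m+1)) → List (Fin (m+1)) → Set (EuclideanSpace ℝ (Fin n)) :=
        fun w v => {t | t ∈ closedBall (0 : EuclideanSpace ℝ (Fin n)) (R:ℝ) ∧
          ∃ x ∈ K t, ∃ y ∈ K t,
            t = S k (comp S t w x) - S (Fin.last m) (comp S t v y)} with hT
      have hcover : B ∩ closedBall (0 : EuclideanSpace ℝ (Fin n)) (R:ℝ) ⊆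
          ⋃ w ∈ W, ⋃ v ∈ W, T w v := by
        rintro t ⟨htB, htR⟩
        rw [hBdef] at htB
        obtain ⟨z, hz⟩ := htB
        obtain ⟨a, haK, haz⟩ := hz.1
        obtain ⟨b, hbK, hbz⟩ := hz.2
        have ht : t = S k a - S (Fin.last m) b :=
          eq_sub_of_add_eq' (hbz.trans haz.symm)
        obtain ⟨w, hwW, x, hxK, hax⟩ := sec_cover (hdec t) p δ a haK
        obtain ⟨v, hvW, y, hyK, hby⟩ := sec_cover (hdec t) p δ b hbK
        refine Set.mem_biUnion hwW (Set.mem_biUnion hvW ?_)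
        exact ⟨htR, x, hxK, y, hyK, by rw [← hax, ← hby]; exact ht⟩
      have hTvol : ∀ w ∈ W, ∀ v ∈ W, volume (T w v) ≤
          ENNReal.ofReal ((C*δ)^n) * volume (ball (0 : EuclideanSpace ℝ (Fin n)) 1) := by
        intro w hw v hv
        rcases (T w v).eq_empty_or_nonempty with hE | ⟨t₀, ht₀⟩
        · simp [hE]
        · have hsub : T w v ⊆ closedBall t₀ (C * δ) := by
            rintro t ⟨htR, x, hxK, y, hyK, ht⟩
            obtain ⟨ht₀R, x₀, hx₀K, y₀, hy₀K, ht₀e⟩ := ht₀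
            rw [mem_closedBall, dist_eq_norm]
            exact diam δ hδ0.le w v t t₀ x y x₀ y₀
              (by simpa [dist_eq_norm] using htR) (by simpa [dist_eq_norm] using ht₀R)
              hxK hyK hx₀K hy₀K (hWle w hw) (hWle v hv) ht ht₀e
          calc volume (T w v) ≤ volume (closedBall t₀ (C*δ)) := measure_mono hsub
            _ = ENNReal.ofReal ((C*δ)^n) *
                volume (ball (0 : EuclideanSpace ℝ (Fin n)) 1) := by
              rw [Measure.addHaar_closedBall _ _ (by positivity), finrank_euclideanSpace_fin]
      have hcard : ((W.card : ℝ≥0∞)) ≤ ENNReal.ofReal (((δ * rmin)^s)⁻¹) := by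
        have ha : (0:ℝ) < (δ*rmin)^s := Real.rpow_pos_of_pos (by positivity) s
        have h1 : (W.card : ℝ) ≤ ((δ * rmin)^s)⁻¹ := by
          have h2 := sec_card hr0 hrmin hm0 hs0 (sec_sum hr0 hs) p δ hδ0 hδrmin
          rw [← one_div]
          exact (le_div_iff₀ ha).2 h2
        calc (W.card : ℝ≥0∞) = ENNReal.ofReal (W.card : ℝ) := by
              rw [ENNReal.ofReal_natCast]
          _ ≤ _ := ENNReal.ofReal_le_ofReal h1
      calc volume (B ∩ closedBall (0 : EuclideanSpace ℝ (Fin n)) (R:ℝ))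
          ≤ volume (⋃ w ∈ W, ⋃ v ∈ W, T w v) := measure_mono hcover
        _ ≤ ∑ w ∈ W, volume (⋃ v ∈ W, T w v) := measure_biUnion_finset_le _ _
        _ ≤ ∑ w ∈ W, ∑ v ∈ W, volume (T w v) :=
            Finset.sum_le_sum (fun w _ => measure_biUnion_finset_le _ _)
        _ ≤ ∑ w ∈ W, ∑ v ∈ W, ENNReal.ofReal ((C*δ)^n) *
              volume (ball (0 : EuclideanSpace ℝ (Fin n)) 1) :=
            Finset.sum_le_sum (fun w hw => Finset.sum_le_sum (fun v hv => hTvol w hw v hv))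
        _ = (W.card : ℝ≥0∞) ^ 2 * (ENNReal.ofReal ((C*δ)^n) *
              volume (ball (0 : EuclideanSpace ℝ (Fin n)) 1)) := by
            simp [Finset.sum_const, nsmul_eq_mul]; ring
        _ ≤ ENNReal.ofReal (((δ * rmin) ^ s)⁻¹) ^ 2 * (ENNReal.ofReal ((C*δ)^n) *
              volume (ball (0 : EuclideanSpace ℝ (Fin n)) 1)) := by
            gcongr
    -- convert the bound to `D * δ ^ e`
    set e := (n:ℝ) - 2*s with hedef
    have he : 0 < e := by
      have : s < (n:ℝ)/2 := hsn
      rw [hedef]; linarith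
    clear_value e
    set D := ((rmin ^ s)⁻¹)^2 * C^n with hDdef
    have hD0 : 0 ≤ D := by positivity
    clear_value D
    have hbound : ∀ δ : ℝ, 0 < δ → δ < 1 →
        volume (B ∩ closedBall (0 : EuclideanSpace ℝ (Fin n)) (R:ℝ)) ≤
          ENNReal.ofReal (D * δ ^ e) *
            volume (ball (0 : EuclideanSpace ℝ (Fin n)) 1) := by
      intro δ h0 h1'
      refine le_trans (est δ h0 h1') ?_
      rw [← mul_assoc]
      gcongr ?_ * _
      have hreal : (((δ * rmin) ^ s)⁻¹)^2 * (C*δ)^n = D * δ ^ e := by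
        rw [Real.mul_rpow h0.le hm0.le, mul_inv, mul_pow, mul_pow, hDdef]
        have key : ((δ ^ s)⁻¹)^2 * δ^n = δ ^ e := by
          rw [← Real.rpow_neg h0.le, ← Real.rpow_natCast (δ ^ (-s)) 2,
            ← Real.rpow_natCast δ n, ← Real.rpow_mul h0.le, ← Real.rpow_add h0]
          congr 1
          rw [hedef]; push_cast; ring
        calc ((δ^s)⁻¹)^2 * ((rmin^s)⁻¹)^2 * (C^n * δ^n)
            = (((δ^s)⁻¹)^2 * δ^n) * (((rmin^s)⁻¹)^2 * C^n) := by ring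
          _ = δ ^ e * (((rmin^s)⁻¹)^2 * C^n) := by rw [key]
          _ = ((rmin^s)⁻¹)^2 * C^n * δ ^ e := by ring
      refine le_of_eq ?_
      rw [← hreal, ENNReal.ofReal_mul (by positivity), ENNReal.ofReal_pow (by positivity),
        ENNReal.ofReal_pow (by positivity)]
    -- let δ → 0
    have hV : volume (ball (0 : EuclideanSpace ℝ (Fin n)) 1) ≠ ⊤ :=
      measure_ball_lt_top.ne
    refine le_antisymm ?_ zero_le
    refine ENNReal.le_of_forall_pos_le_add (fun ε hε _ => ?_)
    rw [zero_add]
    set Vt := (volume (ball (0 : EuclideanSpace ℝ (Fin n)) 1)).toReal with hVt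
    have hVt0 : 0 ≤ Vt := ENNReal.toReal_nonneg
    clear_value Vt
    set η := (ε:ℝ) / (Vt + 1) with hη
    have hη0 : 0 < η := by positivity
    clear_value η
    obtain ⟨δ, hδ0, hδ1, hδe⟩ : ∃ δ:ℝ, 0 < δ ∧ δ < 1 ∧ D * δ ^ e ≤ η := by
      by_cases hD : D ≤ 0
      · refine ⟨1/2, by norm_num, by norm_num, ?_⟩
        have h2 : (0:ℝ) ≤ ((1:ℝ)/2) ^ e := (Real.rpow_pos_of_pos (by norm_num) e).le
        nlinarith
      · push_neg at hD
        set a := (η / D) ^ e⁻¹ with hadef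
        have ha0 : 0 < a := Real.rpow_pos_of_pos (by positivity) _
        clear_value a
        refine ⟨min (1/2) a, lt_min (by norm_num) ha0,
          lt_of_le_of_lt (min_le_left _ _) (by norm_num), ?_⟩
        have h1 : (min (1/2) a) ^ e ≤ a ^ e :=
          Real.rpow_le_rpow (lt_min (by norm_num) ha0).le (min_le_right _ _) he.le
        have h2 : a ^ e = η / D := by
          rw [hadef, ← Real.rpow_mul (by positivity), inv_mul_cancel₀ he.ne', Real.rpow_one]
        calc D * (min (1/2) a)^e ≤ D * (η/D) := by
              rw [← h2]; exact mul_le_mul_of_nonneg_left h1 hD.le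
          _ = η := mul_div_cancel₀ η hD.ne'
    calc volume (B ∩ closedBall (0 : EuclideanSpace ℝ (Fin n)) (R:ℝ))
        ≤ ENNReal.ofReal (D * δ^e) *
            volume (ball (0 : EuclideanSpace ℝ (Fin n)) 1) := hbound δ hδ0 hδ1
      _ ≤ ENNReal.ofReal η * ENNReal.ofReal Vt := by
          rw [hVt, ENNReal.ofReal_toReal hV]
          exact mul_le_mul' (ENNReal.ofReal_le_ofReal hδe) le_rfl
      _ = ENNReal.ofReal (η * Vt) := (ENNReal.ofReal_mul hη0.le).symm
      _ ≤ (ε : ℝ≥0∞) := by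
          rw [← ENNReal.ofReal_coe_nnreal]
          apply ENNReal.ofReal_le_ofReal
          have : η * (Vt + 1) = (ε:ℝ) := by
            rw [hη]; field_simp
          nlinarith
  -- conclude
  have hsub : B ⊆ ⋃ R : ℕ, (B ∩ closedBall (0 : EuclideanSpace ℝ (Fin n)) (R:ℝ)) := by
    intro t ht
    exact Set.mem_iUnion.2 ⟨⌈‖t‖⌉₊, ht, by
      simpa [mem_closedBall, dist_zero_right] using Nat.le_ceil ‖t‖⟩
  exact measure_mono_null hsub (measure_iUnion_null fun R => HR R)
end

section
/- Let S = {S1, S2, S3} with S1(x) = tx, S2(x) = bx, S3(x) = (x+8)/9 on [0,1], where b, t ∈ (0, 1/9), and let K be the attractor with pieces K3 = S3(K). Then K ∖ {0} = ∪_{m,n ≥ 0} S1^m S2^n (K3). -/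
open Set MeasureTheory

/-- For the system `{tx, bx, (x+8)/9}` with `t, b ∈ (0,1/9)` and attractor `K`,
`K ∖ {0} = ⋃_{m,n ≥ 0} S₁^m S₂^n (K₃)`. -/
theorem attractor_decomposition (t b : ℝ)
    (ht : t ∈ Ioo (0 : ℝ) (1 / 9)) (hb : b ∈ Ioo (0 : ℝ) (1 / 9))
    (K : Set ℝ) (hKne : K.Nonempty) (hKc : IsCompact K) (hKsub : K ⊆ Icc 0 1)
    (hK : K = (fun x => t * x) '' K ∪ (fun x => b * x) '' K ∪
      (fun x => (x + 8) / 9) '' K) :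
    K \ {0} = ⋃ (mi : ℕ) (ni : ℕ),
      ((fun x => t * x)^[mi] ∘ (fun x => b * x)^[ni]) ''
        ((fun x => (x + 8) / 9) '' K) := by
  obtain ⟨ht0, ht1⟩ := ht
  obtain ⟨hb0, hb1⟩ := hb
  have hS1 : ∀ x ∈ K, t * x ∈ K := by
    intro x hx; rw [hK]; exact Or.inl (Or.inl ⟨x, hx, rfl⟩)
  have hS2 : ∀ x ∈ K, b * x ∈ K := by
    intro x hx; rw [hK]; exact Or.inl (Or.inr ⟨x, hx, rfl⟩)
  have hS3 : ∀ x ∈ K, (x + 8) / 9 ∈ K := by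
    intro x hx; rw [hK]; exact Or.inr ⟨x, hx, rfl⟩
  have hbn : ∀ (n : ℕ) (z : ℝ), z ∈ K → b ^ n * z ∈ K := by
    intro n
    induction n with
    | zero => intro z hz; simpa using hz
    | succ n ih =>
      intro z hz
      have h : b ^ (n + 1) * z = b * (b ^ n * z) := by ring
      rw [h]
      exact hS2 _ (ih z hz)
  have htm : ∀ (m : ℕ) (z : ℝ), z ∈ K → t ^ m * z ∈ K := by
    intro m
    induction m with
    | zero => intro z hz; simpa using hz
    | succ m ih =>
      intro z hz
      have h : t ^ (m + 1) * z = t * (t ^ m * z) := by ring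
      rw [h]
      exact hS1 _ (ih z hz)
  have main : ∀ (n : ℕ), ∀ x ∈ K, 0 < x → 1 < 9 ^ n * x →
      ∃ (m k : ℕ) (y : ℝ), y ∈ K ∧ t ^ m * (b ^ k * ((y + 8) / 9)) = x := by
    intro n
    induction n with
    | zero =>
      intro x hx hx0 h1
      simp only [pow_zero, one_mul] at h1
      exact absurd h1 (not_lt.mpr (hKsub hx).2)
    | succ n ih =>
      intro x hx hx0 h1
      rw [hK] at hx
      have h9 : (0:ℝ) < 9 ^ n := by positivity
      rw [pow_succ] at h1
      rcases hx with (⟨x', hx', rfl⟩ | ⟨x', hx', rfl⟩) | ⟨y, hy, hyx⟩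
      · simp only at hx0 h1
        have hx'0 : 0 < x' := by nlinarith [(hKsub hx').1]
        have hn' : 1 < 9 ^ n * x' := by nlinarith [mul_pos h9 hx'0]
        obtain ⟨m, k, y, hy, heq⟩ := ih x' hx' hx'0 hn'
        exact ⟨m + 1, k, y, hy, by rw [pow_succ]; rw [← heq]; ring⟩
      · simp only at hx0 h1
        have hx'0 : 0 < x' := by nlinarith [(hKsub hx').1]
        have hn' : 1 < 9 ^ n * x' := by nlinarith [mul_pos h9 hx'0]
        obtain ⟨m, k, y, hy, heq⟩ := ih x' hx' hx'0 hn'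
        exact ⟨m, k + 1, y, hy, by rw [pow_succ]; rw [← heq]; ring⟩
      · exact ⟨0, 0, y, hy, by simpa using hyx⟩
  ext x
  simp only [mem_diff, mem_singleton_iff, mem_iUnion, mem_image,
    Function.comp_apply, mul_left_iterate]
  constructor
  · rintro ⟨hxK, hx0⟩
    have hxpos : 0 < x := lt_of_le_of_ne (hKsub hxK).1 (Ne.symm hx0)
    obtain ⟨n, hn⟩ := pow_unbounded_of_one_lt (1 / x) (by norm_num : (1:ℝ) < 9)
    have h1 : 1 < 9 ^ n * x := by
      rw [div_lt_iff₀ hxpos] at hn; linarith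
    obtain ⟨m, k, y, hy, heq⟩ := main n x hxK hxpos h1
    exact ⟨m, k, (y + 8) / 9, ⟨y, hy, rfl⟩, heq⟩
  · rintro ⟨m, k, z, ⟨y, hy, rfl⟩, rfl⟩
    have hzpos : 0 < (y + 8) / 9 := by linarith [(hKsub hy).1]
    refine ⟨htm m _ (hbn k _ (hS3 y hy)), ?_⟩
    exact ne_of_gt (mul_pos (pow_pos ht0 m) (mul_pos (pow_pos hb0 k) hzpos))
end

section
/- Let S = {S1, S2, S3} with S1(x) = tx, S2(x) = bx, S3(x) = (x+8)/9 on [0,1], where b, t ∈ (0,1/9), and attractor K, K3 = S3(K). The following are equivalent: (i) for all m, n ∈ ℕ, S1^m(K3) ∩ S2^n(K3) = ∅; (ii) K = {0} ∪ ⨆_{m,n ≥ 0} S1^m S2^n(K3) (disjoint union); (iii) for all m, n ∈ ℕ, S1^m(K) ∩ S2^n(K) = S1^m S2^n(K). -/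
open Set MeasureTheory


private lemma iter_mul (c : ℝ) (m : ℕ) (x : ℝ) : (fun x => c * x)^[m] x = c ^ m * x := by
  induction m generalizing x with
  | zero => simp
  | succ m ih => rw [Function.iterate_succ_apply', ih, pow_succ]; ring

private lemma iter_mul_image (c : ℝ) (m : ℕ) (S : Set ℝ) :
    (fun x => c * x)^[m] '' S = (fun x => c ^ m * x) '' S :=
  Set.image_congr fun x _ => iter_mul c m x

private lemma comp_image (t b : ℝ) (m n : ℕ) (S : Set ℝ) :
    ((fun x => t * x)^[m] ∘ (fun x => b * x)^[n]) '' S = (fun x => t ^ m * b ^ n * x) '' S := by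
  rw [Set.image_comp, iter_mul_image, iter_mul_image, ← Set.image_comp]
  exact Set.image_congr fun x _ => by simp [Function.comp, mul_assoc]

-- core comparison lemma: under (i) in scalar inequality form, exponents are forced
private lemma pieces_aux (t b : ℝ) (ht : t ∈ Ioo (0:ℝ) (1/9)) (hb : b ∈ Ioo (0:ℝ) (1/9))
    (K3 : Set ℝ) (hK3 : K3 ⊆ Icc (8/9 : ℝ) 1)
    (hi : ∀ m n : ℕ, 0 < m → 0 < n → ∀ y ∈ K3, ∀ z ∈ K3, t ^ m * y ≠ b ^ n * z)
    (p q p' q' : ℕ) (hp : p ≤ p') (y z : ℝ) (hy : y ∈ K3) (hz : z ∈ K3)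
    (heq : t ^ p * b ^ q * y = t ^ p' * b ^ q' * z) : p = p' ∧ q = q' := by
  obtain ⟨hy1, hy2⟩ := hK3 hy
  obtain ⟨hz1, hz2⟩ := hK3 hz
  obtain ⟨d, rfl⟩ := Nat.exists_eq_add_of_le hp
  have htne : t ^ p ≠ 0 := pow_ne_zero _ ht.1.ne'
  have e1 : b ^ q * y = t ^ d * (b ^ q' * z) := by
    apply mul_left_cancel₀ htne
    rw [← mul_assoc, heq, pow_add]; ring
  rcases le_total q' q with hq | hq
  · obtain ⟨e, rfl⟩ := Nat.exists_eq_add_of_le hq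
    have hbne : b ^ q' ≠ 0 := pow_ne_zero _ hb.1.ne'
    have e2 : b ^ e * y = t ^ d * z := by
      apply mul_left_cancel₀ hbne
      rw [← mul_assoc, ← pow_add]
      rw [e1]; ring
    rcases Nat.eq_zero_or_pos d with rfl | hd
    · rcases Nat.eq_zero_or_pos e with rfl | he
      · exact ⟨rfl, rfl⟩
      · exfalso
        have hbe : b ^ e ≤ b := pow_le_of_le_one hb.1.le (by linarith [hb.2]) he.ne'
        have : b ^ e * y ≤ b := by nlinarith [pow_nonneg hb.1.le e]
        simp only [pow_zero, one_mul] at e2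
        linarith [hb.2]
    · rcases Nat.eq_zero_or_pos e with rfl | he
      · exfalso
        have hte : t ^ d ≤ t := pow_le_of_le_one ht.1.le (by linarith [ht.2]) hd.ne'
        have : t ^ d * z ≤ t := by nlinarith [pow_nonneg ht.1.le d]
        simp only [pow_zero, one_mul] at e2
        linarith [ht.2]
      · exact absurd e2.symm (hi d e hd he z hz y hy)
  · obtain ⟨e, rfl⟩ := Nat.exists_eq_add_of_le hq
    have hbne : b ^ q ≠ 0 := pow_ne_zero _ hb.1.ne'
    have e2 : y = t ^ d * (b ^ e * z) := by
      apply mul_left_cancel₀ hbne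
      rw [e1, pow_add]; ring
    rcases Nat.eq_zero_or_pos e with rfl | he
    · simp only [pow_zero, one_mul] at e2
      rcases Nat.eq_zero_or_pos d with rfl | hd
      · exact ⟨rfl, rfl⟩
      · exfalso
        have hte : t ^ d ≤ t := pow_le_of_le_one ht.1.le (by linarith [ht.2]) hd.ne'
        have : t ^ d * z ≤ t := by nlinarith [pow_nonneg ht.1.le d]
        linarith [ht.2]
    exfalso
    have hbe : b ^ e ≤ b := pow_le_of_le_one hb.1.le (by linarith [hb.2]) he.ne'
    have htd : t ^ d ≤ 1 := pow_le_one₀ ht.1.le (by linarith [ht.2])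
    have h1 : b ^ e * z ≤ b := by nlinarith [pow_nonneg hb.1.le e]
    have h2 : t ^ d * (b ^ e * z) ≤ b := by nlinarith [pow_nonneg ht.1.le d, pow_nonneg hb.1.le e]
    linarith [hb.2]

private lemma pieces_eq (t b : ℝ) (ht : t ∈ Ioo (0:ℝ) (1/9)) (hb : b ∈ Ioo (0:ℝ) (1/9))
    (K3 : Set ℝ) (hK3 : K3 ⊆ Icc (8/9 : ℝ) 1)
    (hi : ∀ m n : ℕ, 0 < m → 0 < n → ∀ y ∈ K3, ∀ z ∈ K3, t ^ m * y ≠ b ^ n * z)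
    (p q p' q' : ℕ) (y z : ℝ) (hy : y ∈ K3) (hz : z ∈ K3)
    (heq : t ^ p * b ^ q * y = t ^ p' * b ^ q' * z) : p = p' ∧ q = q' := by
  rcases le_total p p' with hp | hp
  · exact pieces_aux t b ht hb K3 hK3 hi p q p' q' hp y z hy hz heq
  · obtain ⟨h1, h2⟩ := pieces_aux t b ht hb K3 hK3 hi p' q' p q hp z y hz hy heq.symm
    exact ⟨h1.symm, h2.symm⟩
/-- Equivalent descriptions of exact overlaps for the system
`{tx, bx, (x+8)/9}` with attractor `K` and `K₃ = S₃(K)`: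
(i) `S₁^m(K₃) ∩ S₂^n(K₃) = ∅` for all `m, n ≥ 1`;
(ii) `K` is the disjoint union of `{0}` and the sets `S₁^m S₂^n(K₃)`, `m,n ≥ 0`;
(iii) `S₁^m(K) ∩ S₂^n(K) = S₁^m S₂^n(K)` for all `m, n ≥ 1`. -/
theorem exact_overlap_equivalences (t b : ℝ)
    (ht : t ∈ Ioo (0 : ℝ) (1 / 9)) (hb : b ∈ Ioo (0 : ℝ) (1 / 9))
    (K : Set ℝ) (hKne : K.Nonempty) (hKc : IsCompact K) (hKsub : K ⊆ Icc 0 1)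
    (hK : K = (fun x => t * x) '' K ∪ (fun x => b * x) '' K ∪
      (fun x => (x + 8) / 9) '' K) :
    ((∀ m n : ℕ, 0 < m → 0 < n →
        (fun x => t * x)^[m] '' ((fun x => (x + 8) / 9) '' K) ∩
          (fun x => b * x)^[n] '' ((fun x => (x + 8) / 9) '' K) = ∅) ↔
      (K = insert 0 (⋃ (mi : ℕ) (ni : ℕ),
          ((fun x => t * x)^[mi] ∘ (fun x => b * x)^[ni]) ''
            ((fun x => (x + 8) / 9) '' K)) ∧
        (∀ p q : ℕ × ℕ, p ≠ q →
          Disjoint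
            (((fun x => t * x)^[p.1] ∘ (fun x => b * x)^[p.2]) ''
              ((fun x => (x + 8) / 9) '' K))
            (((fun x => t * x)^[q.1] ∘ (fun x => b * x)^[q.2]) ''
              ((fun x => (x + 8) / 9) '' K))) ∧
        (∀ mi ni : ℕ, (0 : ℝ) ∉
          ((fun x => t * x)^[mi] ∘ (fun x => b * x)^[ni]) ''
            ((fun x => (x + 8) / 9) '' K)))) ∧
    ((∀ m n : ℕ, 0 < m → 0 < n →
        (fun x => t * x)^[m] '' ((fun x => (x + 8) / 9) '' K) ∩
          (fun x => b * x)^[n] '' ((fun x => (x + 8) / 9) '' K) = ∅) ↔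
      (∀ m n : ℕ, 0 < m → 0 < n →
        (fun x => t * x)^[m] '' K ∩ (fun x => b * x)^[n] '' K =
          ((fun x => t * x)^[m] ∘ (fun x => b * x)^[n]) '' K)) := by
  obtain ⟨ht0, ht9⟩ := ht
  obtain ⟨hb0, hb9⟩ := hb
  have htI : t ∈ Ioo (0:ℝ) (1/9) := ⟨ht0, ht9⟩
  have hbI : b ∈ Ioo (0:ℝ) (1/9) := ⟨hb0, hb9⟩
  simp only [comp_image, iter_mul_image]
  set K3 : Set ℝ := (fun x => (x + 8) / 9) '' K with hK3def
  -- basic facts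
  have hK3b : K3 ⊆ Icc (8/9 : ℝ) 1 := by
    rintro _ ⟨y, hy, rfl⟩
    have h1 := (hKsub hy).1
    have h2 := (hKsub hy).2
    constructor <;> simp only [] <;> [linarith; linarith]
  have hT : ∀ x ∈ K, t * x ∈ K := by
    intro x hx
    rw [hK]; left; left; exact ⟨x, hx, rfl⟩
  have hB : ∀ x ∈ K, b * x ∈ K := by
    intro x hx
    rw [hK]; left; right; exact ⟨x, hx, rfl⟩
  have hK3K : K3 ⊆ K := by
    intro x hx
    rw [hK]; right; exact hx
  have h0K : (0 : ℝ) ∈ K := by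
    have hbdd : BddBelow K := hKc.bddBelow
    have hInf : sInf K ∈ K := hKc.sInf_mem hKne
    have h1 : t * sInf K ∈ K := hT _ hInf
    have h2 : sInf K ≤ t * sInf K := csInf_le hbdd h1
    have h3 : 0 ≤ sInf K := (hKsub hInf).1
    have h4 : sInf K = 0 := le_antisymm (by nlinarith) h3
    rwa [h4] at hInf
  have hfK : ∀ (m : ℕ) (y : ℝ), y ∈ K → t ^ m * y ∈ K := by
    intro m
    induction m with
    | zero => intro y hy; simpa using hy
    | succ m ih => intro y hy; rw [pow_succ', mul_assoc]; exact hT _ (ih y hy)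
  have hgK : ∀ (n : ℕ) (y : ℝ), y ∈ K → b ^ n * y ∈ K := by
    intro n
    induction n with
    | zero => intro y hy; simpa using hy
    | succ n ih => intro y hy; rw [pow_succ', mul_assoc]; exact hB _ (ih y hy)
  have hpieceK : ∀ (m n : ℕ) (y : ℝ), y ∈ K3 → t ^ m * b ^ n * y ∈ K := by
    intro m n y hy
    rw [mul_assoc]
    exact hfK m _ (hgK n y (hK3K hy))
  -- decomposition
  have hc0 : 0 < max t b := lt_max_of_lt_left ht0
  have hdecomp : ∀ x ∈ K, x = 0 ∨ ∃ m n : ℕ, ∃ y ∈ K3, x = t ^ m * b ^ n * y := by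
    have key : ∀ k : ℕ, ∀ x ∈ K, max t b ^ k < x →
        ∃ m n : ℕ, ∃ y ∈ K3, x = t ^ m * b ^ n * y := by
      intro k
      induction k with
      | zero =>
        intro x hx hlt
        simp only [pow_zero] at hlt
        exact absurd hlt (not_lt.mpr (hKsub hx).2)
      | succ k ih =>
        intro x hx hlt
        rw [hK] at hx
        simp only [Set.mem_union, Set.mem_image] at hx
        rcases hx with (⟨y, hy, rfl⟩ | ⟨y, hy, rfl⟩) | hx3
        · have hy0 : 0 ≤ y := (hKsub hy).1
          have hlt' : max t b ^ k < y := by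
            have h1 : max t b * max t b ^ k < max t b * y := by
              rw [← pow_succ']
              exact hlt.trans_le (mul_le_mul_of_nonneg_right (le_max_left t b) hy0)
            exact lt_of_mul_lt_mul_left h1 hc0.le
          obtain ⟨m, n, z, hz, hzy⟩ := ih y hy hlt'
          exact ⟨m + 1, n, z, hz, by rw [hzy, pow_succ']; ring⟩
        · have hy0 : 0 ≤ y := (hKsub hy).1
          have hlt' : max t b ^ k < y := by
            have h1 : max t b * max t b ^ k < max t b * y := by
              rw [← pow_succ']
              exact hlt.trans_le (mul_le_mul_of_nonneg_right (le_max_right t b) hy0)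
            exact lt_of_mul_lt_mul_left h1 hc0.le
          obtain ⟨m, n, z, hz, hzy⟩ := ih y hy hlt'
          exact ⟨m, n + 1, z, hz, by rw [hzy, pow_succ']; ring⟩
        · exact ⟨0, 0, x, hx3, by simp⟩
    intro x hx
    rcases eq_or_ne x 0 with rfl | hx0
    · exact Or.inl rfl
    · have hxpos : 0 < x := lt_of_le_of_ne (hKsub hx).1 (Ne.symm hx0)
      have hc1 : max t b < 1 := max_lt (by linarith) (by linarith)
      obtain ⟨k, hk⟩ := exists_pow_lt_of_lt_one hxpos hc1
      exact Or.inr (key k x hx hk)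
  -- from (i) as set equality to (i) as scalar inequality
  have hii : (∀ m n : ℕ, 0 < m → 0 < n →
      (fun x => t ^ m * x) '' K3 ∩ (fun x => b ^ n * x) '' K3 = ∅) →
      ∀ m n : ℕ, 0 < m → 0 < n → ∀ y ∈ K3, ∀ z ∈ K3, t ^ m * y ≠ b ^ n * z := by
    intro h m n hm hn y hy z hz hcon
    have hmem : t ^ m * y ∈ (fun x => t ^ m * x) '' K3 ∩ (fun x => b ^ n * x) '' K3 :=
      ⟨⟨y, hy, rfl⟩, ⟨z, hz, hcon.symm⟩⟩
    rw [h m n hm hn] at hmem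
    exact hmem
  constructor
  · -- first equivalence
    constructor
    · intro h
      have hi := hii h
      refine ⟨?_, ?_, ?_⟩
      · -- decomposition equality
        ext x
        simp only [Set.mem_insert_iff, Set.mem_iUnion, Set.mem_image]
        constructor
        · intro hx
          rcases hdecomp x hx with rfl | ⟨m, n, y, hy, rfl⟩
          · exact Or.inl rfl
          · exact Or.inr ⟨m, n, y, hy, rfl⟩
        · rintro (rfl | ⟨m, n, y, hy, rfl⟩)
          · exact h0K
          · exact hpieceK m n y hy
      · -- pairwise disjoint
        rintro ⟨p1, p2⟩ ⟨q1, q2⟩ hne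
        rw [Set.disjoint_left]
        rintro x ⟨y, hy, rfl⟩ ⟨z, hz, hzx⟩
        obtain ⟨h1, h2⟩ := pieces_eq t b htI hbI K3 hK3b hi q1 q2 p1 p2 z y hz hy hzx
        exact hne (by rw [Prod.mk.injEq]; exact ⟨h1.symm, h2.symm⟩)
      · -- 0 not in any piece
        rintro mi ni ⟨y, hy, hy0⟩
        have hy1 : (0:ℝ) < y := lt_of_lt_of_le (by norm_num) (hK3b hy).1
        have hpos : 0 < t ^ mi * b ^ ni * y :=
          mul_pos (mul_pos (pow_pos ht0 mi) (pow_pos hb0 ni)) hy1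
        exact absurd hy0 hpos.ne'
    · rintro ⟨hdec, hdisj, h0⟩ m n hm hn
      have hne : (m, (0:ℕ)) ≠ ((0:ℕ), n) := fun hpq => hm.ne' (congrArg Prod.fst hpq)
      have hd := hdisj (m, 0) (0, n) hne
      rw [Set.eq_empty_iff_forall_notMem]
      rintro x ⟨⟨y, hy, rfl⟩, ⟨z, hz, hz2⟩⟩
      have hm1 : t ^ m * y ∈ (fun x => t ^ (m, (0:ℕ)).1 * b ^ (m, (0:ℕ)).2 * x) '' K3 :=
        ⟨y, hy, by simp⟩
      have hm2 : t ^ m * y ∈ (fun x => t ^ ((0:ℕ), n).1 * b ^ ((0:ℕ), n).2 * x) '' K3 :=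
        ⟨z, hz, by simpa using hz2⟩
      exact Set.disjoint_left.mp hd hm1 hm2
  · -- second equivalence
    constructor
    · intro h m n hm hn
      have hi := hii h
      ext x
      simp only [Set.mem_inter_iff, Set.mem_image]
      constructor
      · rintro ⟨⟨u, hu, rfl⟩, ⟨v, hv, hvx⟩⟩
        rcases hdecomp u hu with rfl | ⟨p, q, y, hy, rfl⟩
        · exact ⟨0, h0K, by ring⟩
        rcases hdecomp v hv with rfl | ⟨p', q', z, hz, rfl⟩
        · exfalso
          have hy1 : (0:ℝ) < y := lt_of_lt_of_le (by norm_num) (hK3b hy).1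
          have hpos : 0 < t ^ m * (t ^ p * b ^ q * y) :=
            mul_pos (pow_pos ht0 m) (mul_pos (mul_pos (pow_pos ht0 p) (pow_pos hb0 q)) hy1)
          rw [mul_zero] at hvx
          exact hpos.ne' hvx.symm
        · have heq : t ^ p' * b ^ (n + q') * z = t ^ (m + p) * b ^ q * y := by
            rw [pow_add, pow_add]
            calc t ^ p' * (b ^ n * b ^ q') * z = b ^ n * (t ^ p' * b ^ q' * z) := by ring
            _ = t ^ m * (t ^ p * b ^ q * y) := hvx
            _ = t ^ m * t ^ p * b ^ q * y := by ring
          obtain ⟨h1, h2⟩ := pieces_eq t b htI hbI K3 hK3b hi p' (n + q') (m + p) q z y hz hy heq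
          refine ⟨t ^ p * b ^ q' * y, hpieceK p q' y hy, ?_⟩
          rw [← h2, pow_add]
          ring
      · rintro ⟨w, hw, rfl⟩
        exact ⟨⟨b ^ n * w, hgK n w hw, by ring⟩, ⟨t ^ m * w, hfK m w hw, by ring⟩⟩
    · intro h m n hm hn
      rw [Set.eq_empty_iff_forall_notMem]
      rintro x ⟨⟨y, hy, rfl⟩, hx2⟩
      have hxK : t ^ m * y ∈ (fun x => t ^ m * x) '' K ∩ (fun x => b ^ n * x) '' K := by
        refine ⟨⟨y, hK3K hy, rfl⟩, ?_⟩
        obtain ⟨z, hz, hz2⟩ := hx2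
        exact ⟨z, hK3K hz, hz2⟩
      rw [h m n hm hn] at hxK
      obtain ⟨w, hw, hw2⟩ := hxK
      have hy1 := (hK3b hy).1
      have hw01 := (hKsub hw).1
      have hw02 := (hKsub hw).2
      have hbn : b ^ n ≤ b := pow_le_of_le_one hb0.le (by linarith) hn.ne'
      have hlt : b ^ n * w < y := by nlinarith [pow_nonneg hb0.le n]
      have hlt2 := mul_lt_mul_of_pos_left hlt (pow_pos ht0 m)
      rw [← mul_assoc] at hlt2
      exact absurd hw2 hlt2.ne
end

section
/- For fixed b ∈ (0,1/9), consider S_t = {S1(x) = tx, S2(x) = bx, S3(x) = (x+8)/9} on [0,1] with attractor K_t. Then for Lebesgue-almost all t ∈ (0,1/9), the system S_t has the exact overlap S1(K_t) ∩ S2(K_t) = S1 S2(K_t). -/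
open Set MeasureTheory

noncomputable def EOrat (b t : ℝ) : Fin 3 → ℝ := ![t, b, 1/9]
noncomputable def EOoff : Fin 3 → ℝ := ![0, 0, 8/9]

noncomputable def EOP (b t : ℝ) : (n : ℕ) → (Fin n → Fin 3) → ℝ
  | 0, _ => 0
  | n+1, w => EOrat b t (w 0) * EOP b t n (Fin.tail w) + EOoff (w 0)

noncomputable def EOR (b t : ℝ) (n : ℕ) (w : Fin n → Fin 3) : ℝ := ∏ k, EOrat b t (w k)

noncomputable def EOD (b t : ℝ) : (n : ℕ) → (Fin n → Fin 3) → ℝ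
  | 0, _ => 0
  | n+1, w => if w 0 = 0 then EOP b t n (Fin.tail w) + t * EOD b t n (Fin.tail w)
              else EOrat b t (w 0) * EOD b t n (Fin.tail w)

lemma EOrat_nonneg {b t : ℝ} (hb : 0 ≤ b) (ht : 0 ≤ t) (d : Fin 3) : 0 ≤ EOrat b t d := by
  fin_cases d <;> simp [EOrat] <;> norm_num [hb, ht]

lemma EOrat_le {b t : ℝ} (hb : b ≤ 1/9) (ht : t ≤ 1/9) (d : Fin 3) : EOrat b t d ≤ 1/9 := by
  fin_cases d <;> simp [EOrat] <;> norm_num [hb, ht]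

lemma EOratoff_le_one {b t : ℝ} (hb : b ≤ 1/9) (ht : t ≤ 1/9) (d : Fin 3) :
    EOrat b t d + EOoff d ≤ 1 := by
  fin_cases d <;> simp [EOrat, EOoff] <;> linarith

lemma EOoff_nonneg (d : Fin 3) : 0 ≤ EOoff d := by
  fin_cases d <;> norm_num [EOoff]

lemma EOP_nonneg {b t : ℝ} (hb : 0 ≤ b) (ht : 0 ≤ t) :
    ∀ n (w : Fin n → Fin 3), 0 ≤ EOP b t n w := by
  intro n
  induction n with
  | zero => intro w; simp [EOP]
  | succ n ih => intro w
                 have := ih (Fin.tail w)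
                 have h1 := EOrat_nonneg hb ht (w 0)
                 have h2 := EOoff_nonneg (w 0)
                 simp only [EOP]; positivity

lemma EOR_nonneg {b t : ℝ} (hb : 0 ≤ b) (ht : 0 ≤ t) (n : ℕ) (w : Fin n → Fin 3) :
    0 ≤ EOR b t n w :=
  Finset.prod_nonneg fun k _ => EOrat_nonneg hb ht (w k)

lemma EOPR_le_one {b t : ℝ} (hb : 0 ≤ b) (hb' : b ≤ 1/9) (ht : 0 ≤ t) (ht' : t ≤ 1/9) :
    ∀ n (w : Fin n → Fin 3), EOP b t n w + EOR b t n w ≤ 1 := by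
  intro n
  induction n with
  | zero => intro w; simp [EOP, EOR]
  | succ n ih =>
    intro w
    have hP := EOP_nonneg hb ht n (Fin.tail w)
    have hR := EOR_nonneg hb ht n (Fin.tail w)
    have hsum := ih (Fin.tail w)
    have hr0 := EOrat_nonneg hb ht (w 0)
    have hr1 := EOrat_le hb' ht' (w 0)
    have hRsucc : EOR b t (n+1) w = EOrat b t (w 0) * EOR b t n (Fin.tail w) := by
      simp [EOR, Fin.prod_univ_succ, Fin.tail]
    have key : EOrat b t (w 0) + EOoff (w 0) ≤ 1 := EOratoff_le_one hb' ht' (w 0)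
    have : EOP b t (n+1) w + EOR b t (n+1) w
        = EOrat b t (w 0) * (EOP b t n (Fin.tail w) + EOR b t n (Fin.tail w)) + EOoff (w 0) := by
      simp only [EOP, hRsucc]; ring
    rw [this]
    calc EOrat b t (w 0) * (EOP b t n (Fin.tail w) + EOR b t n (Fin.tail w)) + EOoff (w 0)
        ≤ EOrat b t (w 0) * 1 + EOoff (w 0) := by nlinarith
      _ ≤ 1 := by linarith [key]

lemma EOP_le_one {b t : ℝ} (hb : 0 ≤ b) (hb' : b ≤ 1/9) (ht : 0 ≤ t) (ht' : t ≤ 1/9)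
    (n : ℕ) (w : Fin n → Fin 3) : EOP b t n w ≤ 1 := by
  have := EOPR_le_one hb hb' ht ht' n w
  have := EOR_nonneg hb ht n w
  linarith

lemma EOrat_ne_zero (b s t : ℝ) {d : Fin 3} (h : d ≠ 0) : EOrat b s d = EOrat b t d := by
  fin_cases d
  · exact absurd rfl h
  · simp [EOrat]
  · simp [EOrat]

lemma EOrat_mono {b t β : ℝ} (htβ : t ≤ β) (d : Fin 3) : EOrat b t d ≤ EOrat b β d := by
  fin_cases d <;> simp [EOrat, htβ]

lemma EOP_cons (b t : ℝ) (n : ℕ) (d : Fin 3) (w : Fin n → Fin 3) :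
    EOP b t (n+1) (Fin.cons d w) = EOrat b t d * EOP b t n w + EOoff d := by
  simp [EOP, Fin.tail_cons]

lemma EOR_cons (b t : ℝ) (n : ℕ) (d : Fin 3) (w : Fin n → Fin 3) :
    EOR b t (n+1) (Fin.cons d w) = EOrat b t d * EOR b t n w := by
  simp [EOR, Fin.prod_univ_succ, Fin.tail_cons]

/-- Covering: `K` is inside the union of the cylinder images. -/
lemma EOcover {b t : ℝ} (K : Set ℝ)
    (hU : K ⊆ (fun x => t * x) '' K ∪ (fun x => b * x) '' K ∪ (fun x => (x + 8) / 9) '' K) :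
    ∀ n, K ⊆ ⋃ w : Fin n → Fin 3, (fun x => EOP b t n w + EOR b t n w * x) '' K := by
  intro n
  induction n with
  | zero =>
    intro x hx
    refine mem_iUnion.2 ⟨Fin.elim0, ?_⟩
    exact ⟨x, hx, by simp [EOP, EOR]⟩
  | succ n ih =>
    intro x hx
    rcases hU hx with (⟨y, hy, rfl⟩ | ⟨y, hy, rfl⟩) | ⟨y, hy, rfl⟩
    · rcases mem_iUnion.1 (ih hy) with ⟨w, z, hz, hzy⟩
      refine mem_iUnion.2 ⟨Fin.cons 0 w, z, hz, ?_⟩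
      simp only [EOP_cons, EOR_cons, ← hzy]
      show EOrat b t 0 * EOP b t n w + EOoff 0 + EOrat b t 0 * EOR b t n w * z
        = t * (EOP b t n w + EOR b t n w * z)
      simp [EOrat, EOoff]; ring
    · rcases mem_iUnion.1 (ih hy) with ⟨w, z, hz, hzy⟩
      refine mem_iUnion.2 ⟨Fin.cons 1 w, z, hz, ?_⟩
      simp only [EOP_cons, EOR_cons, ← hzy]
      show EOrat b t 1 * EOP b t n w + EOoff 1 + EOrat b t 1 * EOR b t n w * z
        = b * (EOP b t n w + EOR b t n w * z)
      simp [EOrat, EOoff]; ring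
    · rcases mem_iUnion.1 (ih hy) with ⟨w, z, hz, hzy⟩
      refine mem_iUnion.2 ⟨Fin.cons 2 w, z, hz, ?_⟩
      simp only [EOP_cons, EOR_cons, ← hzy]
      show EOrat b t 2 * EOP b t n w + EOoff 2 + EOrat b t 2 * EOR b t n w * z
        = (EOP b t n w + EOR b t n w * z + 8) / 9
      simp [EOrat, EOoff]; ring

lemma EOP_hasDerivAt (b : ℝ) (n : ℕ) (w : Fin n → Fin 3) (t : ℝ) :
    HasDerivAt (fun t => EOP b t n w) (EOD b t n w) t := by
  induction n generalizing t with
  | zero => simpa [EOP, EOD] using hasDerivAt_const t (0:ℝ)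
  | succ n ih =>
    by_cases h0 : w 0 = 0
    · have : HasDerivAt (fun t => t * EOP b t n (Fin.tail w) + EOoff (w 0))
          (EOP b t n (Fin.tail w) + t * EOD b t n (Fin.tail w)) t := by
        simpa using ((hasDerivAt_id t).mul (ih (Fin.tail w) t)).add_const (EOoff (w 0))
      have heq : (fun t => EOP b t (n+1) w)
          = fun t => t * EOP b t n (Fin.tail w) + EOoff (w 0) := by
        funext s; simp [EOP, h0, EOrat]
      rw [heq]
      simpa [EOD, h0] using this
    · have hconst : ∀ s : ℝ, EOrat b s (w 0) = EOrat b t (w 0) :=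
        fun s => EOrat_ne_zero b s t h0
      have : HasDerivAt (fun s => EOrat b t (w 0) * EOP b s n (Fin.tail w) + EOoff (w 0))
          (EOrat b t (w 0) * EOD b t n (Fin.tail w)) t :=
        ((ih (Fin.tail w) t).const_mul _).add_const _
      have heq : (fun s => EOP b s (n+1) w)
          = fun s => EOrat b t (w 0) * EOP b s n (Fin.tail w) + EOoff (w 0) := by
        funext s; rw [show EOP b s (n+1) w = EOrat b s (w 0) * EOP b s n (Fin.tail w) + EOoff (w 0) from rfl, hconst s]
      rw [heq]
      simpa [EOD, h0] using this

lemma EOD_bound {b t : ℝ} (hb : 0 ≤ b) (hb' : b ≤ 1/9) (ht : 0 ≤ t) (ht' : t ≤ 1/9) :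
    ∀ n (w : Fin n → Fin 3), |EOD b t n w| ≤ 9/8 := by
  intro n
  induction n with
  | zero => intro w; simp [EOD]; norm_num
  | succ n ih =>
    intro w
    have hD := ih (Fin.tail w)
    have hP0 := EOP_nonneg hb ht n (Fin.tail w)
    have hP1 := EOP_le_one hb hb' ht ht' n (Fin.tail w)
    by_cases h0 : w 0 = 0
    · rw [show EOD b t (n+1) w = EOP b t n (Fin.tail w) + t * EOD b t n (Fin.tail w) by
        simp [EOD, h0]]
      have := abs_le.1 hD
      rw [abs_le]; constructor <;> nlinarith
    · rw [show EOD b t (n+1) w = EOrat b t (w 0) * EOD b t n (Fin.tail w) by simp [EOD, h0]]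
      rw [abs_mul]
      have h1 : |EOrat b t (w 0)| ≤ 1/9 := by
        rw [abs_of_nonneg (EOrat_nonneg hb ht _)]; exact EOrat_le hb' ht' _
      have := abs_nonneg (EOD b t n (Fin.tail w))
      nlinarith

lemma EOR_mono {b t β : ℝ} (hb : 0 ≤ b) (ht : 0 ≤ t) (htβ : t ≤ β) (n : ℕ) (w : Fin n → Fin 3) :
    EOR b t n w ≤ EOR b β n w := by
  apply Finset.prod_le_prod (fun k _ => EOrat_nonneg hb ht (w k))
  intro k _
  exact EOrat_mono htβ (w k)

lemma EOR_sum (b β : ℝ) (n : ℕ) :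
    ∑ w : Fin n → Fin 3, EOR b β n w = (β + b + 1/9)^n := by
  have : ∑ w : Fin n → Fin 3, EOR b β n w = ∏ _k : Fin n, ∑ d : Fin 3, EOrat b β d := by
    rw [Finset.prod_univ_sum]
    rfl
  rw [this]
  simp [EOrat, Fin.sum_univ_three]


lemma EOflow (b c τ : ℝ) (i l n : ℕ) (hb0 : 0 < b) (hb9' : b ≤ 1/9)
    (hτ : 0 < τ) (hcs : τ ≤ c) (hc9 : c ≤ 1/9) (w w' : Fin n → Fin 3)
    (hblc : b^(l+1) ≤ (9/8) * c^(i+1)) :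
    7 * τ^i ≤ ((i+1:ℕ):ℝ) * c^i * (EOP b c n w + 8) + c^(i+1) * EOD b c n w
      - b^(l+1) * EOD b c n w' := by
  have hc0 : 0 < c := lt_of_lt_of_le hτ hcs
  have hci : 0 < c^i := pow_pos hc0 i
  have hcip : 0 < c^(i+1) := pow_pos hc0 (i+1)
  have hb1 : (0:ℝ) < b^(l+1) := pow_pos hb0 _
  have hPc0 : 0 ≤ EOP b c n w := EOP_nonneg hb0.le hc0.le n w
  have hD1 := abs_le.1 (EOD_bound hb0.le hb9' hc0.le hc9 n w)
  have hD2 := abs_le.1 (EOD_bound hb0.le hb9' hc0.le hc9 n w')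
  have hone : (1:ℝ) ≤ ((i+1:ℕ):ℝ) := by exact_mod_cast Nat.one_le_iff_ne_zero.2 (Nat.succ_ne_zero i)
  have hτci : τ^i ≤ c^i := pow_le_pow_left₀ hτ.le hcs i
  have e1 : (1:ℝ) * c^i * 8 ≤ ((i+1:ℕ):ℝ) * c^i * (EOP b c n w + 8) := by
    apply mul_le_mul (by nlinarith) (by linarith) (by norm_num) (by positivity)
  have e2 : c^(i+1) * (-(9/8)) ≤ c^(i+1) * EOD b c n w :=
    mul_le_mul_of_nonneg_left hD1.1 hcip.le
  have e3a : b^(l+1) * EOD b c n w' ≤ b^(l+1) * (9/8) :=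
    mul_le_mul_of_nonneg_left hD2.2 hb1.le
  have e3 : b^(l+1) * EOD b c n w' ≤ (81/64) * c^(i+1) := by linarith
  have e4 : c^(i+1) ≤ (1/9) * c^i := by
    rw [pow_succ' c i]
    nlinarith
  nlinarith

lemma EOptbound (b τ β s u v : ℝ) (i l n : ℕ) (hb0 : 0 < b)
    (hτ : 0 < τ) (hβ9 : β ≤ 1/9) (hs : s ∈ Icc τ β) (w w' : Fin n → Fin 3)
    (heq : s^(i+1) * (u+8) = b^(l+1) * (v+8)) (hu1 : u ≤ 1) (hv0 : 0 ≤ v)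
    (huw : |u - EOP b s n w| ≤ EOR b s n w) (hvw : |v - EOP b s n w'| ≤ EOR b s n w') :
    b^(l+1) ≤ (9/8) * s^(i+1) ∧
    |s^(i+1) * (EOP b s n w + 8) - b^(l+1) * (EOP b s n w' + 8)|
      ≤ (9/8) * β^(i+1) * (EOR b β n w + EOR b β n w') := by
  have hspos : 0 < s := lt_of_lt_of_le hτ hs.1
  have htp : 0 < s^(i+1) := pow_pos hspos _
  have hbp : 0 < b^(l+1) := pow_pos hb0 _
  have hbl : b^(l+1) ≤ (9/8) * s^(i+1) := by nlinarith
  refine ⟨hbl, ?_⟩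
  have hβ0 : 0 < β := lt_of_lt_of_le hspos hs.2
  have hfteq : s^(i+1) * (EOP b s n w + 8) - b^(l+1) * (EOP b s n w' + 8)
      = s^(i+1) * (EOP b s n w - u) - b^(l+1) * (EOP b s n w' - v) := by linarith
  have hRw : EOR b s n w ≤ EOR b β n w := EOR_mono hb0.le hspos.le hs.2 n w
  have hRw' : EOR b s n w' ≤ EOR b β n w' := EOR_mono hb0.le hspos.le hs.2 n w'
  have htβp : s^(i+1) ≤ β^(i+1) := pow_le_pow_left₀ hspos.le hs.2 _
  have hβp : 0 < β^(i+1) := pow_pos hβ0 _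
  have h1 : |s^(i+1) * (EOP b s n w - u)| ≤ β^(i+1) * EOR b β n w := by
    rw [abs_mul, abs_of_pos htp, abs_sub_comm]
    have := abs_nonneg (u - EOP b s n w)
    nlinarith [huw.trans hRw]
  have h2 : |b^(l+1) * (EOP b s n w' - v)| ≤ (9/8) * β^(i+1) * EOR b β n w' := by
    rw [abs_mul, abs_of_pos hbp, abs_sub_comm]
    have h3 : |v - EOP b s n w'| ≤ EOR b β n w' := hvw.trans hRw'
    have := abs_nonneg (v - EOP b s n w')
    nlinarith
  have hRβw : 0 ≤ EOR b β n w := EOR_nonneg hb0.le hβ0.le n w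
  rw [hfteq]
  calc |s ^ (i + 1) * (EOP b s n w - u) - b ^ (l + 1) * (EOP b s n w' - v)|
      ≤ |s^(i+1) * (EOP b s n w - u)| + |b^(l+1) * (EOP b s n w' - v)| := abs_sub _ _
    _ ≤ β^(i+1) * EOR b β n w + (9/8) * β^(i+1) * EOR b β n w' := add_le_add h1 h2
    _ ≤ (9/8) * β^(i+1) * (EOR b β n w + EOR b β n w') := by nlinarith

set_option maxHeartbeats 1000000 in
lemma EOkey (b τ β s s' u v u' v' : ℝ) (i l n : ℕ) (hb0 : 0 < b) (hb9 : b < 1/9)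
    (hτ : 0 < τ) (hβ : β < 1/9) (w w' : Fin n → Fin 3)
    (hs : s ∈ Icc τ β) (hs' : s' ∈ Icc τ β)
    (heq : s^(i+1) * (u+8) = b^(l+1) * (v+8)) (hu1 : u ≤ 1) (hv0 : 0 ≤ v)
    (huw : |u - EOP b s n w| ≤ EOR b s n w) (hvw : |v - EOP b s n w'| ≤ EOR b s n w')
    (heq' : s'^(i+1) * (u'+8) = b^(l+1) * (v'+8)) (hu1' : u' ≤ 1) (hv0' : 0 ≤ v')
    (huw' : |u' - EOP b s' n w| ≤ EOR b s' n w) (hvw' : |v' - EOP b s' n w'| ≤ EOR b s' n w')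
    (hss : s < s') :
    s' - s ≤ (9/28) * (β^(i+1) / τ^i) * (EOR b β n w + EOR b β n w') := by
  set f : ℝ → ℝ := fun x => x^(i+1) * (EOP b x n w + 8) - b^(l+1) * (EOP b x n w' + 8) with hf
  set g : ℝ → ℝ := fun x => ((i+1:ℕ) * x^i * (EOP b x n w + 8) + x^(i+1) * EOD b x n w)
      - b^(l+1) * EOD b x n w' with hg
  have hderiv : ∀ x : ℝ, HasDerivAt f (g x) x := by
    intro x
    have h1 : HasDerivAt (fun x : ℝ => x^(i+1) * (EOP b x n w + 8))
        ((i+1:ℕ) * x^i * (EOP b x n w + 8) + x^(i+1) * EOD b x n w) x := by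
      simpa using (hasDerivAt_pow (i+1) x).fun_mul ((EOP_hasDerivAt b n w x).add_const 8)
    have h2 : HasDerivAt (fun x : ℝ => b^(l+1) * (EOP b x n w' + 8))
        (b^(l+1) * EOD b x n w') x :=
      ((EOP_hasDerivAt b n w' x).add_const 8).const_mul _
    exact h1.sub h2
  obtain ⟨c, hc, hslope⟩ := exists_hasDerivAt_eq_slope f g hss
    (fun x _ => (hderiv x).continuousAt.continuousWithinAt) (fun x _ => hderiv x)
  have hcs : τ ≤ c := le_trans hs.1 hc.1.le
  have hcβ : c ≤ β := le_trans hc.2.le hs'.2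
  have hc9 : c ≤ 1/9 := hcβ.trans hβ.le
  have hbd := EOptbound b τ β s u v i l n hb0 hτ hβ.le hs w w' heq hu1 hv0 huw hvw
  have hbd' := EOptbound b τ β s' u' v' i l n hb0 hτ hβ.le hs' w w' heq' hu1' hv0' huw' hvw'
  have hsc : s^(i+1) ≤ c^(i+1) := pow_le_pow_left₀ (lt_of_lt_of_le hτ hs.1).le hc.1.le _
  have hblc : b^(l+1) ≤ (9/8) * c^(i+1) := by linarith [hbd.1]
  have hflow : 7 * τ^i ≤ g c := by
    rw [hg]
    exact EOflow b c τ i l n hb0 hb9.le hτ hcs hc9 w w' hblc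
  have hss' : s' - s ≠ 0 := by linarith
  have hmean : f s' - f s = g c * (s' - s) := by
    rw [eq_div_iff hss'] at hslope
    linarith
  have habs1 := abs_le.1 hbd.2
  have habs2 := abs_le.1 hbd'.2
  have hτi : 0 < τ^i := pow_pos hτ i
  have step1 : 7*τ^i*(s'-s) ≤ g c * (s'-s) := mul_le_mul_of_nonneg_right hflow (by linarith)
  have hfs : f s = s^(i+1) * (EOP b s n w + 8) - b^(l+1) * (EOP b s n w' + 8) := by rw [hf]
  have hfs' : f s' = s'^(i+1) * (EOP b s' n w + 8) - b^(l+1) * (EOP b s' n w' + 8) := by rw [hf]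
  have hchain : τ^i * (s' - s) ≤ (9/28) * β^(i+1) * (EOR b β n w + EOR b β n w') := by
    rw [hfs, hfs'] at hmean
    linarith
  have hrw : (9/28) * (β^(i+1) / τ^i) * (EOR b β n w + EOR b β n w')
      = ((9/28) * β^(i+1) * (EOR b β n w + EOR b β n w')) / τ^i := by ring
  rw [hrw, le_div_iff₀ hτi]
  nlinarith [hchain]

set_option maxHeartbeats 1000000 in
lemma EOpair (b τ β : ℝ) (i l n : ℕ) (hb0 : 0 < b) (hb9 : b < 1/9)
    (hτ : 0 < τ) (hτβ : τ ≤ β) (hβ : β < 1/9) (w w' : Fin n → Fin 3) :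
    volume {t : ℝ | t ∈ Icc τ β ∧ ∃ u v : ℝ,
        t^(i+1) * (u+8) = b^(l+1) * (v+8) ∧ 0 ≤ u ∧ u ≤ 1 ∧ 0 ≤ v ∧ v ≤ 1 ∧
        |u - EOP b t n w| ≤ EOR b t n w ∧ |v - EOP b t n w'| ≤ EOR b t n w'} ≤
      ENNReal.ofReal ((9/28) * (β^(i+1) / τ^i) * (EOR b β n w + EOR b β n w')) := by
  refine le_trans (Real.volume_le_diam _) (EMetric.diam_le ?_)
  intro t ht t' ht'
  rw [edist_dist, Real.dist_eq]
  refine ENNReal.ofReal_le_ofReal ?_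
  obtain ⟨hti, ut, vt, heqt, hut0, hut1, hvt0, hvt1, huwt, hvwt⟩ := ht
  obtain ⟨hti', ut', vt', heqt', hut0', hut1', hvt0', hvt1', huwt', hvwt'⟩ := ht'
  rcases lt_trichotomy t t' with h | h | h
  · rw [abs_of_nonpos (by linarith)]
    have := EOkey b τ β t t' ut vt ut' vt' i l n hb0 hb9 hτ hβ w w' hti hti'
      heqt hut1 hvt0 huwt hvwt heqt' hut1' hvt0' huwt' hvwt' h
    linarith
  · subst h
    simp only [sub_self, abs_zero]
    have hβ0 : 0 < β := lt_of_lt_of_le hτ hτβ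
    have h1 : 0 < β^(i+1) := pow_pos hβ0 _
    have h2 : 0 < τ^i := pow_pos hτ i
    have h3 := EOR_nonneg hb0.le hβ0.le n w
    have h4 := EOR_nonneg hb0.le hβ0.le n w'
    positivity
  · rw [abs_of_nonneg (by linarith)]
    have := EOkey b τ β t' t ut' vt' ut vt i l n hb0 hb9 hτ hβ w w' hti' hti
      heqt' hut1' hvt0' huwt' hvwt' heqt hut1 hvt0 huwt hvwt h
    linarith

set_option maxHeartbeats 1000000 in
lemma EObad_null (b : ℝ) (hb0 : 0 < b) (hb9 : b < 1/9) (K : ℝ → Set ℝ)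
    (hK : ∀ t ∈ Ioo (0 : ℝ) (1 / 9), (K t).Nonempty ∧ IsCompact (K t) ∧
      K t ⊆ Icc 0 1 ∧
      K t = (fun x => t * x) '' K t ∪ (fun x => b * x) '' K t ∪
        (fun x => (x + 8) / 9) '' K t)
    (i l : ℕ) (τ β : ℝ) (hτ : 0 < τ) (hβ : β < 1/9) :
    volume {t : ℝ | t ∈ Icc τ β ∧ ∃ u ∈ K t, ∃ v ∈ K t,
      t^(i+1) * (u+8) = b^(l+1) * (v+8)} = 0 := by
  by_cases hτβ : τ ≤ β
  swap
  · have : {t : ℝ | t ∈ Icc τ β ∧ ∃ u ∈ K t, ∃ v ∈ K t,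
        t^(i+1) * (u+8) = b^(l+1) * (v+8)} ⊆ Icc τ β := fun t ht => ht.1
    have h2 : Icc τ β = (∅ : Set ℝ) := Icc_eq_empty hτβ
    exact measure_mono_null this (by rw [h2]; exact measure_empty)
  have hβ0 : 0 < β := lt_of_lt_of_le hτ hτβ
  -- covering at level n
  have hcov : ∀ n : ℕ, {t : ℝ | t ∈ Icc τ β ∧ ∃ u ∈ K t, ∃ v ∈ K t,
      t^(i+1) * (u+8) = b^(l+1) * (v+8)} ⊆
      ⋃ p : (Fin n → Fin 3) × (Fin n → Fin 3), {t : ℝ | t ∈ Icc τ β ∧ ∃ u v : ℝ,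
        t^(i+1) * (u+8) = b^(l+1) * (v+8) ∧ 0 ≤ u ∧ u ≤ 1 ∧ 0 ≤ v ∧ v ≤ 1 ∧
        |u - EOP b t n p.1| ≤ EOR b t n p.1 ∧ |v - EOP b t n p.2| ≤ EOR b t n p.2} := by
    intro n t ht
    obtain ⟨hticc, u, hu, v, hv, heq⟩ := ht
    have htmem : t ∈ Ioo (0:ℝ) (1/9) := ⟨lt_of_lt_of_le hτ hticc.1, lt_of_le_of_lt hticc.2 hβ⟩
    obtain ⟨-, -, hsub, heqK⟩ := hK t htmem
    have ht0 : (0:ℝ) ≤ t := le_of_lt htmem.1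
    have ht9 : t ≤ 1/9 := le_of_lt htmem.2
    have hcover := EOcover (K t) (le_of_eq heqK) n
    obtain ⟨w, x, hx, hxu⟩ := mem_iUnion.1 (hcover hu)
    obtain ⟨w', x', hx', hxv⟩ := mem_iUnion.1 (hcover hv)
    have hx01 := hsub hx
    have hx01' := hsub hx'
    have hR := EOR_nonneg hb0.le ht0 n w
    have hR' := EOR_nonneg hb0.le ht0 n w'
    have hxu' : EOP b t n w + EOR b t n w * x = u := hxu
    have hxv' : EOP b t n w' + EOR b t n w' * x' = v := hxv
    have habs1 : |u - EOP b t n w| ≤ EOR b t n w := by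
      rw [abs_le]; constructor <;> nlinarith [hx01.1, hx01.2]
    have habs2 : |v - EOP b t n w'| ≤ EOR b t n w' := by
      rw [abs_le]; constructor <;> nlinarith [hx01'.1, hx01'.2]
    exact mem_iUnion.2 ⟨(w, w'), hticc, u, v, heq, (hsub hu).1, (hsub hu).2,
      (hsub hv).1, (hsub hv).2, habs1, habs2⟩
  -- measure bound at level n
  set θ : ℝ := 3*β + 3*b + 1/3 with hθ
  have hθ0 : 0 < θ := by positivity
  have hθ1 : θ < 1 := by rw [hθ]; linarith
  have hbound : ∀ n : ℕ, volume {t : ℝ | t ∈ Icc τ β ∧ ∃ u ∈ K t, ∃ v ∈ K t,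
      t^(i+1) * (u+8) = b^(l+1) * (v+8)} ≤
      ENNReal.ofReal ((9/14) * (β^(i+1) / τ^i) * θ^n) := by
    intro n
    refine le_trans (measure_mono (hcov n)) (le_trans (measure_iUnion_le _) ?_)
    have hterm : ∀ p : (Fin n → Fin 3) × (Fin n → Fin 3),
        volume {t : ℝ | t ∈ Icc τ β ∧ ∃ u v : ℝ,
          t^(i+1) * (u+8) = b^(l+1) * (v+8) ∧ 0 ≤ u ∧ u ≤ 1 ∧ 0 ≤ v ∧ v ≤ 1 ∧
          |u - EOP b t n p.1| ≤ EOR b t n p.1 ∧ |v - EOP b t n p.2| ≤ EOR b t n p.2} ≤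
        ENNReal.ofReal ((9/28) * (β^(i+1) / τ^i) * (EOR b β n p.1 + EOR b β n p.2)) :=
      fun p => EOpair b τ β i l n hb0 hb9 hτ hτβ hβ p.1 p.2
    calc ∑' p : (Fin n → Fin 3) × (Fin n → Fin 3), volume {t : ℝ | t ∈ Icc τ β ∧ ∃ u v : ℝ,
          t^(i+1) * (u+8) = b^(l+1) * (v+8) ∧ 0 ≤ u ∧ u ≤ 1 ∧ 0 ≤ v ∧ v ≤ 1 ∧
          |u - EOP b t n p.1| ≤ EOR b t n p.1 ∧ |v - EOP b t n p.2| ≤ EOR b t n p.2}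
        ≤ ∑' p : (Fin n → Fin 3) × (Fin n → Fin 3),
            ENNReal.ofReal ((9/28) * (β^(i+1) / τ^i) * (EOR b β n p.1 + EOR b β n p.2)) :=
          ENNReal.tsum_le_tsum hterm
      _ = ENNReal.ofReal (∑ p : (Fin n → Fin 3) × (Fin n → Fin 3),
            (9/28) * (β^(i+1) / τ^i) * (EOR b β n p.1 + EOR b β n p.2)) := by
          rw [tsum_fintype]
          rw [← ENNReal.ofReal_sum_of_nonneg]
          intro p _
          have h1 := EOR_nonneg hb0.le hβ0.le n p.1
          have h2 := EOR_nonneg hb0.le hβ0.le n p.2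
          have h3 : 0 < β^(i+1) := pow_pos hβ0 _
          have h4 : 0 < τ^i := pow_pos hτ i
          positivity
      _ ≤ ENNReal.ofReal ((9/14) * (β^(i+1) / τ^i) * θ^n) := by
          apply ENNReal.ofReal_le_ofReal
          have hcard : ((Fintype.card (Fin n → Fin 3) : ℕ) : ℝ) = 3^n := by
            simp [Fintype.card_fun]
          have hsum : ∑ p : (Fin n → Fin 3) × (Fin n → Fin 3),
              (EOR b β n p.1 + EOR b β n p.2) = 2 * 3^n * (β + b + 1/9)^n := by
            rw [Fintype.sum_prod_type]
            have h1 : ∀ w : Fin n → Fin 3, ∑ w' : Fin n → Fin 3, (EOR b β n w + EOR b β n w')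
                = 3^n * EOR b β n w + (β+b+1/9)^n := by
              intro w
              rw [Finset.sum_add_distrib, Finset.sum_const, EOR_sum, Finset.card_univ,
                nsmul_eq_mul, hcard]
            rw [Finset.sum_congr rfl (fun w _ => h1 w), Finset.sum_add_distrib,
              ← Finset.mul_sum, EOR_sum, Finset.sum_const, Finset.card_univ, nsmul_eq_mul, hcard]
            ring
          rw [← Finset.mul_sum, hsum]
          have hθn : (2:ℝ) * 3^n * (β + b + 1/9)^n = 2 * θ^n := by
            have h5 : (3:ℝ)*(β+b+1/9) = θ := by rw [hθ]; ring
            rw [mul_assoc, ← mul_pow, h5]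
          rw [hθn]
          have h4 : 0 < τ^i := pow_pos hτ i
          have h3 : 0 < β^(i+1) := pow_pos hβ0 _
          have hθn0 : 0 ≤ θ^n := le_of_lt (pow_pos hθ0 n)
          rw [show (9:ℝ)/14 * (β^(i+1)/τ^i) * θ^n = (9/28) * (β^(i+1)/τ^i) * (2*θ^n) by ring]
  -- take the limit
  have hlim : Filter.Tendsto (fun n : ℕ => ENNReal.ofReal ((9/14) * (β^(i+1) / τ^i) * θ^n))
      Filter.atTop (nhds 0) := by
    rw [show (0 : ENNReal) = ENNReal.ofReal ((9/14) * (β^(i+1) / τ^i) * 0) by simp]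
    apply ENNReal.tendsto_ofReal
    exact (tendsto_pow_atTop_nhds_zero_of_lt_one hθ0.le hθ1).const_mul _
  exact le_antisymm (ge_of_tendsto' hlim hbound) (zero_le)

lemma EOzero_mem {b t : ℝ} {K : Set ℝ} (ht0 : 0 < t) (ht9 : t < 1/9)
    (hne : K.Nonempty) (hcomp : IsCompact K)
    (heq : K = (fun x => t * x) '' K ∪ (fun x => b * x) '' K ∪ (fun x => (x + 8) / 9) '' K) :
    (0:ℝ) ∈ K := by
  have hK1 : ∀ x ∈ K, t * x ∈ K := by
    intro x hx
    rw [heq]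
    exact Or.inl (Or.inl ⟨x, hx, rfl⟩)
  obtain ⟨q, hq⟩ := hne
  have hiter : ∀ n : ℕ, t^n * q ∈ K := by
    intro n
    induction n with
    | zero => simpa using hq
    | succ n ih => rw [pow_succ', mul_assoc]; exact hK1 _ ih
  have hlim : Filter.Tendsto (fun n : ℕ => t^n * q) Filter.atTop (nhds 0) := by
    have h1 : Filter.Tendsto (fun n : ℕ => t^n) Filter.atTop (nhds 0) :=
      tendsto_pow_atTop_nhds_zero_of_lt_one ht0.le (by linarith)
    simpa using h1.mul_const q
  exact hcomp.isClosed.mem_of_tendsto hlim (Filter.Eventually.of_forall hiter)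

lemma EOdecomp {b t : ℝ} {K : Set ℝ} (hb0 : 0 < b) (hb9 : b < 1/9)
    (ht0 : 0 < t) (ht9 : t < 1/9) (hsub : K ⊆ Icc 0 1)
    (heq : K = (fun x => t * x) '' K ∪ (fun x => b * x) '' K ∪ (fun x => (x + 8) / 9) '' K) :
    ∀ n : ℕ, ∀ a ∈ K, (1/9:ℝ)^n < a → ∃ i j : ℕ, ∃ y : ℝ, y ∈ K ∧ 8/9 ≤ y ∧
      a = t^i * b^j * y ∧ ∀ i' ≤ i, ∀ j' ≤ j, t^i' * b^j' * y ∈ K := by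
  have hK1 : ∀ x ∈ K, t * x ∈ K := fun x hx => by
    rw [heq]; exact Or.inl (Or.inl ⟨x, hx, rfl⟩)
  have hK2 : ∀ x ∈ K, b * x ∈ K := fun x hx => by
    rw [heq]; exact Or.inl (Or.inr ⟨x, hx, rfl⟩)
  intro n
  induction n with
  | zero =>
    intro a ha h1
    exact absurd (hsub ha).2 (by simpa using h1)
  | succ n ih =>
    intro a ha h1
    have ha' := ha
    rw [heq] at ha'
    have hpowpos : (0:ℝ) < (1/9)^n := by positivity
    rcases ha' with (⟨x, hx, hxa⟩ | ⟨x, hx, hxa⟩) | ⟨x, hx, hxa⟩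
    · -- a = t * x
      simp only at hxa
      have hxK := hsub hx
      have hxn : (1/9:ℝ)^n < x := by
        by_contra hcon
        push_neg at hcon
        have : a ≤ t * (1/9)^n := by rw [← hxa]; nlinarith [hxK.1]
        have : t * (1/9)^n < (1/9)^(n+1) := by rw [pow_succ']; nlinarith
        linarith [h1]
      obtain ⟨i, j, y, hy, hy89, hay, hchain⟩ := ih x hx hxn
      refine ⟨i+1, j, y, hy, hy89, ?_, ?_⟩
      · rw [← hxa, hay, pow_succ']; ring
      · intro i' hi' j' hj'
        rcases (by omega : i' ≤ i ∨ i' = i + 1) with h | rfl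
        · exact hchain i' h j' hj'
        · have := hK1 _ (hchain i le_rfl j' hj')
          rw [pow_succ'] at *
          convert this using 1
          ring
    · -- a = b * x
      simp only at hxa
      have hxK := hsub hx
      have hxn : (1/9:ℝ)^n < x := by
        by_contra hcon
        push_neg at hcon
        have : a ≤ b * (1/9)^n := by rw [← hxa]; nlinarith [hxK.1]
        have : b * (1/9)^n < (1/9)^(n+1) := by rw [pow_succ']; nlinarith
        linarith [h1]
      obtain ⟨i, j, y, hy, hy89, hay, hchain⟩ := ih x hx hxn
      refine ⟨i, j+1, y, hy, hy89, ?_, ?_⟩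
      · rw [← hxa, hay, pow_succ']; ring
      · intro i' hi' j' hj'
        rcases (by omega : j' ≤ j ∨ j' = j + 1) with h | rfl
        · exact hchain i' hi' j' h
        · have := hK2 _ (hchain i' hi' j le_rfl)
          rw [pow_succ'] at *
          convert this using 1
          ring
    · -- a = (x + 8) / 9
      simp only at hxa
      have hxK := hsub hx
      refine ⟨0, 0, a, ha, by rw [← hxa]; linarith [hxK.1], by ring, ?_⟩
      intro i' hi' j' hj'
      interval_cases i'
      interval_cases j'
      simpa using ha

lemma EOthird {b t : ℝ} {K : Set ℝ} (hb0 : 0 < b) (hb9 : b < 1/9)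
    (ht0 : 0 < t) (ht9 : t < 1/9) (hsub : K ⊆ Icc 0 1)
    (heq : K = (fun x => t * x) '' K ∪ (fun x => b * x) '' K ∪ (fun x => (x + 8) / 9) '' K)
    {y : ℝ} (hy : y ∈ K) (hy89 : 8/9 ≤ y) : ∃ u ∈ K, y = (u + 8) / 9 := by
  have hy' := hy
  rw [heq] at hy'
  rcases hy' with (⟨x, hx, hxy⟩ | ⟨x, hx, hxy⟩) | ⟨x, hx, hxy⟩
  · simp only at hxy
    have hxK := hsub hx
    nlinarith [hxK.1, hxK.2]
  · simp only at hxy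
    have hxK := hsub hx
    nlinarith [hxK.1, hxK.2]
  · exact ⟨x, hx, hxy.symm⟩

lemma EOoverlap {b t : ℝ} {K : Set ℝ} (hb0 : 0 < b) (hb9 : b < 1/9)
    (ht0 : 0 < t) (ht9 : t < 1/9)
    (hne : K.Nonempty) (hcomp : IsCompact K) (hsub : K ⊆ Icc 0 1)
    (heq : K = (fun x => t * x) '' K ∪ (fun x => b * x) '' K ∪ (fun x => (x + 8) / 9) '' K)
    (hbad : ¬ ((fun x => t * x) '' K ∩ (fun x => b * x) '' K = (fun x => t * (b * x)) '' K)) :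
    ∃ i l : ℕ, ∃ u ∈ K, ∃ v ∈ K, t^(i+1) * (u+8) = b^(l+1) * (v+8) := by
  have hK1 : ∀ x ∈ K, t * x ∈ K := fun x hx => by
    rw [heq]; exact Or.inl (Or.inl ⟨x, hx, rfl⟩)
  have hK2 : ∀ x ∈ K, b * x ∈ K := fun x hx => by
    rw [heq]; exact Or.inl (Or.inr ⟨x, hx, rfl⟩)
  -- the inclusion ⊇ always holds
  have hsup : (fun x => t * (b * x)) '' K ⊆ (fun x => t * x) '' K ∩ (fun x => b * x) '' K := by
    rintro p ⟨x, hx, rfl⟩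
    exact ⟨⟨b * x, hK2 x hx, rfl⟩, ⟨t * x, hK1 x hx, by ring⟩⟩
  -- so there is a point witnessing failure of ⊆
  have hex : ∃ p ∈ (fun x => t * x) '' K ∩ (fun x => b * x) '' K,
      p ∉ (fun x => t * (b * x)) '' K := by
    by_contra hcon
    push_neg at hcon
    exact hbad (Subset.antisymm hcon hsup)
  obtain ⟨p, ⟨⟨a, ha, hap⟩, ⟨c, hc, hcp⟩⟩, hpnot⟩ := hex
  simp only at hap hcp
  have haK := hsub ha
  have hcK := hsub hc
  rcases eq_or_lt_of_le haK.1 with h0 | hapos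
  · -- a = 0
    exfalso
    apply hpnot
    have h0K : (0:ℝ) ∈ K := EOzero_mem ht0 ht9 hne hcomp heq
    exact ⟨0, h0K, by rw [← hap, ← h0]; ring⟩
  have hcpos : 0 < c := by nlinarith
  obtain ⟨n, hn⟩ := exists_pow_lt_of_lt_one hapos (by norm_num : (1/9:ℝ) < 1)
  obtain ⟨m, hm⟩ := exists_pow_lt_of_lt_one hcpos (by norm_num : (1/9:ℝ) < 1)
  obtain ⟨i, j, y, hy, hy89, hay, hchain⟩ := EOdecomp hb0 hb9 ht0 ht9 hsub heq n a ha hn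
  obtain ⟨k, l, z, hz, hz89, hcz, hchain'⟩ := EOdecomp hb0 hb9 ht0 ht9 hsub heq m c hc hm
  rcases Nat.eq_zero_or_pos j with rfl | hj
  · rcases Nat.eq_zero_or_pos k with rfl | hk
    · -- the genuinely bad case
      obtain ⟨u, hu, hyu⟩ := EOthird hb0 hb9 ht0 ht9 hsub heq hy hy89
      obtain ⟨v, hv, hzv⟩ := EOthird hb0 hb9 ht0 ht9 hsub heq hz hz89
      refine ⟨i, l, u, hu, v, hv, ?_⟩
      have h1 : t * a = t^(i+1) * y := by rw [hay]; rw [pow_succ']; ring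
      have h2 : b * c = b^(l+1) * z := by rw [hcz]; rw [pow_succ']; ring
      have h3 : t^(i+1) * y = b^(l+1) * z := by rw [← h1, ← h2, hap, hcp]
      rw [hyu] at h3
      rw [hzv] at h3
      nlinarith [h3]
    · -- c has a factor t
      exfalso
      apply hpnot
      obtain ⟨k', rfl⟩ : ∃ k', k = k' + 1 := ⟨k - 1, by omega⟩
      have hw : t^k' * b^l * z ∈ K := hchain' k' (by omega) l le_rfl
      refine ⟨t^k' * b^l * z, hw, ?_⟩
      rw [← hcp, hcz, pow_succ']
      ring
  · -- a has a factor b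
    exfalso
    apply hpnot
    obtain ⟨j', rfl⟩ : ∃ j', j = j' + 1 := ⟨j - 1, by omega⟩
    have hw : t^i * b^j' * y ∈ K := hchain i le_rfl j' (by omega)
    refine ⟨t^i * b^j' * y, hw, ?_⟩
    rw [← hap, hay, pow_succ']
    ring

/-- For fixed `b ∈ (0,1/9)`, for Lebesgue-almost all `t ∈ (0,1/9)` the system
`{tx, bx, (x+8)/9}` has the exact overlap `S₁(K_t) ∩ S₂(K_t) = S₁S₂(K_t)`. -/
theorem exact_overlap_ae (b : ℝ) (hb : b ∈ Ioo (0 : ℝ) (1 / 9))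
    (K : ℝ → Set ℝ)
    (hK : ∀ t ∈ Ioo (0 : ℝ) (1 / 9), (K t).Nonempty ∧ IsCompact (K t) ∧
      K t ⊆ Icc 0 1 ∧
      K t = (fun x => t * x) '' K t ∪ (fun x => b * x) '' K t ∪
        (fun x => (x + 8) / 9) '' K t) :
    volume {t ∈ Ioo (0 : ℝ) (1 / 9) |
      ¬ ((fun x => t * x) '' K t ∩ (fun x => b * x) '' K t =
        (fun x => t * (b * x)) '' K t)} = 0 := by
  obtain ⟨hb0, hb9⟩ := hb
  have hsubset : {t ∈ Ioo (0 : ℝ) (1 / 9) |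
      ¬ ((fun x => t * x) '' K t ∩ (fun x => b * x) '' K t =
        (fun x => t * (b * x)) '' K t)} ⊆
      ⋃ p : ℕ × ℕ × ℕ, {t : ℝ | t ∈ Icc (1/((p.2.2:ℝ)+2)) (1/9 - 1/((p.2.2:ℝ)+2)) ∧
        ∃ u ∈ K t, ∃ v ∈ K t, t^(p.1+1) * (u+8) = b^(p.2.1+1) * (v+8)} := by
    rintro t ⟨htIoo, hbad⟩
    obtain ⟨hne, hcomp, hsub, heqK⟩ := hK t htIoo
    obtain ⟨i, l, u, hu, v, hv, heq2⟩ :=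
      EOoverlap hb0 hb9 htIoo.1 htIoo.2 hne hcomp hsub heqK hbad
    have hεpos : 0 < min t (1/9 - t) := lt_min htIoo.1 (by linarith [htIoo.2])
    obtain ⟨m, hm⟩ := exists_nat_one_div_lt hεpos
    have h1 : (1:ℝ)/(m+2) ≤ 1/(m+1) := by
      apply one_div_le_one_div_of_le
      · positivity
      · linarith
    have h2 := min_le_left t (1/9 - t)
    have h3 := min_le_right t (1/9 - t)
    refine mem_iUnion.2 ⟨(i, l, m), ⟨?_, ?_⟩, u, hu, v, hv, heq2⟩
    · push_cast
      linarith
    · push_cast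
      linarith
  have hnull : ∀ p : ℕ × ℕ × ℕ,
      volume {t : ℝ | t ∈ Icc (1/((p.2.2:ℝ)+2)) (1/9 - 1/((p.2.2:ℝ)+2)) ∧
        ∃ u ∈ K t, ∃ v ∈ K t, t^(p.1+1) * (u+8) = b^(p.2.1+1) * (v+8)} = 0 := by
    intro p
    have hp2 : (0:ℝ) < 1/((p.2.2:ℝ)+2) := by positivity
    exact EObad_null b hb0 hb9 K hK p.1 p.2.1 (1/((p.2.2:ℝ)+2)) (1/9 - 1/((p.2.2:ℝ)+2))
      hp2 (by linarith)
  refine measure_mono_null hsubset ?_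
  refine le_antisymm (le_trans (measure_iUnion_le _) ?_) (zero_le)
  have : ∀ p : ℕ × ℕ × ℕ,
      volume {t : ℝ | t ∈ Icc (1/((p.2.2:ℝ)+2)) (1/9 - 1/((p.2.2:ℝ)+2)) ∧
        ∃ u ∈ K t, ∃ v ∈ K t, t^(p.1+1) * (u+8) = b^(p.2.1+1) * (v+8)} = (0 : ENNReal) := hnull
  rw [tsum_congr this, tsum_zero]
end

section
/- Fix p, r ∈ (0, 1/36) with log p / log r irrational, and h = 1/2, a = 1/3. Consider the system S_q = {S1(x)=px, S2(x)=a+rx, S3(x)=h−qx, S4(x)=h−r+rx, S5(x)=1−a−rx, S6(x)=1−r+rx} on [0,1] with q ∈ (0, 1/36). Then for every q ∈ (0,1/36), the system S_q does not satisfy the Weak Separation Property. -/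
open Set MeasureTheory


lemma tn (a : ℤ) (h : 0 ≤ a) : ((a.toNat : ℕ) : ℝ) = (a : ℝ) := by
  exact_mod_cast congrArg (Int.cast : ℤ → ℝ) (Int.toNat_of_nonneg h)

lemma letn (a : ℤ) : (a : ℝ) ≤ ((a.toNat : ℕ) : ℝ) := by
  exact_mod_cast Int.self_le_toNat a

lemma step_hit (g T ε : ℝ) (hg0 : 0 < g) (hgε : g < ε) (hT : 0 ≤ T) :
    ∃ j : ℕ, T < (j : ℝ) * g ∧ (j : ℝ) * g < T + ε := by
  have hfl : (0 : ℤ) ≤ ⌊T / g⌋ := Int.floor_nonneg.2 (div_nonneg hT hg0.le)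
  have hcast : ((⌊T / g⌋ + 1).toNat : ℝ) = (⌊T / g⌋ : ℝ) + 1 := by
    rw [tn _ (by omega)]; push_cast; ring
  refine ⟨(⌊T / g⌋ + 1).toNat, ?_, ?_⟩
  · rw [hcast]
    have h1 : T / g < (⌊T / g⌋ : ℝ) + 1 := Int.lt_floor_add_one _
    calc T = T / g * g := by field_simp
    _ < ((⌊T / g⌋ : ℝ) + 1) * g := by exact mul_lt_mul_of_pos_right h1 hg0
  · rw [hcast]
    have h1 : (⌊T / g⌋ : ℝ) ≤ T / g := Int.floor_le _
    have h2 : ((⌊T / g⌋ : ℝ) + 1) * g ≤ T + g := by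
      have := mul_le_mul_of_nonneg_right h1 hg0.le
      rw [div_mul_cancel₀ _ hg0.ne'] at this
      linarith
    linarith

lemma exists_hit (θ : ℝ) (hθ : Irrational θ) (hθ0 : 0 < θ) (γ ε : ℝ) (hε0 : 0 < ε)
    (hε1 : ε < 1) : ∃ m n : ℕ, γ < (m : ℝ) * θ - n ∧ (m : ℝ) * θ - n < γ + ε := by
  set S := AddSubgroup.closure ({θ, 1} : Set ℝ) with hS
  rcases S.dense_or_cyclic with hd | ⟨x0, hx0⟩
  · -- dense case
    obtain ⟨g, hgS, hg⟩ := hd.exists_mem_open (isOpen_Ioo : IsOpen (Ioo (0:ℝ) ε))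
      (Set.nonempty_Ioo.mpr hε0)
    obtain ⟨hg0, hgε⟩ := hg
    have hgS' : g ∈ AddSubgroup.closure ({θ, 1} : Set ℝ) := hgS
    rw [AddSubgroup.mem_closure_pair] at hgS'
    obtain ⟨a, b, hab⟩ := hgS'
    simp only [zsmul_eq_mul, mul_one] at hab
    rcases lt_trichotomy a 0 with ha | ha | ha
    · -- a < 0 : g = b - a'·θ with a' = -a ≥ 1, b ≥ 1
      have ha' : (1 : ℝ) ≤ ((-a).toNat : ℝ) := by
        rw [tn _ (by omega)]
        have : (1:ℤ) ≤ -a := by omega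
        exact_mod_cast this
      have hath : ((-a).toNat : ℝ) * θ = (b : ℝ) - g := by
        rw [tn _ (by omega)]; push_cast; linarith
      have hb1 : (1 : ℝ) ≤ (b : ℝ) := by
        have hb0 : (0:ℝ) < b := by nlinarith
        have : (0:ℤ) < b := by exact_mod_cast hb0
        exact_mod_cast this
      set N : ℕ := (⌈max (γ + ε) ((γ + ε) / (1 - g))⌉).toNat with hN
      have hN1 : γ + ε ≤ (N : ℝ) :=
        le_trans (le_trans (le_max_left _ _) (Int.le_ceil _)) (letn _)
      have hN2 : (γ + ε) / (1 - g) ≤ (N : ℝ) :=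
        le_trans (le_trans (le_max_right _ _) (Int.le_ceil _)) (letn _)
      have h1g : (0:ℝ) < 1 - g := by linarith
      have hNg : (N : ℝ) * g ≤ (N : ℝ) - γ - ε := by
        have := (div_le_iff₀ h1g).1 hN2
        nlinarith
      obtain ⟨j, hj1, hj2⟩ := step_hit g ((N : ℝ) - γ - ε) ε hg0 hgε (by linarith)
      have hjN : (N : ℝ) < j := by
        have h := lt_of_le_of_lt hNg hj1
        exact lt_of_mul_lt_mul_right h hg0.le
      have hnn : (0:ℝ) < (j : ℝ) * (b : ℝ) - N := by nlinarith [Nat.cast_nonneg (α := ℝ) j]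
      have hnZ : (0:ℤ) ≤ (j : ℤ) * b - (N : ℤ) := by
        have h : (0:ℝ) < (((j : ℤ) * b - (N : ℤ) : ℤ) : ℝ) := by push_cast; linarith
        exact_mod_cast h.le
      have hmθ : ((j * (-a).toNat : ℕ) : ℝ) * θ = (j:ℝ) * ((b:ℝ) - g) := by
        push_cast
        rw [mul_assoc, hath]
      have hn : ((((j : ℤ) * b - (N : ℤ)).toNat : ℕ) : ℝ) = (j:ℝ) * (b:ℝ) - N := by
        rw [tn _ hnZ]; push_cast; ring
      exact ⟨j * (-a).toNat, ((j : ℤ) * b - (N : ℤ)).toNat,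
        by rw [hmθ, hn]; nlinarith, by rw [hmθ, hn]; nlinarith⟩
    · -- a = 0 : impossible
      subst ha
      simp only [Int.cast_zero, zero_mul, zero_add] at hab
      have : (1:ℝ) ≤ (b:ℝ) := by
        have : (0:ℤ) < b := by exact_mod_cast hab ▸ hg0
        exact_mod_cast this
      linarith
    · -- a > 0 : g = a·θ - b' with b' = -b ≥ 0
      have hb' : (0:ℤ) ≤ -b := by
        by_contra h
        have hb1 : (1:ℝ) ≤ (b:ℝ) := by
          have : (1:ℤ) ≤ b := by omega
          exact_mod_cast this
        have ha1 : (1:ℝ) ≤ (a:ℝ) := by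
          have : (1:ℤ) ≤ a := by omega
          exact_mod_cast this
        nlinarith
      have hath : ((a).toNat : ℝ) * θ = g + ((-b).toNat : ℝ) := by
        rw [tn _ (by omega), tn _ hb']; push_cast; linarith
      set N : ℕ := (⌈-γ⌉).toNat with hN
      have hN1 : -γ ≤ (N : ℝ) := le_trans (Int.le_ceil _) (letn _)
      obtain ⟨j, hj1, hj2⟩ := step_hit g (γ + N) ε hg0 hgε (by linarith)
      have hmθ : ((j * a.toNat : ℕ) : ℝ) * θ = (j:ℝ) * (g + ((-b).toNat : ℝ)) := by
        push_cast
        rw [mul_assoc, hath]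
      refine ⟨j * a.toNat, j * (-b).toNat + N, ?_, ?_⟩ <;>
        · rw [hmθ]; push_cast; nlinarith
  · -- cyclic case: contradicts irrationality
    exfalso
    have hθS : θ ∈ S := AddSubgroup.subset_closure (by simp)
    have h1S : (1:ℝ) ∈ S := AddSubgroup.subset_closure (by simp)
    rw [hx0, AddSubgroup.mem_closure_singleton] at hθS h1S
    obtain ⟨k, hk⟩ := hθS
    obtain ⟨l, hl⟩ := h1S
    simp only [zsmul_eq_mul] at hk hl
    have hl0 : (l : ℝ) ≠ 0 := by
      intro h; rw [h, zero_mul] at hl; exact one_ne_zero hl.symm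
    refine hθ ⟨(k : ℚ) / (l : ℚ), ?_⟩
    have hx0v : x0 = 1 / l := by field_simp; linarith [hl]
    rw [← hk, hx0v]
    have hl0' : (l : ℚ) ≠ 0 := by exact_mod_cast fun h => hl0 (by exact_mod_cast h)
    push_cast
    field_simp

lemma ratio_approx (p r q : ℝ) (hp0 : 0 < p) (hp1 : p < 1) (hr0 : 0 < r) (hr1 : r < 1)
    (hq : 0 < q) (hirr : Irrational (Real.log p / Real.log r)) (ε : ℝ) (hε0 : 0 < ε)
    (hε1 : ε < 1) :
    ∃ m n : ℕ, Real.exp (-ε) < q * p ^ m / r ^ (n + 1) ∧ q * p ^ m / r ^ (n + 1) < 1 := by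
  set α : ℝ := -Real.log p with hα
  set β : ℝ := -Real.log r with hβ
  have hα0 : 0 < α := by simp [hα]; exact Real.log_neg hp0 hp1
  have hβ0 : 0 < β := by simp [hβ]; exact Real.log_neg hr0 hr1
  set θ : ℝ := α / β with hθdef
  have hθ0 : 0 < θ := div_pos hα0 hβ0
  have hθeq : θ = Real.log p / Real.log r := by rw [hθdef, hα, hβ, neg_div_neg_eq]
  have hθirr : Irrational θ := hθeq ▸ hirr
  set ε' : ℝ := min ε (ε / β) with hε'
  have hε'0 : 0 < ε' := lt_min hε0 (div_pos hε0 hβ0)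
  have hε'1 : ε' < 1 := lt_of_le_of_lt (min_le_left _ _) hε1
  obtain ⟨m, n, h1, h2⟩ := exists_hit θ hθirr hθ0 ((Real.log q + β) / β) ε' hε'0 hε'1
  refine ⟨m, n, ?_, ?_⟩
  · have hA0 : 0 < q * p ^ m / r ^ (n + 1) :=
      div_pos (mul_pos hq (pow_pos hp0 m)) (pow_pos hr0 (n + 1))
    have hlog : Real.log (q * p ^ m / r ^ (n + 1)) =
        Real.log q + m * Real.log p - (n + 1) * Real.log r := by
      rw [Real.log_div (mul_pos hq (pow_pos hp0 m)).ne' (pow_pos hr0 (n + 1)).ne',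
        Real.log_mul hq.ne' (pow_pos hp0 m).ne', Real.log_pow, Real.log_pow]
      push_cast; ring
    have hβε : β * ε' ≤ ε := by
      have : ε' ≤ ε / β := min_le_right _ _
      calc β * ε' ≤ β * (ε / β) := by nlinarith
      _ = ε := by field_simp
    have hlb : -ε < Real.log (q * p ^ m / r ^ (n + 1)) := by
      rw [hlog]
      have hexp : Real.log q + m * Real.log p - (n + 1) * Real.log r
          = (Real.log q + β) - β * ((m : ℝ) * θ - n) := by
        rw [hα, hβ] at *
        have hbne : Real.log r ≠ 0 := by intro h; rw [hβ, h] at hβ0; simp at hβ0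
        field_simp [hθdef, hα, hβ]
        have hθr : Real.log r * θ = Real.log p := by rw [hθeq]; field_simp
        linear_combination (-(m:ℝ)) * hθr
      rw [hexp]
      have hβγ : β * ((Real.log q + β) / β) = Real.log q + β := by field_simp
      have hkey : β * ((m:ℝ) * θ - n) < (Real.log q + β) + β * ε' := by
        have h := mul_lt_mul_of_pos_left h2 hβ0
        rwa [mul_add, hβγ] at h
      linarith
    calc Real.exp (-ε) < Real.exp (Real.log (q * p ^ m / r ^ (n + 1))) := by
          exact Real.exp_lt_exp.2 hlb
    _ = q * p ^ m / r ^ (n + 1) := Real.exp_log hA0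
  · have hA0 : 0 < q * p ^ m / r ^ (n + 1) :=
      div_pos (mul_pos hq (pow_pos hp0 m)) (pow_pos hr0 (n + 1))
    have hlog : Real.log (q * p ^ m / r ^ (n + 1)) =
        Real.log q + m * Real.log p - (n + 1) * Real.log r := by
      rw [Real.log_div (mul_pos hq (pow_pos hp0 m)).ne' (pow_pos hr0 (n + 1)).ne',
        Real.log_mul hq.ne' (pow_pos hp0 m).ne', Real.log_pow, Real.log_pow]
      push_cast; ring
    have hub : Real.log (q * p ^ m / r ^ (n + 1)) < 0 := by
      rw [hlog]
      have hexp : Real.log q + m * Real.log p - (n + 1) * Real.log r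
          = (Real.log q + β) - β * ((m : ℝ) * θ - n) := by
        have hbne : Real.log r ≠ 0 := by intro h; rw [hβ, h] at hβ0; simp at hβ0
        field_simp [hθdef, hα, hβ]
        rw [hβ]
        have hθr : Real.log r * θ = Real.log p := by rw [hθeq]; field_simp
        linear_combination (-(m:ℝ)) * hθr
      rw [hexp]
      have hβγ : β * ((Real.log q + β) / β) = Real.log q + β := by field_simp
      have hkey : Real.log q + β < β * ((m:ℝ) * θ - n) := by
        have h := mul_lt_mul_of_pos_left h1 hβ0
        rwa [hβγ] at h
      linarith
    have := Real.exp_lt_exp.2 hub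
    rwa [Real.exp_log hA0, Real.exp_zero] at this


/-- The system `{px, a+rx, h−qx, h−r+rx, 1−a−rx, 1−r+rx}` with
`h = 1/2`, `a = 1/3`. -/
noncomputable def sys6 (p q r : ℝ) : Fin 6 → ℝ → ℝ :=
  ![fun x => p * x, fun x => 1 / 3 + r * x, fun x => 1 / 2 - q * x,
    fun x => 1 / 2 - r + r * x, fun x => 1 - 1 / 3 - r * x,
    fun x => 1 - r + r * x]

/-- `word6 p q r j = S_{j₁} ∘ … ∘ S_{jₙ}`. -/
noncomputable def word6 (p q r : ℝ) (w : List (Fin 6)) : ℝ → ℝ :=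
  w.foldr (fun i g => sys6 p q r i ∘ g) id

lemma word6_cons (p q r : ℝ) (i : Fin 6) (w : List (Fin 6)) (x : ℝ) :
    word6 p q r (i :: w) x = sys6 p q r i (word6 p q r w x) := rfl

lemma word6_append (p q r : ℝ) (w1 w2 : List (Fin 6)) :
    ∀ x, word6 p q r (w1 ++ w2) x = word6 p q r w1 (word6 p q r w2 x) := by
  induction w1 with
  | nil => intro x; rfl
  | cons a l ih =>
    intro x
    rw [List.cons_append, word6_cons, word6_cons, ih]

lemma sys6_eval (p q r x : ℝ) :
    sys6 p q r 0 x = p * x ∧ sys6 p q r 1 x = 1 / 3 + r * x ∧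
    sys6 p q r 2 x = 1 / 2 - q * x ∧ sys6 p q r 3 x = 1 / 2 - r + r * x ∧
    sys6 p q r 4 x = 1 - 1 / 3 - r * x ∧ sys6 p q r 5 x = 1 - r + r * x := by
  refine ⟨rfl, rfl, rfl, rfl, rfl, rfl⟩

lemma word6_rep5 (p q r : ℝ) (n : ℕ) :
    ∀ x, word6 p q r (List.replicate n 5) x = 1 - r ^ n + r ^ n * x := by
  induction n with
  | zero => intro x; simp [word6]
  | succ k ih =>
    intro x
    rw [List.replicate_succ, word6_cons, ih]
    show 1 - r + r * _ = _
    ring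

lemma word6_rep0 (p q r : ℝ) (m : ℕ) :
    ∀ x, word6 p q r (List.replicate m 0) x = p ^ m * x := by
  induction m with
  | zero => intro x; simp [word6]
  | succ k ih =>
    intro x
    rw [List.replicate_succ, word6_cons, ih]
    show p * _ = _
    ring


/-- If `p, r ∈ (0,1/36)` and `log p / log r` is irrational, then for every
`q ∈ (0,1/36)` the system `S_q` does not satisfy the Weak Separation Property:
the identity lies in the closure of `{S_i⁻¹ S_j : i, j ∈ I*} ∖ {Id}`. -/
theorem violation_of_WSP_six_maps (p r : ℝ)
    (hp : p ∈ Ioo (0 : ℝ) (1 / 36)) (hr : r ∈ Ioo (0 : ℝ) (1 / 36))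
    (hirr : Irrational (Real.log p / Real.log r)) :
    ∀ q ∈ Ioo (0 : ℝ) (1 / 36),
      ContinuousMap.id ℝ ∈ closure {f : C(ℝ, ℝ) |
        (∃ i j : List (Fin 6), i ≠ [] ∧ j ≠ [] ∧
          ∀ x, word6 p q r i (f x) = word6 p q r j x) ∧
        f ≠ ContinuousMap.id ℝ} := by
  rintro q ⟨hq0, hq1⟩
  obtain ⟨hp0, hp1⟩ := hp
  obtain ⟨hr0, hr1⟩ := hr
  have hp1' : p < 1 := lt_trans hp1 (by norm_num)
  have hr1' : r < 1 := lt_trans hr1 (by norm_num)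
  have hsel : ∀ k : ℕ, ∃ mm nn : ℕ,
      Real.exp (-(1 / (k + 2))) < q * p ^ mm / r ^ (nn + 1) ∧
      q * p ^ mm / r ^ (nn + 1) < 1 := by
    intro k
    refine ratio_approx p r q hp0 hp1' hr0 hr1' hq0 hirr (1 / (k + 2)) (by positivity) ?_
    rw [div_lt_one (by positivity)]
    have : (0:ℝ) ≤ (k:ℝ) := Nat.cast_nonneg k
    linarith
  choose m n hA1 hA2 using hsel
  set A : ℕ → ℝ := fun k => q * p ^ (m k) / r ^ (n k + 1) with hA
  set B : ℕ → ℝ := fun k => 2 / 3 * (1 - A k) / r with hB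
  set F : ℕ → C(ℝ, ℝ) := fun k =>
    ⟨fun x => B k + A k * x, by fun_prop⟩ with hF
  have hlow : Filter.Tendsto (fun k : ℕ => Real.exp (-(1 / (k + 2)))) Filter.atTop (nhds 1) := by
    have h0 : Filter.Tendsto (fun k : ℕ => (1:ℝ) / (k + 2)) Filter.atTop (nhds 0) := by
      have h1 : Filter.Tendsto (fun k : ℕ => ((k:ℝ) + 2)) Filter.atTop Filter.atTop :=
        Filter.tendsto_atTop_add_const_right _ 2 tendsto_natCast_atTop_atTop
      have h2 := tendsto_inv_atTop_zero.comp h1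
      simpa [one_div, Function.comp_def] using h2
    have h0n := h0.neg
    rw [neg_zero] at h0n
    have := (Real.continuous_exp.tendsto 0).comp h0n
    simpa [Function.comp_def] using this
  have hAtend : Filter.Tendsto A Filter.atTop (nhds 1) :=
    tendsto_of_tendsto_of_tendsto_of_le_of_le hlow tendsto_const_nhds
      (fun k => (hA1 k).le) (fun k => (hA2 k).le)
  have hBtend : Filter.Tendsto B Filter.atTop (nhds 0) := by
    have h1 : Filter.Tendsto (fun k => (1:ℝ) - A k) Filter.atTop (nhds (1 - 1)) :=
      Filter.Tendsto.sub tendsto_const_nhds hAtend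
    have h : Filter.Tendsto (fun k => 2 / 3 * ((1:ℝ) - A k) / r) Filter.atTop
        (nhds (2 / 3 * (1 - 1) / r)) := (h1.const_mul (2 / 3)).div_const r
    simpa [hB] using h
  have hFtend : Filter.Tendsto F Filter.atTop (nhds (ContinuousMap.id ℝ)) := by
    rw [ContinuousMap.tendsto_iff_forall_isCompact_tendstoUniformlyOn]
    intro K hK
    rw [Metric.tendstoUniformlyOn_iff]
    intro ε hε
    obtain ⟨R, hRK⟩ := hK.isBounded.subset_closedBall 0
    have hRK' : ∀ x ∈ K, |x| ≤ R := by
      intro x hx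
      have := hRK hx
      rwa [Metric.mem_closedBall, Real.dist_eq, sub_zero] at this
    have hQ : Filter.Tendsto (fun k => |B k| + |1 - A k| * R) Filter.atTop (nhds 0) := by
      have h1 : Filter.Tendsto (fun k => |B k|) Filter.atTop (nhds 0) := by
        simpa using hBtend.abs
      have h2 : Filter.Tendsto (fun k => |1 - A k| * R) Filter.atTop (nhds 0) := by
        have hs : Filter.Tendsto (fun k => (1:ℝ) - A k) Filter.atTop (nhds (1 - 1)) :=
          Filter.Tendsto.sub tendsto_const_nhds hAtend
        have := (hs.abs).mul_const R
        simpa using this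
      simpa using h1.add h2
    filter_upwards [hQ.eventually (gt_mem_nhds hε)] with k hk x hx
    have hFx : F k x = B k + A k * x := rfl
    rw [ContinuousMap.id_apply, hFx, Real.dist_eq]
    have he : x - (B k + A k * x) = -B k + (1 - A k) * x := by ring
    calc |x - (B k + A k * x)| = |-B k + (1 - A k) * x| := by rw [he]
    _ ≤ |B k| + |1 - A k| * |x| := by
        refine le_trans (abs_add_le _ _) ?_
        rw [abs_neg, abs_mul]
    _ ≤ |B k| + |1 - A k| * R :=
        by gcongr; exact hRK' x hx
    _ < ε := hk
  refine mem_closure_of_tendsto hFtend (Filter.Eventually.of_forall fun k => ?_)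
  have hAne1 : A k ≠ 1 := ne_of_lt (hA2 k)
  have hAr : A k * r ^ (n k + 1) = q * p ^ (m k) := by
    rw [hA]
    field_simp
  constructor
  · refine ⟨3 :: (List.replicate (n k) 5 ++ [1]), 2 :: (List.replicate (m k) 0 ++ [4]),
      by simp, by simp, fun x => ?_⟩
    rw [word6_cons, word6_append, word6_cons, word6_cons, word6_append, word6_cons,
      word6_rep5, word6_rep0]
    show 1 / 2 - r + r * (1 - r ^ (n k) + r ^ (n k) * (1 / 3 + r * (word6 p q r [] (F k x))))
      = 1 / 2 - q * (p ^ (m k) * (word6 p q r [] (1 - 1 / 3 - r * x)))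
    have hnil : ∀ y : ℝ, word6 p q r [] y = y := fun y => rfl
    rw [hnil, hnil]
    have hFx : F k x = B k + A k * x := rfl
    have hBr : r * (B k + A k * x) = 2 / 3 * (1 - A k) + r * (A k * x) := by
      simp only [hB]
      field_simp
    rw [hFx, hBr]
    linear_combination (r * x - 2 / 3) * hAr
  · intro hid
    have h0 := ContinuousMap.congr_fun hid 0
    have hF0 : F k 0 = B k := by
      show B k + A k * 0 = B k
      ring
    rw [hF0, ContinuousMap.id_apply] at h0
    rw [hB] at h0
    have : 1 - A k = 0 := by
      field_simp at h0
      linarith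
    exact hAne1 (by linarith)
end
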